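/- arXiv:2603.24763 — 5 statements merged into one kernel-verified Lean document; each statement's English description precedes it below -/
import Mathlib

section
/- For all y1, y2 ∈ ℝ^{2^d}, the Hadamard prism satisfies the recursion η_{d+1}((y1; y2)) = [[η_d(y1), η_d(y2)], [η_d(y2), η_d(y1)]], where (y1; y2) denotes the concatenation of y1 and y2 into a vector in ℝ^{2^{d+1}}. -/
open Matrix

noncomputable def sylvesterHadamard (p : ℕ) :
    Matrix (Fin p → ZMod 2) (Fin p → ZMod 2) ℝ :=
  fun Λ Γ => (-1 : ℝ) ^ (∑ j, (Λ j * Γ j).val)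

noncomputable def hadamardPrism (p : ℕ) (y : (Fin p → ZMod 2) → ℝ) :
    Matrix (Fin p → ZMod 2) (Fin p → ZMod 2) ℝ :=
  ((2 : ℝ) ^ p)⁻¹ •
    (sylvesterHadamard p * Matrix.diagonal ((sylvesterHadamard p).mulVec y) *
      sylvesterHadamard p)

/-- The concatenation `(y1; y2) ∈ ℝ^{2^{d+1}}` of `y1, y2 ∈ ℝ^{2^d}`, consistent with
the Kronecker structure: the new (leading) bit `0` selects `y1`, the bit `1` selects `y2`. -/
noncomputable def concatVec (d : ℕ) (y1 y2 : (Fin d → ZMod 2) → ℝ) :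
    (Fin (d + 1) → ZMod 2) → ℝ :=
  fun Λ => if Λ 0 = 0 then y1 (fun j => Λ j.succ) else y2 (fun j => Λ j.succ)

lemma neg_one_pow_congr_mod {m n : ℕ} (h : m % 2 = n % 2) : (-1 : ℝ) ^ m = (-1 : ℝ) ^ n := by
  rw [← Nat.div_add_mod m 2, ← Nat.div_add_mod n 2, pow_add, pow_add, pow_mul, pow_mul, h]
  norm_num


lemma syl_mul (p : ℕ) (Λ Λ' Γ : Fin p → ZMod 2) :
    sylvesterHadamard p Λ Γ * sylvesterHadamard p Λ' Γ
      = sylvesterHadamard p (Λ + Λ') Γ := by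
  unfold sylvesterHadamard
  rw [← pow_add]
  apply neg_one_pow_congr_mod
  have : ((∑ j, (Λ j * Γ j).val + ∑ j, (Λ' j * Γ j).val : ℕ) : ZMod 2)
      = ((∑ j, ((Λ + Λ') j * Γ j).val : ℕ) : ZMod 2) := by
    push_cast
    simp only [ZMod.natCast_val, ZMod.cast_id]
    rw [← Finset.sum_add_distrib]
    congr 1
    ext j
    simp [add_mul]
  have h2 := (ZMod.natCast_eq_natCast_iff' _ _ _).mp this
  simpa using h2


lemma syl_symm (p : ℕ) (Λ Γ : Fin p → ZMod 2) :
    sylvesterHadamard p Λ Γ = sylvesterHadamard p Γ Λ := by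
  unfold sylvesterHadamard
  congr 1
  exact Finset.sum_congr rfl fun j _ => by rw [mul_comm]


lemma syl_sum (p : ℕ) (Λ : Fin p → ZMod 2) :
    ∑ Γ : Fin p → ZMod 2, sylvesterHadamard p Λ Γ
      = if Λ = 0 then (2 : ℝ) ^ p else 0 := by
  split_ifs with h
  · subst h
    have : ∀ Γ : Fin p → ZMod 2, sylvesterHadamard p 0 Γ = 1 := by
      intro Γ; unfold sylvesterHadamard; simp
    simp only [this, Finset.sum_const, Finset.card_univ, nsmul_eq_mul, mul_one]
    simp [Fintype.card_fun]
  · obtain ⟨j0, hj0⟩ : ∃ j0, Λ j0 ≠ 0 := by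
      by_contra hc
      push_neg at hc
      exact h (funext hc)
    have hΛ1 : Λ j0 = 1 := by
      have : ∀ a : ZMod 2, a ≠ 0 → a = 1 := by decide
      exact this _ hj0
    apply Finset.sum_involution (fun Γ _ => Function.update Γ j0 (Γ j0 + 1))
    · intro Γ _
      unfold sylvesterHadamard
      rw [← Finset.add_sum_erase _ _ (Finset.mem_univ j0),
          ← Finset.add_sum_erase _ _ (Finset.mem_univ j0)]
      have he : ∀ j ∈ Finset.univ.erase j0,
          (Λ j * Function.update Γ j0 (Γ j0 + 1) j).val = (Λ j * Γ j).val := by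
        intro j hj
        rw [Function.update_of_ne (Finset.ne_of_mem_erase hj)]
      rw [Finset.sum_congr rfl he, Function.update_self, hΛ1, one_mul, one_mul,
          pow_add, pow_add]
      have hcases : Γ j0 = 0 ∨ Γ j0 = 1 := by
        have : ∀ a : ZMod 2, a = 0 ∨ a = 1 := by decide
        exact this _
      rcases hcases with hg | hg
      · rw [hg, zero_add, ZMod.val_zero, ZMod.val_one]; ring
      · have h1 : Γ j0 + 1 = 0 := by rw [hg]; decide
        rw [h1, hg, ZMod.val_zero, ZMod.val_one]; ring
    · intro Γ _ _
      intro hc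
      have := congrFun hc j0
      rw [Function.update_self] at this
      simp at this
    · intro Γ _
      funext j
      by_cases hj : j = j0
      · subst hj
        rw [Function.update_self, Function.update_self]
        have : ∀ a : ZMod 2, a + 1 + 1 = a := by decide
        exact this _
      · simp [Function.update_of_ne hj]
    · intro Γ _; exact Finset.mem_univ _


lemma prism_apply (p : ℕ) (y : (Fin p → ZMod 2) → ℝ) (Λ Γ : Fin p → ZMod 2) :
    hadamardPrism p y Λ Γ = y (Λ + Γ) := by
  unfold hadamardPrism
  rw [Matrix.smul_apply, Matrix.mul_apply]
  simp only [Matrix.mul_diagonal, Matrix.mulVec, dotProduct]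
  have key : ∀ M : Fin p → ZMod 2,
      sylvesterHadamard p Λ M * (∑ N, sylvesterHadamard p M N * y N) *
        sylvesterHadamard p M Γ
      = ∑ N, sylvesterHadamard p (Λ + Γ + N) M * y N := by
    intro M
    rw [Finset.mul_sum, Finset.sum_mul]
    refine Finset.sum_congr rfl fun N _ => ?_
    have h1 : sylvesterHadamard p M N = sylvesterHadamard p N M := syl_symm p M N
    have h2 : sylvesterHadamard p M Γ = sylvesterHadamard p Γ M := syl_symm p M Γ
    rw [h1, h2]
    rw [show sylvesterHadamard p Λ M * (sylvesterHadamard p N M * y N) *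
        sylvesterHadamard p Γ M
      = (sylvesterHadamard p Λ M * sylvesterHadamard p Γ M *
          sylvesterHadamard p N M) * y N by ring]
    rw [syl_mul, syl_mul]
  rw [Finset.sum_congr rfl fun M _ => key M, Finset.sum_comm]
  have inner : ∀ N : Fin p → ZMod 2,
      (∑ M, sylvesterHadamard p (Λ + Γ + N) M * y N)
      = (if N = Λ + Γ then (2:ℝ)^p * y N else 0) := by
    intro N
    rw [← Finset.sum_mul, syl_sum]
    have hiff : (Λ + Γ + N = 0) ↔ (N = Λ + Γ) := by
      constructor
      · intro h
        funext j
        have := congrFun h j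
        simp only [Pi.add_apply, Pi.zero_apply] at this
        have h2 : ∀ a b c : ZMod 2, a + b + c = 0 → c = a + b := by decide
        exact h2 _ _ _ this
      · intro h
        subst h
        funext j
        simp only [Pi.add_apply, Pi.zero_apply]
        have h2 : ∀ a b : ZMod 2, a + b + (a + b) = 0 := by decide
        exact h2 _ _
    rw [if_congr hiff rfl rfl]
    split_ifs with h <;> simp
  rw [Finset.sum_congr rfl fun N _ => inner N, Finset.sum_ite_eq' Finset.univ (Λ + Γ)]
  simp only [Finset.mem_univ, if_true, smul_eq_mul]
  rw [← mul_assoc, inv_mul_cancel₀ (by positivity), one_mul]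


/-- The Hadamard prism recursion
`η_{d+1}((y1; y2)) = [[η_d(y1), η_d(y2)], [η_d(y2), η_d(y1)]]`, stated entrywise:
the diagonal blocks (equal leading bits) are `η_d(y1)` and the off-diagonal blocks
(different leading bits) are `η_d(y2)`. -/
theorem stmt2 (d : ℕ) (y1 y2 : (Fin d → ZMod 2) → ℝ)
    (b b' : ZMod 2) (Λ Λ' : Fin d → ZMod 2) :
    hadamardPrism (d + 1) (concatVec d y1 y2) (Fin.cons b Λ) (Fin.cons b' Λ') =
      (if b = b' then hadamardPrism d y1 Λ Λ' else hadamardPrism d y2 Λ Λ') := by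
  rw [prism_apply]
  unfold concatVec
  have h0 : (Fin.cons b Λ + Fin.cons b' Λ' : Fin (d+1) → ZMod 2) 0 = b + b' := rfl
  have hsucc : (fun j : Fin d => (Fin.cons b Λ + Fin.cons b' Λ' : Fin (d+1) → ZMod 2) j.succ)
      = Λ + Λ' := by
    funext j
    simp [Fin.cons_succ]
  rw [h0, hsucc]
  have hbb : (b + b' = 0) ↔ (b = b') := by
    constructor
    · intro h; have : ∀ a c : ZMod 2, a + c = 0 → a = c := by decide
      exact this _ _ h
    · intro h; subst h; have : ∀ a : ZMod 2, a + a = 0 := by decide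
      exact this _
  rw [if_congr hbb rfl rfl]
  split_ifs with h <;> rw [prism_apply]
end

section
/- Let X be a random vector in {-1,1}^p and let Σ be the covariance matrix of the vector of all nonconstant monomials (X_Λ)_{Λ ≠ 0}, a (2^p - 1) × (2^p - 1) matrix. Then rank(Σ) = |Supp(X)| - 1, where |Supp(X)| is the number of points x ∈ {-1,1}^p with P(X = x) > 0. -/
open MeasureTheory Matrix BigOperators


/-- Walsh character. -/
noncomputable def chi (p : ℕ) (Λ : Fin p → Bool) (v : Fin p → Bool) : ℝ :=
  ∏ j : Fin p, if Λ j then (if v j then (1:ℝ) else -1) else 1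

lemma chi_zero (p : ℕ) (v : Fin p → Bool) : chi p (fun _ => false) v = 1 := by
  simp [chi]

lemma chi_orth (p : ℕ) (v v' : Fin p → Bool) :
    ∑ Λ : Fin p → Bool, chi p Λ v * chi p Λ v' = if v = v' then (2:ℝ)^p else 0 := by
  classical
  have h1 : ∀ Λ : Fin p → Bool, chi p Λ v * chi p Λ v' =
      ∏ j : Fin p, (fun b : Bool => if b then
        ((if v j then (1:ℝ) else -1) * (if v' j then (1:ℝ) else -1)) else 1) (Λ j) := by
    intro Λ
    rw [chi, chi, ← Finset.prod_mul_distrib]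
    refine Finset.prod_congr rfl fun j _ => ?_
    by_cases h : Λ j <;> simp [h]
  simp only [h1]
  rw [← Fintype.prod_sum (fun (j : Fin p) (b : Bool) => (fun b : Bool => if b then
        ((if v j then (1:ℝ) else -1) * (if v' j then (1:ℝ) else -1)) else 1) b)]
  by_cases hvv : v = v'
  · subst hvv
    simp only [if_pos rfl]
    have : ∀ j : Fin p, (∑ b : Bool, (if b then
        ((if v j then (1:ℝ) else -1) * (if v j then (1:ℝ) else -1)) else 1)) = 2 := by
      intro j; by_cases h : v j <;> simp [h]
    rw [Finset.prod_congr rfl fun j _ => this j]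
    simp
  · rw [if_neg hvv]
    have : ∃ j, v j ≠ v' j := by
      by_contra h; push_neg at h; exact hvv (funext h)
    obtain ⟨j, hj⟩ := this
    apply Finset.prod_eq_zero (Finset.mem_univ j)
    rcases Bool.eq_false_or_eq_true (v j) with h | h <;>
      rcases Bool.eq_false_or_eq_true (v' j) with h' | h' <;>
        simp [h, h'] at hj ⊢


lemma chi_span (p : ℕ) :
    Submodule.span ℝ (Set.range (chi p)) = ⊤ := by
  classical
  rw [eq_top_iff]
  intro f _
  have hsingle : ∀ v0 : Fin p → Bool,
      (Pi.single v0 1 : (Fin p → Bool) → ℝ) ∈ Submodule.span ℝ (Set.range (chi p)) := by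
    intro v0
    have hkey : (Pi.single v0 1 : (Fin p → Bool) → ℝ)
        = ((2:ℝ)^p)⁻¹ • ∑ Λ : Fin p → Bool, chi p Λ v0 • chi p Λ := by
      funext v
      have h2 : ((2:ℝ)^p) ≠ 0 := by positivity
      simp only [Pi.smul_apply, Finset.sum_apply, smul_eq_mul, chi_orth p v0 v]
      by_cases h : v = v0
      · subst h; simp [Pi.single_apply, h2]
      · rw [if_neg (fun hh => h hh.symm), Pi.single_apply, if_neg h, mul_zero]
    rw [hkey]
    exact Submodule.smul_mem _ _ (Submodule.sum_mem _ fun Λ _ =>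
      Submodule.smul_mem _ _ (Submodule.subset_span ⟨Λ, rfl⟩))
  have hf : f = ∑ v : Fin p → Bool, f v • (Pi.single v 1 : (Fin p → Bool) → ℝ) := by
    funext u
    simp [Finset.sum_apply, Pi.single_apply]
  rw [hf]
  exact Submodule.sum_mem _ fun v _ => Submodule.smul_mem _ _ (hsingle v)


/-- The linear functional `f ↦ ∑ v, c v * f v`. -/
noncomputable def Lfun (p : ℕ) (c : (Fin p → Bool) → ℝ) :
    ((Fin p → Bool) → ℝ) →ₗ[ℝ] ℝ where
  toFun f := ∑ v, c v * f v
  map_add' f g := by simp [mul_add, Finset.sum_add_distrib]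
  map_smul' r f := by
    simp only [smul_eq_mul, Pi.smul_apply, RingHom.id_apply, Finset.mul_sum]
    exact Finset.sum_congr rfl fun v _ => by ring

/-- `f ↦ f - (∑ v, c v * f v) • c`. -/
noncomputable def Tmap (p : ℕ) (c : (Fin p → Bool) → ℝ) :
    ((Fin p → Bool) → ℝ) →ₗ[ℝ] ((Fin p → Bool) → ℝ) :=
  LinearMap.id - (LinearMap.toSpanSingleton ℝ _ c).comp (Lfun p c)

lemma Tmap_apply (p : ℕ) (c f : (Fin p → Bool) → ℝ) :
    Tmap p c f = f - (∑ v, c v * f v) • c := rfl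

lemma keyrank (p : ℕ) (w : (Fin p → Bool) → ℝ) (hw0 : ∀ v, 0 ≤ w v)
    (hw1 : ∑ v, w v = 1) :
    (Matrix.of fun (Λ Λ' : {Λ : Fin p → Bool // Λ ≠ fun _ => false}) =>
        (∑ v, w v * (chi p Λ.1 v * chi p Λ'.1 v))
          - (∑ v, w v * chi p Λ.1 v) * (∑ v, w v * chi p Λ'.1 v)).rank =
      Fintype.card {v : Fin p → Bool // w v ≠ 0} - 1 := by
  classical
  set c : (Fin p → Bool) → ℝ := fun v => Real.sqrt (w v) with hcdef
  have hc2 : ∀ v, c v * c v = w v := fun v => Real.mul_self_sqrt (hw0 v)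
  have hcne : ∀ v, (c v ≠ 0 ↔ w v ≠ 0) := by
    intro v
    constructor
    · intro h hw; apply h; rw [hcdef]; simp [hw]
    · intro h hc; apply h; rw [← hc2 v, hc, mul_zero]
  set m : (Fin p → Bool) → ℝ := fun Λ => ∑ v, w v * chi p Λ v with hmdef
  set B : Matrix {Λ : Fin p → Bool // Λ ≠ fun _ => false} (Fin p → Bool) ℝ :=
    Matrix.of fun Λ v => c v * (chi p Λ.1 v - m Λ.1) with hBdef
  -- Step 1 : the covariance matrix is B * Bᵀ
  have hstep1 : (Matrix.of fun (Λ Λ' : {Λ : Fin p → Bool // Λ ≠ fun _ => false}) =>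
        (∑ v, w v * (chi p Λ.1 v * chi p Λ'.1 v))
          - (∑ v, w v * chi p Λ.1 v) * (∑ v, w v * chi p Λ'.1 v)) = B * Bᵀ := by
    ext Λ Λ'
    simp only [Matrix.mul_apply, Matrix.transpose_apply, hBdef, Matrix.of_apply]
    have expand : ∀ v, (c v * (chi p Λ.1 v - m Λ.1)) * (c v * (chi p Λ'.1 v - m Λ'.1))
        = w v * (chi p Λ.1 v * chi p Λ'.1 v) - m Λ'.1 * (w v * chi p Λ.1 v)
          - m Λ.1 * (w v * chi p Λ'.1 v) + (m Λ.1 * m Λ'.1) * w v := by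
      intro v
      rw [← hc2 v]; ring
    rw [Finset.sum_congr rfl fun v _ => expand v]
    simp only [Finset.sum_add_distrib, Finset.sum_sub_distrib, ← Finset.mul_sum,
      ← hmdef, hw1]
    ring
  rw [hstep1, Matrix.rank_self_mul_transpose, Matrix.rank_eq_finrank_span_row]
  -- the linear maps
  set M : ((Fin p → Bool) → ℝ) →ₗ[ℝ] ((Fin p → Bool) → ℝ) :=
    (Matrix.diagonal c).mulVecLin with hMdef
  have hM : ∀ f v, M f v = c v * f v := by
    intro f v
    rw [hMdef, Matrix.mulVecLin_apply, Matrix.mulVec_diagonal]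
  set Q : Submodule ℝ ((Fin p → Bool) → ℝ) := LinearMap.range M with hQdef
  have hcQ : c ∈ Q := ⟨fun _ => 1, by funext v; rw [hM]; simp⟩
  have hLc : Lfun p c c = 1 := by
    show ∑ v, c v * c v = 1
    rw [Finset.sum_congr rfl fun v _ => hc2 v, hw1]
  have hTc : Tmap p c c = 0 := by
    rw [Tmap_apply, show (∑ v, c v * c v) = 1 from hLc, one_smul, sub_self]
  have hcne0 : c ≠ 0 := by
    intro h
    rw [h] at hLc
    simp at hLc
  -- q Λ := M (chi p Λ)
  have hq : ∀ Λ : Fin p → Bool, Tmap p c (M (chi p Λ))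
      = fun v => c v * (chi p Λ v - m Λ) := by
    intro Λ
    have hL : (∑ v, c v * (M (chi p Λ)) v) = m Λ := by
      rw [hmdef]
      refine Finset.sum_congr rfl fun v _ => ?_
      rw [hM, ← mul_assoc, hc2]
    rw [Tmap_apply, hL]
    funext v
    simp only [Pi.sub_apply, Pi.smul_apply, smul_eq_mul, hM]
    ring
  -- Step 3 : row span is the image of Q under Tmap
  have hstep3 : Submodule.span ℝ (Set.range B) = Submodule.map (Tmap p c) Q := by
    have hQspan : Q = Submodule.span ℝ (Set.range fun Λ => M (chi p Λ)) := by
      rw [hQdef, show (Set.range fun Λ => M (chi p Λ)) = M '' Set.range (chi p) from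
        Set.range_comp _ _, Submodule.span_image, chi_span, Submodule.map_top]
    rw [hQspan, Submodule.map_span]
    apply le_antisymm
    · rw [Submodule.span_le]
      rintro x ⟨Λ, rfl⟩
      refine Submodule.subset_span ⟨M (chi p Λ.1), ⟨Λ.1, rfl⟩, ?_⟩
      rw [hq]; rfl
    · rw [Submodule.span_le]
      rintro x ⟨y, ⟨Λ, rfl⟩, rfl⟩
      by_cases h : Λ = fun _ => false
      · subst h
        have : M (chi p (fun _ => false)) = c := by
          funext v; rw [hM, chi_zero, mul_one]
        show Tmap p c (M (chi p fun _ => false)) ∈ _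
        rw [this, hTc]
        exact Submodule.zero_mem _
      · apply Submodule.subset_span
        refine ⟨⟨Λ, h⟩, ?_⟩
        show (fun v => c v * (chi p Λ v - m Λ)) = _
        rw [← hq]
  rw [show Set.range B.row = Set.range B from rfl, hstep3]
  -- Step 4 : dimension count
  have hfinQ : Module.finrank ℝ Q = Fintype.card {v : Fin p → Bool // w v ≠ 0} := by
    have h1 : Module.finrank ℝ Q = (Matrix.diagonal c).rank := rfl
    rw [h1, Matrix.rank_diagonal]
    exact Fintype.card_congr (Equiv.subtypeEquivRight fun v => hcne v)
  have hker : LinearMap.ker ((Tmap p c).comp Q.subtype)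
      = Submodule.span ℝ {(⟨c, hcQ⟩ : Q)} := by
    apply le_antisymm
    · rintro ⟨x, hx⟩ hker
      have hTx : Tmap p c x = 0 := hker
      rw [Tmap_apply] at hTx
      have hxx : x = (∑ v, c v * x v) • c := by
        have := sub_eq_zero.mp hTx
        exact this
      rw [Submodule.mem_span_singleton]
      exact ⟨∑ v, c v * x v, Subtype.ext hxx.symm⟩
    · rw [Submodule.span_le, Set.singleton_subset_iff]
      show Tmap p c c = 0
      exact hTc
  have hrange : LinearMap.range ((Tmap p c).comp Q.subtype)
      = Submodule.map (Tmap p c) Q := by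
    rw [LinearMap.range_comp, Submodule.range_subtype]
  have hcount := LinearMap.finrank_range_add_finrank_ker ((Tmap p c).comp Q.subtype)
  rw [hrange, hker] at hcount
  have hone : Module.finrank ℝ (Submodule.span ℝ {(⟨c, hcQ⟩ : Q)}) = 1 := by
    apply finrank_span_singleton
    intro h
    exact hcne0 (congrArg Subtype.val h)
  rw [hone, hfinQ] at hcount
  omega


/-- The monomial `X_Λ = Π_{j : Λ_j = 1} X_j`. -/
noncomputable def mono

 {Ω : Type*} (p : ℕ) (X : Ω → Fin p → ℝ)
    (Λ : Fin p → Bool) (ω : Ω) : ℝ :=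
  ∏ j : Fin p, if Λ j then X ω j else 1

/-- Covariance of two real random variables. -/
noncomputable def cov {Ω : Type*} [MeasurableSpace Ω] (ℙ : Measure Ω)
    (f g : Ω → ℝ) : ℝ :=
  (∫ ω, f ω * g ω ∂ℙ) - (∫ ω, f ω ∂ℙ) * (∫ ω, g ω ∂ℙ)

/-- For a random vector `X ∈ {-1,1}^p`, the covariance matrix `Σ` of the
nonconstant monomials `(X_Λ)_{Λ ≠ 0}` has rank `|Supp(X)| - 1`. -/
theorem stmt9 {Ω : Type*} [MeasurableSpace Ω] (ℙ : Measure Ω) [IsProbabilityMeasure ℙ]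
    (p : ℕ) (X : Ω → Fin p → ℝ) (hX : Measurable X)
    (hval : ∀ ω, ∀ j, X ω j = 1 ∨ X ω j = -1) :
    (Matrix.of fun (Λ Λ' : {Λ : Fin p → Bool // Λ ≠ fun _ => false}) =>
        cov ℙ (mono p X Λ.1) (mono p X Λ'.1)).rank =
      {x : Fin p → ℝ | 0 < ℙ {ω | X ω = x}}.ncard - 1 := by
  classical
  set σ : (Fin p → Bool) → (Fin p → ℝ) := fun v j => if v j then 1 else -1 with hσdef
  set Y : Ω → Fin p → Bool := fun ω j => if X ω j = 1 then true else false with hYdef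
  set w : (Fin p → Bool) → ℝ := fun v => (ℙ (Y ⁻¹' {v})).toReal with hwdef
  have hXY : ∀ ω, X ω = σ (Y ω) := by
    intro ω; funext j
    have hne : (-1:ℝ) ≠ 1 := by norm_num
    rcases hval ω j with h | h <;> simp [hσdef, hYdef, h, hne]
  have hYX : ∀ ω v, Y ω = v ↔ X ω = σ v := by
    intro ω v
    constructor
    · rintro rfl; exact hXY ω
    · intro h
      funext j
      have hj : X ω j = σ v j := congrFun h j
      rcases Bool.eq_false_or_eq_true (v j) with hv | hv
      · have h1 : X ω j = 1 := by simpa [hσdef, hv] using hj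
        simp [hYdef, h1, hv]
      · have h1 : X ω j = -1 := by simpa [hσdef, hv] using hj
        have h2 : ¬ (X ω j = 1) := by rw [h1]; norm_num
        simp [hYdef, h2, hv]
  have hpre : ∀ v, Y ⁻¹' {v} = X ⁻¹' {σ v} := by
    intro v; ext ω
    simp only [Set.mem_preimage, Set.mem_singleton_iff]
    exact hYX ω v
  have hYm : ∀ v, MeasurableSet (Y ⁻¹' {v}) := by
    intro v
    rw [hpre]
    exact hX (measurableSet_singleton _)
  -- the key integration lemma
  have hint : ∀ f : (Fin p → Bool) → ℝ, ∫ ω, f (Y ω) ∂ℙ = ∑ v, w v * f v := by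
    intro f
    have h1 : ∀ ω, f (Y ω) = ∑ v, (Y ⁻¹' {v}).indicator (fun _ => f v) ω := by
      intro ω
      rw [Finset.sum_eq_single (Y ω)]
      · simp
      · intro v _ hv
        apply Set.indicator_of_notMem
        simp only [Set.mem_preimage, Set.mem_singleton_iff]
        exact fun h => hv h.symm
      · simp
    calc ∫ ω, f (Y ω) ∂ℙ = ∫ ω, ∑ v, (Y ⁻¹' {v}).indicator (fun _ => f v) ω ∂ℙ := by
          simp only [h1]
      _ = ∑ v, ∫ ω, (Y ⁻¹' {v}).indicator (fun _ => f v) ω ∂ℙ := by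
          apply integral_finset_sum
          intro v _
          exact (integrable_const (f v)).indicator (hYm v)
      _ = ∑ v, w v * f v := by
          refine Finset.sum_congr rfl fun v _ => ?_
          rw [integral_indicator_const _ (hYm v), smul_eq_mul, hwdef]; rfl
  have hw0 : ∀ v, 0 ≤ w v := fun v => ENNReal.toReal_nonneg
  have hw1 : ∑ v, w v = 1 := by
    have h := hint (fun _ => 1)
    simpa using h.symm
  have hmono : ∀ Λ ω, mono p X Λ ω = chi p Λ (Y ω) := by
    intro Λ ω
    rw [mono, chi]
    refine Finset.prod_congr rfl fun j _ => ?_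
    rw [congrFun (hXY ω) j]
  -- rewrite the covariance matrix
  have hcov : ∀ Λ Λ' : Fin p → Bool, cov ℙ (mono p X Λ) (mono p X Λ')
      = (∑ v, w v * (chi p Λ v * chi p Λ' v))
        - (∑ v, w v * chi p Λ v) * (∑ v, w v * chi p Λ' v) := by
    intro Λ Λ'
    rw [cov]
    have e1 : ∫ ω, mono p X Λ ω * mono p X Λ' ω ∂ℙ
        = ∑ v, w v * (chi p Λ v * chi p Λ' v) := by
      rw [show (fun ω => mono p X Λ ω * mono p X Λ' ω)
        = fun ω => (fun v => chi p Λ v * chi p Λ' v) (Y ω) from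
        funext fun ω => by rw [hmono, hmono]]
      exact hint (fun v => chi p Λ v * chi p Λ' v)
    have e2 : ∫ ω, mono p X Λ ω ∂ℙ = ∑ v, w v * chi p Λ v := by
      rw [show (fun ω => mono p X Λ ω) = fun ω => chi p Λ (Y ω) from
        funext fun ω => hmono Λ ω]
      exact hint _
    have e3 : ∫ ω, mono p X Λ' ω ∂ℙ = ∑ v, w v * chi p Λ' v := by
      rw [show (fun ω => mono p X Λ' ω) = fun ω => chi p Λ' (Y ω) from
        funext fun ω => hmono Λ' ω]
      exact hint _
    rw [e1, e2, e3]
  have hmat : (Matrix.of fun (Λ Λ' : {Λ : Fin p → Bool // Λ ≠ fun _ => false}) =>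
        cov ℙ (mono p X Λ.1) (mono p X Λ'.1))
      = (Matrix.of fun (Λ Λ' : {Λ : Fin p → Bool // Λ ≠ fun _ => false}) =>
        (∑ v, w v * (chi p Λ.1 v * chi p Λ'.1 v))
          - (∑ v, w v * chi p Λ.1 v) * (∑ v, w v * chi p Λ'.1 v)) := by
    ext Λ Λ'
    exact hcov Λ.1 Λ'.1
  rw [hmat, keyrank p w hw0 hw1]
  -- now the support cardinality
  have hσinj : Function.Injective σ := by
    intro v v' h
    funext j
    have hj := congrFun h j
    rcases Bool.eq_false_or_eq_true (v j) with hv | hv <;>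
      rcases Bool.eq_false_or_eq_true (v' j) with hv' | hv' <;>
        simp [hσdef, hv, hv'] at hj ⊢ <;> norm_num at hj
  have hset : {x : Fin p → ℝ | 0 < ℙ {ω | X ω = x}} = σ '' {v | w v ≠ 0} := by
    ext x
    simp only [Set.mem_setOf_eq, Set.mem_image]
    constructor
    · intro hx
      have hne : {ω | X ω = x}.Nonempty := by
        rcases Set.eq_empty_or_nonempty {ω | X ω = x} with h | h
        · rw [h] at hx; simp at hx
        · exact h
      obtain ⟨ω, hω⟩ := hne
      refine ⟨Y ω, ?_, by rw [← hω]; exact (hXY ω).symm⟩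
      have hxe : x = σ (Y ω) := by rw [← hω]; exact hXY ω
      have hsets : {ω' | X ω' = x} = Y ⁻¹' {Y ω} := by
        ext ω'
        simp only [Set.mem_setOf_eq, Set.mem_preimage, Set.mem_singleton_iff, hxe]
        exact (hYX ω' (Y ω)).symm
      rw [hsets] at hx
      rw [hwdef]
      exact ENNReal.toReal_ne_zero.mpr ⟨ne_of_gt hx, measure_ne_top ℙ _⟩
    · rintro ⟨v, hv, rfl⟩
      have hsets : {ω | X ω = σ v} = Y ⁻¹' {v} := by
        ext ω
        simp only [Set.mem_setOf_eq, Set.mem_preimage, Set.mem_singleton_iff]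
        exact (hYX ω v).symm
      rw [hsets, pos_iff_ne_zero]
      intro h
      apply hv
      show (ℙ (Y ⁻¹' {v})).toReal = 0
      rw [h, ENNReal.toReal_zero]
  rw [hset, Set.ncard_image_of_injective _ hσinj]
  have hcard : {v : Fin p → Bool | w v ≠ 0}.ncard
      = Fintype.card {v : Fin p → Bool // w v ≠ 0} := by
    rw [← Nat.card_coe_set_eq, Nat.card_eq_fintype_card]
    exact Fintype.card_congr (Equiv.subtypeEquivRight fun v => Iff.rfl)
  rw [hcard]
end

section
/- Let A ∈ {-1,1}^r, B ∈ {-1,1}^s, C ∈ {-1,1}^t be random vectors. Let 𝓑 be the set of nonconstant monomials in coordinates of B, 𝓛 the set of monomials in coordinates of (A,B) involving at least one coordinate of A, and 𝓡 the set of monomials in coordinates of (B,C) involving at least one coordinate of C. Let Σ be the covariance matrix of the concatenated vector of monomials indexed by (𝓑, 𝓛, 𝓡). Then A ⟂ C | B if and only if there exist matrices M1 and M2 such that Σ has the block form Σ = [[Σ_𝓑, Σ_𝓑 M1^T, Σ_𝓑 M2^T], [M1 Σ_𝓑, Σ_𝓛, M1 Σ_𝓑 M2^T], [M2 Σ_𝓑,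 M2 Σ_𝓑 M1^T, Σ_𝓡]], where Σ_𝓑, Σ_𝓛, Σ_𝓡 are the diagonal blocks. -/
open MeasureTheory Matrix BigOperators

def CondIndepDiscrete {Ω α β γ : Type*} [MeasurableSpace Ω] (ℙ : Measure Ω)
    (A : Ω → α) (B : Ω → β) (C : Ω → γ) : Prop :=
  ∀ (a : α) (b : β) (c : γ), 0 < (ℙ {ω | B ω = b}).toReal →
    (ℙ {ω | A ω = a ∧ C ω = c ∧ B ω = b}).toReal / (ℙ {ω | B ω = b}).toReal =
      ((ℙ {ω | A ω = a ∧ B ω = b}).toReal / (ℙ {ω | B ω = b}).toReal) *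
        ((ℙ {ω | C ω = c ∧ B ω = b}).toReal / (ℙ {ω | B ω = b}).toReal)

/-- Index set `𝓑`: nonconstant monomials of `B`. -/
abbrev IdxB (s : ℕ) : Type := {Λ : Fin s → Bool // Λ ≠ fun _ => false}
/-- Index set `𝓛`: monomials of `(A,B)` involving at least one coordinate of `A`. -/
abbrev IdxL (r s : ℕ) : Type := {q : (Fin r → Bool) × (Fin s → Bool) // q.1 ≠ fun _ => false}
/-- Index set `𝓡`: monomials of `(B,C)` involving at least one coordinate of `C`. -/
abbrev IdxR (s t : ℕ) : Type := {q : (Fin s → Bool) × (Fin t → Bool) // q.2 ≠ fun _ => false}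

open Finset

namespace S13

def sg (b : Bool) : ℝ := if b then 1 else -1

def chi {n : ℕ} (Λ ε : Fin n → Bool) : ℝ := ∏ j, if Λ j then sg (ε j) else 1

lemma chi_bot {n : ℕ} (ε : Fin n → Bool) : chi (fun _ => false) ε = 1 := by
  simp [chi]

lemma chi_ortho {n : ℕ} (ε ε' : Fin n → Bool) :
    ∑ Λ : Fin n → Bool, chi Λ ε * chi Λ ε' = if ε = ε' then (2:ℝ)^n else 0 := by
  have h1 : ∀ Λ : Fin n → Bool, chi Λ ε * chi Λ ε'
      = ∏ j, (if Λ j then sg (ε j) * sg (ε' j) else 1) := by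
    intro Λ
    rw [chi, chi, ← Finset.prod_mul_distrib]
    refine Finset.prod_congr rfl fun j _ => ?_
    by_cases h : Λ j <;> simp [h]
  have h2 : (∑ Λ : Fin n → Bool, ∏ j, (if Λ j then sg (ε j) * sg (ε' j) else 1))
      = ∏ j, ((sg (ε j) * sg (ε' j)) + 1) := by
    rw [← Fintype.prod_sum (fun (j : Fin n) (b : Bool) => if b then sg (ε j) * sg (ε' j) else 1)]
    refine Finset.prod_congr rfl fun j _ => ?_
    simp
  simp only [h1, h2]
  by_cases h : ε = ε'
  · subst h
    have : ∀ j, sg (ε j) * sg (ε j) + 1 = 2 := by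
      intro j; cases hj : ε j <;> simp [sg] <;> norm_num
    simp only [this]
    simp
  · obtain ⟨j, hj⟩ : ∃ j, ε j ≠ ε' j := by
      by_contra hc
      push_neg at hc
      exact h (funext hc)
    rw [if_neg h]
    apply Finset.prod_eq_zero (Finset.mem_univ j)
    cases h1 : ε j <;> cases h2 : ε' j <;> simp [h1, h2] at hj ⊢ <;> simp [sg] <;> norm_num

/-- inversion helper -/
lemma sum_chi_sum {n : ℕ} (u : (Fin n → Bool) → ℝ) (ε : Fin n → Bool) :
    ∑ Λ : Fin n → Bool, chi Λ ε * ∑ ε' : Fin n → Bool, chi Λ ε' * u ε'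
      = (2:ℝ)^n * u ε := by
  have : ∀ Λ : Fin n → Bool, chi Λ ε * ∑ ε' : Fin n → Bool, chi Λ ε' * u ε'
      = ∑ ε' : Fin n → Bool, (chi Λ ε * chi Λ ε') * u ε' := by
    intro Λ; rw [Finset.mul_sum]; exact Finset.sum_congr rfl fun ε' _ => by ring
  simp only [this]
  rw [Finset.sum_comm]
  have : ∀ ε' : Fin n → Bool, (∑ Λ : Fin n → Bool, (chi Λ ε * chi Λ ε') * u ε')
      = (if ε = ε' then (2:ℝ)^n else 0) * u ε' := by
    intro ε'; rw [← Finset.sum_mul, chi_ortho]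
  simp only [this]
  simp

lemma eq_zero_of_chi_sums {n : ℕ} (u : (Fin n → Bool) → ℝ)
    (h : ∀ Λ, ∑ ε : Fin n → Bool, chi Λ ε * u ε = 0) : ∀ ε, u ε = 0 := by
  intro ε
  have := sum_chi_sum u ε
  simp only [h, mul_zero, Finset.sum_const, smul_zero] at this
  have h2 : (0:ℝ) < 2^n := by positivity
  nlinarith [this]

end S13

namespace S13

variable {r s t : ℕ}

abbrev V (r s t : ℕ) := (Fin r → Bool) × (Fin s → Bool) × (Fin t → Bool)

variable (p : V r s t → ℝ)

/-- joint "moments" of A,C monomials at fixed b, unnormalized -/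
def T (Λ : Fin r → Bool) (N : Fin t → Bool) (b : Fin s → Bool) : ℝ :=
  ∑ a : Fin r → Bool, ∑ c : Fin t → Bool, p (a, b, c) * (chi Λ a * chi N c)

def q (b : Fin s → Bool) : ℝ := T p (fun _ => false) (fun _ => false) b

def numA (Λ : Fin r → Bool) (b : Fin s → Bool) : ℝ := T p Λ (fun _ => false) b
def numC (N : Fin t → Bool) (b : Fin s → Bool) : ℝ := T p (fun _ => false) N b

noncomputable def gA (Λ : Fin r → Bool) (b : Fin s → Bool) : ℝ :=
  if 0 < q p b then numA p Λ b / q p b else 0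
noncomputable def gC (N : Fin t → Bool) (b : Fin s → Bool) : ℝ :=
  if 0 < q p b then numC p N b / q p b else 0

/-- expectation of a function of b under the weight q -/
def Ew (f : (Fin s → Bool) → ℝ) : ℝ := ∑ b, q p b * f b

/-- covariance form on functions of b -/
def Cw (f g : (Fin s → Bool) → ℝ) : ℝ := (∑ b, q p b * (f b * g b)) - Ew p f * Ew p g

/-- Fourier coefficient -/
noncomputable def coef (f : (Fin s → Bool) → ℝ) (Μ : Fin s → Bool) : ℝ :=
  ((2:ℝ)^s)⁻¹ * ∑ b, chi Μ b * f b

lemma q_eq (b : Fin s → Bool) : q p b = ∑ a, ∑ c, p (a, b, c) := by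
  unfold q T; simp [chi_bot]

lemma expand (f : (Fin s → Bool) → ℝ) (b : Fin s → Bool) :
    f b = ∑ Μ : Fin s → Bool, coef f Μ * chi Μ b := by
  unfold coef
  have : ∀ Μ : Fin s → Bool, ((2:ℝ)^s)⁻¹ * (∑ b', chi Μ b' * f b') * chi Μ b
      = ((2:ℝ)^s)⁻¹ * (chi Μ b * ∑ b', chi Μ b' * f b') := by intro Μ; ring
  simp only [this, ← Finset.mul_sum, sum_chi_sum]
  rw [← mul_assoc, inv_mul_cancel₀ (by positivity), one_mul]

section hyps

lemma q_nonneg (hp : ∀ v, 0 ≤ p v) (b : Fin s → Bool) : 0 ≤ q p b := by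
  rw [q_eq]
  exact Finset.sum_nonneg fun a _ => Finset.sum_nonneg fun c _ => hp _

lemma sum_q (h1 : ∑ v, p v = 1) : ∑ b, q p b = 1 := by
  simp only [q_eq]
  rw [Finset.sum_comm]
  rw [← h1, Fintype.sum_prod_type]
  exact Finset.sum_congr rfl fun a _ => by rw [Fintype.sum_prod_type]

lemma p_eq_zero (hp : ∀ v, 0 ≤ p v) {b : Fin s → Bool} (hb : q p b = 0) (a : Fin r → Bool) (c : Fin t → Bool) :
    p (a, b, c) = 0 := by
  rw [q_eq] at hb
  have h2 := (Finset.sum_eq_zero_iff_of_nonneg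
    (fun a _ => Finset.sum_nonneg fun c _ => hp _)).1 hb a (Finset.mem_univ a)
  exact (Finset.sum_eq_zero_iff_of_nonneg (fun c _ => hp _)).1 h2 c (Finset.mem_univ c)

lemma T_eq_zero (hp : ∀ v, 0 ≤ p v) {b : Fin s → Bool} (hb : q p b = 0) (Λ : Fin r → Bool) (N : Fin t → Bool) :
    T p Λ N b = 0 := by
  unfold T
  refine Finset.sum_eq_zero fun a _ => Finset.sum_eq_zero fun c _ => ?_
  rw [p_eq_zero p hp hb, zero_mul]

lemma numA_eq (hp : ∀ v, 0 ≤ p v) (Λ : Fin r → Bool) (b : Fin s → Bool) : numA p Λ b = q p b * gA p Λ b := by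
  unfold gA
  by_cases h : 0 < q p b
  · rw [if_pos h, mul_div_cancel₀ _ (ne_of_gt h)]
  · have hq : q p b = 0 := le_antisymm (not_lt.1 h) (q_nonneg p hp b)
    rw [if_neg h, mul_zero, numA, T_eq_zero p hp hq]

lemma numC_eq (hp : ∀ v, 0 ≤ p v) (N : Fin t → Bool) (b : Fin s → Bool) : numC p N b = q p b * gC p N b := by
  unfold gC
  by_cases h : 0 < q p b
  · rw [if_pos h, mul_div_cancel₀ _ (ne_of_gt h)]
  · have hq : q p b = 0 := le_antisymm (not_lt.1 h) (q_nonneg p hp b)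
    rw [if_neg h, mul_zero, numC, T_eq_zero p hp hq]

end hyps

end S13

namespace S13
variable {r s t : ℕ} (p : V r s t → ℝ)

/-- sum over all Μ splits into bot term plus sum over nonconstant monomials -/
lemma sum_split (F : (Fin s → Bool) → ℝ) :
    ∑ Μ : Fin s → Bool, F Μ = F (fun _ => false) + ∑ k : {Λ : Fin s → Bool // Λ ≠ fun _ => false}, F k.1 := by
  classical
  rw [← Finset.sum_subtype (Finset.univ.erase (fun _ => false))
    (fun x => by simp [Finset.mem_erase]) F]
  rw [Finset.add_sum_erase _ F (Finset.mem_univ _)]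

/-- second moment form -/
def Mw (f g : (Fin s → Bool) → ℝ) : ℝ := ∑ b, q p b * (f b * g b)

lemma Cw_def' (f g : (Fin s → Bool) → ℝ) : Cw p f g = Mw p f g - Ew p f * Ew p g := rfl

lemma Ew_sum {ι : Type*} [Fintype ι] (g : ι → (Fin s → Bool) → ℝ) (a : ι → ℝ) :
    Ew p (fun b => ∑ i, a i * g i b) = ∑ i, a i * Ew p (g i) := by
  unfold Ew
  simp only [Finset.mul_sum]
  rw [Finset.sum_comm]
  exact Finset.sum_congr rfl fun i _ => Finset.sum_congr rfl fun b _ => by ring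

lemma Mw_sum_right {ι : Type*} [Fintype ι] (f : (Fin s → Bool) → ℝ)
    (g : ι → (Fin s → Bool) → ℝ) (a : ι → ℝ) :
    Mw p f (fun b => ∑ i, a i * g i b) = ∑ i, a i * Mw p f (g i) := by
  unfold Mw
  simp only [Finset.mul_sum]
  rw [Finset.sum_comm]
  exact Finset.sum_congr rfl fun i _ => Finset.sum_congr rfl fun b _ => by ring

lemma Cw_sum_right {ι : Type*} [Fintype ι] (f : (Fin s → Bool) → ℝ)
    (g : ι → (Fin s → Bool) → ℝ) (a : ι → ℝ) :
    Cw p f (fun b => ∑ i, a i * g i b) = ∑ i, a i * Cw p f (g i) := by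
  rw [Cw_def', Mw_sum_right, Ew_sum, Finset.mul_sum, ← Finset.sum_sub_distrib]
  refine Finset.sum_congr rfl fun i _ => ?_
  rw [Cw_def']
  ring

lemma Ew_const (h1 : ∑ v, p v = 1) (c : ℝ) : Ew p (fun _ => c) = c := by
  unfold Ew
  rw [← Finset.sum_mul, sum_q p h1, one_mul]

lemma Mw_const_right (f : (Fin s → Bool) → ℝ) (c : ℝ) :
    Mw p f (fun _ => c) = Ew p f * c := by
  unfold Mw Ew
  rw [Finset.sum_mul]
  exact Finset.sum_congr rfl fun b _ => by ring

lemma Cw_const_right (h1 : ∑ v, p v = 1) (f : (Fin s → Bool) → ℝ) (c : ℝ) :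
    Cw p f (fun _ => c) = 0 := by
  rw [Cw_def', Mw_const_right, Ew_const p h1, sub_self]

lemma Cw_comm (f g : (Fin s → Bool) → ℝ) : Cw p f g = Cw p g f := by
  unfold Cw Ew
  rw [mul_comm (∑ b, q p b * f b)]
  congr 1
  exact Finset.sum_congr rfl fun b _ => by ring

/-- full left expansion of `Cw` in characters (over all monomials, incl. constant) -/
lemma Cw_expand_left_full (f g : (Fin s → Bool) → ℝ) :
    Cw p f g = ∑ Μ : Fin s → Bool, coef f Μ * Cw p (chi Μ) g := by
  calc Cw p f g = Cw p g f := Cw_comm p f g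
    _ = Cw p g (fun b => ∑ Μ : Fin s → Bool, coef f Μ * chi Μ b) := by
        congr 1
        funext b
        exact expand f b
    _ = ∑ Μ : Fin s → Bool, coef f Μ * Cw p g (chi Μ) := Cw_sum_right p g _ _
    _ = ∑ Μ : Fin s → Bool, coef f Μ * Cw p (chi Μ) g := by
        exact Finset.sum_congr rfl fun Μ _ => by rw [Cw_comm]

/-- right expansion over nonconstant monomials only -/
lemma Cw_expand_right (h1 : ∑ v, p v = 1) (f g : (Fin s → Bool) → ℝ) :
    Cw p f g = ∑ k : {Λ : Fin s → Bool // Λ ≠ fun _ => false},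
      coef g k.1 * Cw p f (chi k.1) := by
  have e1 : Cw p f g = ∑ Μ : Fin s → Bool, coef g Μ * Cw p f (chi Μ) := by
    rw [Cw_comm, Cw_expand_left_full]
    exact Finset.sum_congr rfl fun Μ _ => by rw [Cw_comm]
  rw [e1, sum_split]
  have : Cw p f (chi (fun _ => false)) = 0 := by
    have : chi (fun (_ : Fin s) => false) = fun _ => (1:ℝ) := funext chi_bot
    rw [this, Cw_const_right p h1]
  rw [this, mul_zero, zero_add]

end S13

namespace S13
variable {r s t : ℕ} (p : V r s t → ℝ)

def pAB (a : Fin r → Bool) (b : Fin s → Bool) : ℝ := ∑ c, p (a, b, c)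
def pCB (c : Fin t → Bool) (b : Fin s → Bool) : ℝ := ∑ a, p (a, b, c)

/-- combinatorial conditional independence -/
def combCI : Prop := ∀ (a : Fin r → Bool) (b : Fin s → Bool) (c : Fin t → Bool),
  0 < q p b → p (a, b, c) / q p b = (pAB p a b / q p b) * (pCB p c b / q p b)

/-- moment factorization -/
def Tfac : Prop := ∀ (Λ : Fin r → Bool) (N : Fin t → Bool) (b : Fin s → Bool),
  T p Λ N b * q p b = numA p Λ b * numC p N b

lemma numA_eq' (Λ : Fin r → Bool) (b : Fin s → Bool) :
    numA p Λ b = ∑ a, chi Λ a * pAB p a b := by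
  unfold numA T pAB
  refine Finset.sum_congr rfl fun a _ => ?_
  rw [Finset.mul_sum]
  exact Finset.sum_congr rfl fun c _ => by rw [chi_bot]; ring

lemma numC_eq' (N : Fin t → Bool) (b : Fin s → Bool) :
    numC p N b = ∑ c, chi N c * pCB p c b := by
  unfold numC T pCB
  rw [Finset.sum_comm]
  refine Finset.sum_congr rfl fun c _ => ?_
  rw [Finset.mul_sum]
  exact Finset.sum_congr rfl fun a _ => by rw [chi_bot]; ring

lemma combCI_to_Tfac (hp : ∀ v, 0 ≤ p v) (h : combCI p) : Tfac p := by
  intro Λ N b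
  by_cases hq : 0 < q p b
  · have hqe : q p b ≠ 0 := ne_of_gt hq
    have hpt : ∀ a c, p (a, b, c) * q p b = pAB p a b * pCB p c b := by
      intro a c
      have e := h a b c hq
      have e2 : p (a, b, c) / q p b * q p b
          = (pAB p a b / q p b) * (pCB p c b / q p b) * q p b := by rw [e]
      rw [div_mul_cancel₀ _ hqe] at e2
      rw [e2]
      field_simp
    have e1 : T p Λ N b * q p b
        = ∑ a, ∑ c, (chi Λ a * pAB p a b) * (chi N c * pCB p c b) := by
      unfold T
      rw [Finset.sum_mul]
      refine Finset.sum_congr rfl fun a _ => ?_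
      rw [Finset.sum_mul]
      refine Finset.sum_congr rfl fun c _ => ?_
      linear_combination (chi Λ a * chi N c) * hpt a c
    rw [e1, numA_eq', numC_eq', Finset.sum_mul]
    refine Finset.sum_congr rfl fun a _ => ?_
    rw [Finset.mul_sum]
  · have hq0 : q p b = 0 := le_antisymm (not_lt.1 hq) (q_nonneg p hp b)
    rw [hq0, mul_zero, numA, T_eq_zero p hp hq0, zero_mul]

lemma Tfac_to_combCI (h : Tfac p) : combCI p := by
  intro a b c hq
  have hqe : q p b ≠ 0 := ne_of_gt hq
  have inv2 : ∑ Λ : Fin r → Bool, chi Λ a * ∑ N : Fin t → Bool, chi N c * T p Λ N b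
      = (2:ℝ)^r * ((2:ℝ)^t * p (a, b, c)) := by
    have inner : ∀ Λ : Fin r → Bool, ∑ N : Fin t → Bool, chi N c * T p Λ N b
        = (2:ℝ)^t * ∑ a' : Fin r → Bool, chi Λ a' * p (a', b, c) := by
      intro Λ
      have eT : ∀ N : Fin t → Bool, T p Λ N b
          = ∑ c' : Fin t → Bool, chi N c' * (∑ a' : Fin r → Bool, chi Λ a' * p (a', b, c')) := by
        intro N
        unfold T
        rw [Finset.sum_comm]
        refine Finset.sum_congr rfl fun c' _ => ?_
        rw [Finset.mul_sum]
        exact Finset.sum_congr rfl fun a' _ => by ring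
      simp only [eT]
      rw [sum_chi_sum (fun c' => ∑ a' : Fin r → Bool, chi Λ a' * p (a', b, c')) c]
    simp only [inner]
    have e3 : ∀ Λ : Fin r → Bool,
        chi Λ a * ((2:ℝ)^t * ∑ a' : Fin r → Bool, chi Λ a' * p (a', b, c))
        = (2:ℝ)^t * (chi Λ a * ∑ a' : Fin r → Bool, chi Λ a' * p (a', b, c)) := fun Λ => by ring
    simp only [e3]
    rw [← Finset.mul_sum, sum_chi_sum (fun a' => p (a', b, c)) a]
    ring
  have invA : ∑ Λ : Fin r → Bool, chi Λ a * numA p Λ b = (2:ℝ)^r * pAB p a b := by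
    simp only [numA_eq']
    exact sum_chi_sum (fun a' => pAB p a' b) a
  have invC : ∑ N : Fin t → Bool, chi N c * numC p N b = (2:ℝ)^t * pCB p c b := by
    simp only [numC_eq']
    exact sum_chi_sum (fun c' => pCB p c' b) c
  have lhs : (∑ Λ : Fin r → Bool, chi Λ a * ∑ N : Fin t → Bool, chi N c * T p Λ N b) * q p b
      = ∑ Λ : Fin r → Bool, chi Λ a * ∑ N : Fin t → Bool, chi N c * (T p Λ N b * q p b) := by
    rw [Finset.sum_mul]
    refine Finset.sum_congr rfl fun Λ _ => ?_
    rw [mul_assoc, Finset.sum_mul]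
    congr 1
    exact Finset.sum_congr rfl fun N _ => by ring
  have rhs : ∑ Λ : Fin r → Bool, chi Λ a * ∑ N : Fin t → Bool, chi N c * (numA p Λ b * numC p N b)
      = (∑ Λ : Fin r → Bool, chi Λ a * numA p Λ b) * (∑ N : Fin t → Bool, chi N c * numC p N b) := by
    rw [Finset.sum_mul]
    refine Finset.sum_congr rfl fun Λ _ => ?_
    rw [Finset.mul_sum, Finset.mul_sum]
    exact Finset.sum_congr rfl fun N _ => by ring
  have key : (2:ℝ)^r * ((2:ℝ)^t * (p (a, b, c) * q p b))
      = (2:ℝ)^r * ((2:ℝ)^t * (pAB p a b * pCB p c b)) := by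
    calc (2:ℝ)^r * ((2:ℝ)^t * (p (a, b, c) * q p b))
        = ((2:ℝ)^r * ((2:ℝ)^t * p (a, b, c))) * q p b := by ring
      _ = (∑ Λ : Fin r → Bool, chi Λ a * ∑ N : Fin t → Bool, chi N c * T p Λ N b) * q p b := by
          rw [inv2]
      _ = ∑ Λ : Fin r → Bool, chi Λ a * ∑ N : Fin t → Bool, chi N c * (T p Λ N b * q p b) := lhs
      _ = ∑ Λ : Fin r → Bool, chi Λ a
            * ∑ N : Fin t → Bool, chi N c * (numA p Λ b * numC p N b) :=
          Finset.sum_congr rfl fun Λ _ =>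
            congrArg _ (Finset.sum_congr rfl fun N _ => by rw [h])
      _ = (∑ Λ : Fin r → Bool, chi Λ a * numA p Λ b)
            * (∑ N : Fin t → Bool, chi N c * numC p N b) := rhs
      _ = ((2:ℝ)^r * pAB p a b) * ((2:ℝ)^t * pCB p c b) := by rw [invA, invC]
      _ = (2:ℝ)^r * ((2:ℝ)^t * (pAB p a b * pCB p c b)) := by ring
  have hpq : p (a, b, c) * q p b = pAB p a b * pCB p c b := by
    have h2r : ((2:ℝ)^r) ≠ 0 := by positivity
    have h2t : ((2:ℝ)^t) ≠ 0 := by positivity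
    exact mul_left_cancel₀ h2t (mul_left_cancel₀ h2r key)
  rw [div_mul_div_comm, div_eq_div_iff hqe (mul_ne_zero hqe hqe)]
  linear_combination q p b * hpq

end S13

namespace S13
variable {r s t : ℕ} (p : V r s t → ℝ)

abbrev IdxB (s : ℕ) : Type := {Λ : Fin s → Bool // Λ ≠ fun _ => false}
abbrev IdxL (r s : ℕ) : Type := {q : (Fin r → Bool) × (Fin s → Bool) // q.1 ≠ fun _ => false}
abbrev IdxR (s t : ℕ) : Type := {q : (Fin s → Bool) × (Fin t → Bool) // q.2 ≠ fun _ => false}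

lemma Ew_sub (g h : (Fin s → Bool) → ℝ) :
    Ew p (fun b => g b - h b) = Ew p g - Ew p h := by
  unfold Ew
  rw [← Finset.sum_sub_distrib]
  exact Finset.sum_congr rfl fun b _ => by ring

lemma Mw_sub_right (f g h : (Fin s → Bool) → ℝ) :
    Mw p f (fun b => g b - h b) = Mw p f g - Mw p f h := by
  unfold Mw
  rw [← Finset.sum_sub_distrib]
  exact Finset.sum_congr rfl fun b _ => by ring

lemma Cw_sub_right (f g h : (Fin s → Bool) → ℝ) :
    Cw p f (fun b => g b - h b) = Cw p f g - Cw p f h := by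
  rw [Cw_def', Cw_def', Cw_def', Mw_sub_right, Ew_sub]
  ring

lemma Cw_delta (f : (Fin s → Bool) → ℝ) (b0 : Fin s → Bool) :
    Cw p (fun b => if b = b0 then 1 else 0) f = q p b0 * f b0 - q p b0 * Ew p f := by
  rw [Cw_comm, Cw_def']
  have e1 : Mw p f (fun b => if b = b0 then 1 else 0) = q p b0 * f b0 := by
    unfold Mw
    rw [Finset.sum_eq_single b0]
    · simp
    · intro b _ hb; simp [hb]
    · intro h; exact absurd (Finset.mem_univ b0) h
  have e2 : Ew p (fun b => if b = b0 then 1 else 0) = q p b0 := by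
    unfold Ew
    rw [Finset.sum_eq_single b0]
    · simp
    · intro b _ hb; simp [hb]
    · intro h; exact absurd (Finset.mem_univ b0) h
  rw [e1, e2]
  ring

-- conversion lemmas
lemma convB (f : (Fin s → Bool) → ℝ) : ∑ b, f b * q p b = Ew p f := by
  unfold Ew
  exact Finset.sum_congr rfl fun b _ => by ring

lemma convL (hp : ∀ v, 0 ≤ p v) (Μ : Fin s → Bool) (Λ : Fin r → Bool) :
    ∑ b, chi Μ b * numA p Λ b = Ew p (fun b => chi Μ b * gA p Λ b) := by
  unfold Ew
  refine Finset.sum_congr rfl fun b _ => ?_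
  rw [numA_eq p hp]
  ring

lemma convR (hp : ∀ v, 0 ≤ p v) (Μ : Fin s → Bool) (N : Fin t → Bool) :
    ∑ b, chi Μ b * numC p N b = Ew p (fun b => chi Μ b * gC p N b) := by
  unfold Ew
  refine Finset.sum_congr rfl fun b _ => ?_
  rw [numC_eq p hp]
  ring

lemma convBB (Μ Μ' : Fin s → Bool) :
    ∑ b, chi Μ b * chi Μ' b * q p b = Mw p (chi Μ) (chi Μ') := by
  unfold Mw
  exact Finset.sum_congr rfl fun b _ => by ring

lemma convBL (hp : ∀ v, 0 ≤ p v) (Μ' Μ : Fin s → Bool) (Λ : Fin r → Bool) :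
    ∑ b, chi Μ' b * chi Μ b * numA p Λ b
      = Mw p (chi Μ') (fun b => chi Μ b * gA p Λ b) := by
  unfold Mw
  refine Finset.sum_congr rfl fun b _ => ?_
  rw [numA_eq p hp]
  ring

lemma convBR (hp : ∀ v, 0 ≤ p v) (Μ' Μ : Fin s → Bool) (N : Fin t → Bool) :
    ∑ b, chi Μ' b * chi Μ b * numC p N b
      = Mw p (chi Μ') (fun b => chi Μ b * gC p N b) := by
  unfold Mw
  refine Finset.sum_congr rfl fun b _ => ?_
  rw [numC_eq p hp]
  ring

end S13

namespace S13
open Matrix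
variable {r s t : ℕ}

lemma T_pointwise (p : V r s t → ℝ) (hp : ∀ v, 0 ≤ p v) (h : Tfac p)
    (Λ : Fin r → Bool) (N : Fin t → Bool) (b : Fin s → Bool) :
    T p Λ N b = q p b * (gA p Λ b * gC p N b) := by
  by_cases hq : 0 < q p b
  · have hqe : q p b ≠ 0 := ne_of_gt hq
    have := h Λ N b
    rw [numA_eq p hp, numC_eq p hp] at this
    apply mul_right_cancel₀ hqe
    rw [this]
    ring
  · have hq0 : q p b = 0 := le_antisymm (not_lt.1 hq) (q_nonneg p hp b)
    rw [hq0, T_eq_zero p hp hq0, zero_mul]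


lemma resid (p : V r s t → ℝ) (h1 : ∑ v, p v = 1) (m : IdxB s → ℝ)
    (g : (Fin s → Bool) → ℝ)
    (hg : ∀ k : IdxB s,
      Cw p (chi k.1) (fun b => g b - ∑ k' : IdxB s, m k' * chi k'.1 b) = 0) :
    ∀ b0, q p b0 * g b0 = q p b0 * ((∑ k' : IdxB s, m k' * chi k'.1 b0)
      + Ew p (fun b => g b - ∑ k' : IdxB s, m k' * chi k'.1 b)) := by
  have hall : ∀ Μ : Fin s → Bool,
      Cw p (chi Μ) (fun b => g b - ∑ k' : IdxB s, m k' * chi k'.1 b) = 0 := by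
    intro Μ
    by_cases hΜ : Μ = fun _ => false
    · subst hΜ
      rw [Cw_comm]
      have e : chi (fun _ : Fin s => false) = fun _ => (1:ℝ) := funext chi_bot
      rw [e, Cw_const_right p h1]
    · exact hg ⟨Μ, hΜ⟩
  have hf : ∀ f : (Fin s → Bool) → ℝ,
      Cw p f (fun b => g b - ∑ k' : IdxB s, m k' * chi k'.1 b) = 0 := by
    intro f
    rw [Cw_expand_left_full]
    simp only [hall, mul_zero]
    exact Finset.sum_const_zero
  intro b0
  have h0 := hf (fun b => if b = b0 then 1 else 0)
  rw [Cw_delta] at h0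
  linear_combination h0

lemma Cw_psi (p : V r s t → ℝ) (m m' : IdxB s → ℝ) :
    Cw p (fun b => ∑ k : IdxB s, m k * chi k.1 b)
         (fun b => ∑ k' : IdxB s, m' k' * chi k'.1 b)
      = ∑ k' : IdxB s, m' k' * ∑ k : IdxB s, m k * Cw p (chi k.1) (chi k'.1) := by
  rw [Cw_sum_right p _ (fun (k' : IdxB s) => chi k'.1) m']
  refine Finset.sum_congr rfl fun k' _ => ?_
  congr 1
  rw [Cw_comm, Cw_sum_right p _ (fun (k : IdxB s) => chi k.1) m]
  exact Finset.sum_congr rfl fun k _ => by rw [Cw_comm]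

theorem core (p : V r s t → ℝ) (hp : ∀ v, 0 ≤ p v) (h1 : ∑ v, p v = 1)
    (SB : Matrix (IdxB s) (IdxB s) ℝ)
    (hSB : ∀ i j, SB i j = (∑ b, chi i.1 b * chi j.1 b * q p b)
      - (∑ b, chi i.1 b * q p b) * (∑ b, chi j.1 b * q p b))
    (SBL : Matrix (IdxB s) (IdxL r s) ℝ)
    (hSBL : ∀ i j, SBL i j = (∑ b, chi i.1 b * chi j.1.2 b * numA p j.1.1 b)
      - (∑ b, chi i.1 b * q p b) * (∑ b, chi j.1.2 b * numA p j.1.1 b))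
    (SBR : Matrix (IdxB s) (IdxR s t) ℝ)
    (hSBR : ∀ i j, SBR i j = (∑ b, chi i.1 b * chi j.1.1 b * numC p j.1.2 b)
      - (∑ b, chi i.1 b * q p b) * (∑ b, chi j.1.1 b * numC p j.1.2 b))
    (SLR : Matrix (IdxL r s) (IdxR s t) ℝ)
    (hSLR : ∀ i j, SLR i j = (∑ b, chi i.1.2 b * chi j.1.1 b * T p i.1.1 j.1.2 b)
      - (∑ b, chi i.1.2 b * numA p i.1.1 b) * (∑ b, chi j.1.1 b * numC p j.1.2 b)) :
    combCI p ↔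
      ∃ (M1 : Matrix (IdxL r s) (IdxB s) ℝ) (M2 : Matrix (IdxR s t) (IdxB s) ℝ),
        SBL = SB * M1ᵀ ∧ SBR = SB * M2ᵀ ∧
        SBLᵀ = M1 * SB ∧ SBRᵀ = M2 * SB ∧
        SLR = M1 * SB * M2ᵀ ∧ SLRᵀ = M2 * SB * M1ᵀ := by
  -- rewrite all matrix entries in Cw form
  have hSB' : ∀ i j, SB i j = Cw p (chi i.1) (chi j.1) := by
    intro i j
    rw [hSB i j, Cw_def', convBB, convB, convB]
  have hSBL' : ∀ i j, SBL i j
      = Cw p (chi i.1) (fun b => chi j.1.2 b * gA p j.1.1 b) := by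
    intro i j
    rw [hSBL i j, Cw_def', convBL p hp, convB, convL p hp]
  have hSBR' : ∀ i j, SBR i j
      = Cw p (chi i.1) (fun b => chi j.1.1 b * gC p j.1.2 b) := by
    intro i j
    rw [hSBR i j, Cw_def', convBR p hp, convB, convR p hp]
  have hSBsymm : SBᵀ = SB := by
    ext i j
    rw [transpose_apply, hSB' i j, hSB' j i, Cw_comm]
  constructor
  · -- forward direction
    intro hCI
    have hT := combCI_to_Tfac p hp hCI
    have hSLR' : ∀ i j, SLR i j
        = Cw p (fun b => chi i.1.2 b * gA p i.1.1 b)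
             (fun b => chi j.1.1 b * gC p j.1.2 b) := by
      intro i j
      rw [hSLR i j, Cw_def', convL p hp, convR p hp]
      congr 1
      unfold Mw
      refine Finset.sum_congr rfl fun b _ => ?_
      rw [T_pointwise p hp hT]
      ring
    set M1 : Matrix (IdxL r s) (IdxB s) ℝ :=
      Matrix.of fun i k => coef (fun b => chi i.1.2 b * gA p i.1.1 b) k.1 with hM1def
    set M2 : Matrix (IdxR s t) (IdxB s) ℝ :=
      Matrix.of fun j k => coef (fun b => chi j.1.1 b * gC p j.1.2 b) k.1 with hM2def
    have e1 : SBL = SB * M1ᵀ := by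
      ext i j
      rw [hSBL' i j, Matrix.mul_apply, Cw_expand_right p h1]
      refine Finset.sum_congr rfl fun k _ => ?_
      rw [Matrix.transpose_apply, hSB' i k, hM1def, Matrix.of_apply]
      ring
    have e2 : SBR = SB * M2ᵀ := by
      ext i j
      rw [hSBR' i j, Matrix.mul_apply, Cw_expand_right p h1]
      refine Finset.sum_congr rfl fun k _ => ?_
      rw [Matrix.transpose_apply, hSB' i k, hM2def, Matrix.of_apply]
      ring
    have e5 : SLR = M1 * SB * M2ᵀ := by
      ext i j
      rw [hSLR' i j]
      have exp1 : Cw p (fun b => chi i.1.2 b * gA p i.1.1 b)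
            (fun b => chi j.1.1 b * gC p j.1.2 b)
          = ∑ k : IdxB s, coef (fun b => chi i.1.2 b * gA p i.1.1 b) k.1
              * Cw p (chi k.1) (fun b => chi j.1.1 b * gC p j.1.2 b) := by
        rw [Cw_comm, Cw_expand_right p h1]
        exact Finset.sum_congr rfl fun k _ => by rw [Cw_comm]
      have exp2 : ∀ k : IdxB s, Cw p (chi k.1) (fun b => chi j.1.1 b * gC p j.1.2 b)
          = ∑ k' : IdxB s, coef (fun b => chi j.1.1 b * gC p j.1.2 b) k'.1
              * Cw p (chi k.1) (chi k'.1) := fun k => Cw_expand_right p h1 _ _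
      rw [exp1]
      simp only [exp2, hM1def, hM2def, Matrix.mul_apply, Matrix.transpose_apply,
        Matrix.of_apply, hSB', Finset.mul_sum, Finset.sum_mul]
      rw [Finset.sum_comm]
      exact Finset.sum_congr rfl fun k' _ => Finset.sum_congr rfl fun k _ => by ring
    refine ⟨M1, M2, e1, e2, ?_, ?_, e5, ?_⟩
    · rw [e1, Matrix.transpose_mul, Matrix.transpose_transpose, hSBsymm]
    · rw [e2, Matrix.transpose_mul, Matrix.transpose_transpose, hSBsymm]
    · rw [e5, Matrix.transpose_mul, Matrix.transpose_mul, Matrix.transpose_transpose,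
        hSBsymm, Matrix.mul_assoc]
  · -- backward direction
    rintro ⟨M1, M2, hBL, hBR, -, -, hLR, -⟩
    apply Tfac_to_combCI
    intro Λ N b
    by_cases hΛ : Λ = fun _ => false
    · subst hΛ
      have e1' : T p (fun _ => false) N b = numC p N b := rfl
      have e2' : numA p (fun _ => false) b = q p b := rfl
      rw [e1', e2']
      ring
    by_cases hN : N = fun _ => false
    · subst hN
      have e1' : T p Λ (fun _ => false) b = numA p Λ b := rfl
      have e2' : numC p (fun _ => false) b = q p b := rfl
      rw [e1', e2']
    -- residual hypotheses for the L features
    have hgL : ∀ (i : IdxL r s) (k : IdxB s),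
        Cw p (chi k.1) (fun b => (chi i.1.2 b * gA p i.1.1 b)
          - ∑ k' : IdxB s, M1 i k' * chi k'.1 b) = 0 := by
      intro i k
      rw [Cw_sub_right, Cw_sum_right p _ (fun (k' : IdxB s) => chi k'.1) (M1 i)]
      rw [← hSBL' k i, hBL, Matrix.mul_apply]
      rw [sub_eq_zero]
      refine Finset.sum_congr rfl fun k' _ => ?_
      rw [Matrix.transpose_apply, hSB' k k']
      ring
    have hgR : ∀ (j : IdxR s t) (k : IdxB s),
        Cw p (chi k.1) (fun b => (chi j.1.1 b * gC p j.1.2 b)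
          - ∑ k' : IdxB s, M2 j k' * chi k'.1 b) = 0 := by
      intro j k
      rw [Cw_sub_right, Cw_sum_right p _ (fun (k' : IdxB s) => chi k'.1) (M2 j)]
      rw [← hSBR' k j, hBR, Matrix.mul_apply]
      rw [sub_eq_zero]
      refine Finset.sum_congr rfl fun k' _ => ?_
      rw [Matrix.transpose_apply, hSB' k k']
      ring
    -- step C : the second moment identity, for all indices i j
    have stepC : ∀ (i : IdxL r s) (j : IdxR s t),
        (∑ b', chi i.1.2 b' * chi j.1.1 b' * T p i.1.1 j.1.2 b')
          = ∑ b', q p b' * ((chi i.1.2 b' * gA p i.1.1 b')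
              * (chi j.1.1 b' * gC p j.1.2 b')) := by
      intro i j
      have hrL := resid p h1 (M1 i) (fun b => chi i.1.2 b * gA p i.1.1 b) (hgL i)
      have hrR := resid p h1 (M2 j) (fun b => chi j.1.1 b * gC p j.1.2 b) (hgR j)
      set cL : ℝ := Ew p (fun b => (chi i.1.2 b * gA p i.1.1 b)
        - ∑ k' : IdxB s, M1 i k' * chi k'.1 b) with hcLdef
      set cR : ℝ := Ew p (fun b => (chi j.1.1 b * gC p j.1.2 b)
        - ∑ k' : IdxB s, M2 j k' * chi k'.1 b) with hcRdef
      -- pointwise product identity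
      have hpt : ∀ b', q p b' * ((chi i.1.2 b' * gA p i.1.1 b')
            * (chi j.1.1 b' * gC p j.1.2 b'))
          = q p b' * (((∑ k' : IdxB s, M1 i k' * chi k'.1 b') + cL)
              * ((∑ k' : IdxB s, M2 j k' * chi k'.1 b') + cR)) := by
        intro b'
        by_cases hq : q p b' = 0
        · rw [hq, zero_mul, zero_mul]
        · have eL : chi i.1.2 b' * gA p i.1.1 b'
              = (∑ k' : IdxB s, M1 i k' * chi k'.1 b') + cL :=
            mul_left_cancel₀ hq (hrL b')
          have eR : chi j.1.1 b' * gC p j.1.2 b'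
              = (∑ k' : IdxB s, M2 j k' * chi k'.1 b') + cR :=
            mul_left_cancel₀ hq (hrR b')
          rw [eL, eR]
      -- identity between SLR entry forms
      have hM : (M1 * SB * M2ᵀ) i j
          = Cw p (fun b => ∑ k : IdxB s, M1 i k * chi k.1 b)
               (fun b => ∑ k' : IdxB s, M2 j k' * chi k'.1 b) := by
        rw [Cw_psi, Matrix.mul_apply]
        refine Finset.sum_congr rfl fun k' _ => ?_
        rw [Matrix.transpose_apply, Matrix.mul_apply, Finset.sum_mul]
        rw [Finset.mul_sum]
        refine Finset.sum_congr rfl fun k _ => ?_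
        rw [hSB' k k']
        ring
      have hSLRij := hSLR i j
      rw [hLR, hM, convL p hp, convR p hp] at hSLRij
      -- expand the RHS sum
      have hsplit : ∑ b', q p b' * (((∑ k' : IdxB s, M1 i k' * chi k'.1 b') + cL)
              * ((∑ k' : IdxB s, M2 j k' * chi k'.1 b') + cR))
          = Mw p (fun b => ∑ k : IdxB s, M1 i k * chi k.1 b)
              (fun b => ∑ k' : IdxB s, M2 j k' * chi k'.1 b)
            + cL * Ew p (fun b => ∑ k' : IdxB s, M2 j k' * chi k'.1 b)
            + cR * Ew p (fun b => ∑ k : IdxB s, M1 i k * chi k.1 b)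
            + cL * cR := by
        unfold Mw Ew
        have e : ∀ b', q p b' * (((∑ k' : IdxB s, M1 i k' * chi k'.1 b') + cL)
              * ((∑ k' : IdxB s, M2 j k' * chi k'.1 b') + cR))
            = q p b' * ((∑ k : IdxB s, M1 i k * chi k.1 b')
                  * (∑ k' : IdxB s, M2 j k' * chi k'.1 b'))
              + cL * (q p b' * (∑ k' : IdxB s, M2 j k' * chi k'.1 b'))
              + cR * (q p b' * (∑ k : IdxB s, M1 i k * chi k.1 b'))
              + (cL * cR) * q p b' := fun b' => by ring
        simp only [e]
        rw [Finset.sum_add_distrib, Finset.sum_add_distrib, Finset.sum_add_distrib,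
          ← Finset.mul_sum, ← Finset.mul_sum, ← Finset.mul_sum, sum_q p h1, mul_one]
      -- values of cL, cR
      have hcL : cL = Ew p (fun b => chi i.1.2 b * gA p i.1.1 b)
          - Ew p (fun b => ∑ k' : IdxB s, M1 i k' * chi k'.1 b) := by
        rw [hcLdef, Ew_sub]
      have hcR : cR = Ew p (fun b => chi j.1.1 b * gC p j.1.2 b)
          - Ew p (fun b => ∑ k' : IdxB s, M2 j k' * chi k'.1 b) := by
        rw [hcRdef, Ew_sub]
      rw [Finset.sum_congr rfl fun b' _ => hpt b', hsplit, hcL, hcR]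
      rw [Cw_def'] at hSLRij
      linear_combination -hSLRij
    -- apply at Μ2 = ⊥, all Μ1, and invert
    have hD : ∀ b', T p Λ N b' - q p b' * (gA p Λ b' * gC p N b') = 0 := by
      apply eq_zero_of_chi_sums
      intro Μ1
      have hst : (∑ b', chi Μ1 b' * chi (fun _ => false) b' * T p Λ N b')
          = ∑ b', q p b' * ((chi Μ1 b' * gA p Λ b')
              * (chi (fun _ => false) b' * gC p N b')) :=
        stepC ⟨(Λ, Μ1), hΛ⟩ ⟨((fun _ => false), N), hN⟩
      have goal2 : ∑ ε, chi Μ1 ε * (T p Λ N ε - q p ε * (gA p Λ ε * gC p N ε))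
          = (∑ b', chi Μ1 b' * chi (fun _ => false) b' * T p Λ N b')
            - ∑ b', q p b' * ((chi Μ1 b' * gA p Λ b')
                * (chi (fun _ => false) b' * gC p N b')) := by
        rw [← Finset.sum_sub_distrib]
        refine Finset.sum_congr rfl fun ε _ => ?_
        rw [chi_bot]
        ring
      rw [goal2, hst, sub_self]
    have hDb := hD b
    rw [sub_eq_zero] at hDb
    rw [hDb, numA_eq p hp, numC_eq p hp]
    ring

end S13

namespace S13
open MeasureTheory

variable {r s t : ℕ}

def vmap {n : ℕ} (ε : Fin n → Bool) : Fin n → ℝ := fun j => sg (ε j)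

noncomputable def encv {n : ℕ} (x : Fin n → ℝ) : Fin n → Bool := fun j => decide (x j = 1)

lemma encv_vmap {n : ℕ} (ε : Fin n → Bool) : encv (vmap ε) = ε := by
  funext j
  cases h : ε j <;> simp [encv, vmap, h, sg] <;> norm_num

lemma vmap_encv {n : ℕ} (x : Fin n → ℝ) (hx : ∀ j, x j = 1 ∨ x j = -1) :
    vmap (encv x) = x := by
  funext j
  rcases hx j with h | h <;> simp [encv, vmap, h, sg] <;> norm_num

lemma eq_vmap_iff {n : ℕ} (x : Fin n → ℝ) (hx : ∀ j, x j = 1 ∨ x j = -1) (ε : Fin n → Bool) :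
    x = vmap ε ↔ encv x = ε := by
  constructor
  · rintro rfl
    exact encv_vmap ε
  · rintro rfl
    exact (vmap_encv x hx).symm

lemma meas_pre {Ω : Type*} [MeasurableSpace Ω] (ℙ : Measure Ω) [IsProbabilityMeasure ℙ]
    (enc : Ω → V r s t) (hmeas : ∀ v, MeasurableSet (enc ⁻¹' {v}))
    (P : V r s t → Prop) [DecidablePred P] :
    (ℙ (enc ⁻¹' {v | P v})).toReal
      = ∑ v, if P v then (ℙ (enc ⁻¹' {v})).toReal else 0 := by
  have hU : enc ⁻¹' {v | P v}
      = ⋃ v ∈ Finset.univ.filter (fun v => P v), enc ⁻¹' {v} := by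
    ext ω
    simp only [Set.mem_preimage, Set.mem_setOf_eq, Set.mem_iUnion, Finset.mem_filter,
      Finset.mem_univ, true_and, Set.mem_singleton_iff]
    exact ⟨fun h => ⟨enc ω, h, rfl⟩, fun ⟨v, hv, he⟩ => he ▸ hv⟩
  have hd : Set.PairwiseDisjoint
      (↑(Finset.univ.filter (fun v => P v)) : Set (V r s t)) (fun v => enc ⁻¹' {v}) := by
    intro v _ v' _ hvv'
    refine Set.disjoint_left.2 fun ω h1 h2 => hvv' ?_
    simp only [Set.mem_preimage, Set.mem_singleton_iff] at h1 h2
    rw [← h1, ← h2]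
  rw [hU, measure_biUnion_finset hd (fun v _ => hmeas v),
    ENNReal.toReal_sum (fun v _ => measure_ne_top ℙ _), Finset.sum_filter]

lemma integral_enc {Ω : Type*} [MeasurableSpace Ω] (ℙ : Measure Ω) [IsProbabilityMeasure ℙ]
    (enc : Ω → V r s t) (hmeas : ∀ v, MeasurableSet (enc ⁻¹' {v}))
    (F : V r s t → ℝ) :
    ∫ ω, F (enc ω) ∂ℙ = ∑ v, (ℙ (enc ⁻¹' {v})).toReal * F v := by
  have hfe : (fun ω => F (enc ω))
      = fun ω => ∑ v : V r s t, (enc ⁻¹' {v}).indicator (fun _ => F v) ω := by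
    funext ω
    rw [Finset.sum_eq_single (enc ω)]
    · rw [Set.indicator_of_mem (show ω ∈ enc ⁻¹' {enc ω} from rfl)]
    · intro v _ hv
      exact Set.indicator_of_notMem (fun h => hv (Set.mem_singleton_iff.1 h).symm) (fun _ => F v)
    · intro h
      exact absurd (Finset.mem_univ _) h
  rw [hfe, integral_finset_sum]
  · refine Finset.sum_congr rfl fun v _ => ?_
    rw [integral_indicator_const _ (hmeas v), smul_eq_mul]
    rfl
  · intro v _
    rw [integrable_indicator_iff (hmeas v)]
    exact integrableOn_const (measure_ne_top ℙ _)

lemma sum_v_master (p : V r s t → ℝ) (F1 : (Fin r → Bool) → ℝ) (F2 : (Fin s → Bool) → ℝ)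
    (F3 : (Fin t → Bool) → ℝ) :
    ∑ v : V r s t, p v * (F1 v.1 * F2 v.2.1 * F3 v.2.2)
      = ∑ b, F2 b * ∑ a, ∑ c, p (a, b, c) * (F1 a * F3 c) := by
  simp only [Fintype.sum_prod_type]
  rw [Finset.sum_comm]
  refine Finset.sum_congr rfl fun b _ => ?_
  rw [Finset.mul_sum]
  refine Finset.sum_congr rfl fun a _ => ?_
  rw [Finset.mul_sum]
  exact Finset.sum_congr rfl fun c _ => by ring

end S13


namespace S13

lemma mono_eq_chi {n : ℕ} {Ω : Type*} (X : Ω → Fin n → ℝ)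
    (hX : ∀ ω j, X ω j = 1 ∨ X ω j = -1) (Λ : Fin n → Bool) (ω : Ω) :
    mono n X Λ ω = chi Λ (encv (X ω)) := by
  unfold mono chi
  refine Finset.prod_congr rfl fun j _ => ?_
  rcases hX ω j with h | h <;> simp [encv, h, sg] <;> norm_num

end S13

/-- BEGIN: `A ⟂ C | B` iff the covariance matrix of the interaction monomials,
ordered as `(𝓑, 𝓛, 𝓡)`, admits the block factorization
`Σ = [[Σ_𝓑, Σ_𝓑 M1ᵀ, Σ_𝓑 M2ᵀ], [M1 Σ_𝓑, Σ_𝓛, M1 Σ_𝓑 M2ᵀ], [M2 Σ_𝓑, M2 Σ_𝓑 M1ᵀ, Σ_𝓡]]`. -/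
theorem stmt13 {Ω : Type*} [MeasurableSpace Ω] (ℙ : Measure Ω)
    [IsProbabilityMeasure ℙ] (r s t : ℕ)
    (A : Ω → Fin r → ℝ) (B : Ω → Fin s → ℝ) (C : Ω → Fin t → ℝ)
    (hA : Measurable A) (hB : Measurable B) (hC : Measurable C)
    (hvalA : ∀ ω j, A ω j = 1 ∨ A ω j = -1)
    (hvalB : ∀ ω j, B ω j = 1 ∨ B ω j = -1)
    (hvalC : ∀ ω j, C ω j = 1 ∨ C ω j = -1)
    -- the interaction features indexed by `𝓑`, `𝓛`, `𝓡`
    (fB : IdxB s → Ω → ℝ) (hfB : ∀ i, fB i = mono s B i.1)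
    (fL : IdxL r s → Ω → ℝ)
    (hfL : ∀ i, fL i = fun ω => mono r A i.1.1 ω * mono s B i.1.2 ω)
    (fR : IdxR s t → Ω → ℝ)
    (hfR : ∀ i, fR i = fun ω => mono s B i.1.1 ω * mono t C i.1.2 ω)
    -- the blocks of the covariance matrix `Σ`, ordered as `(𝓑, 𝓛, 𝓡)`
    (SB : Matrix (IdxB s) (IdxB s) ℝ) (hSB : SB = Matrix.of fun i j => cov ℙ (fB i) (fB j))
    (SL : Matrix (IdxL r s) (IdxL r s) ℝ) (hSL : SL = Matrix.of fun i j => cov ℙ (fL i) (fL j))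
    (SR : Matrix (IdxR s t) (IdxR s t) ℝ) (hSR : SR = Matrix.of fun i j => cov ℙ (fR i) (fR j))
    (SBL : Matrix (IdxB s) (IdxL r s) ℝ) (hSBL2 : SBL = Matrix.of fun i j => cov ℙ (fB i) (fL j))
    (SBR : Matrix (IdxB s) (IdxR s t) ℝ) (hSBR : SBR = Matrix.of fun i j => cov ℙ (fB i) (fR j))
    (SLR : Matrix (IdxL r s) (IdxR s t) ℝ) (hSLR : SLR = Matrix.of fun i j => cov ℙ (fL i) (fR j)) :
    CondIndepDiscrete ℙ A B C ↔
      ∃ (M1 : Matrix (IdxL r s) (IdxB s) ℝ) (M2 : Matrix (IdxR s t) (IdxB s) ℝ),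
        SBL = SB * M1ᵀ ∧ SBR = SB * M2ᵀ ∧
        SBLᵀ = M1 * SB ∧ SBRᵀ = M2 * SB ∧
        SLR = M1 * SB * M2ᵀ ∧ SLRᵀ = M2 * SB * M1ᵀ := by
  classical
  set enc : Ω → S13.V r s t :=
    fun ω => (S13.encv (A ω), S13.encv (B ω), S13.encv (C ω)) with henc
  set pp : S13.V r s t → ℝ := fun v => (ℙ (enc ⁻¹' {v})).toReal with hpp
  have hencv : ∀ (ω : Ω) (v : S13.V r s t),
      enc ω = v ↔ (A ω = S13.vmap v.1 ∧ B ω = S13.vmap v.2.1 ∧ C ω = S13.vmap v.2.2) := by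
    intro ω v
    rw [S13.eq_vmap_iff (A ω) (hvalA ω), S13.eq_vmap_iff (B ω) (hvalB ω),
      S13.eq_vmap_iff (C ω) (hvalC ω)]
    constructor
    · rintro rfl
      exact ⟨rfl, rfl, rfl⟩
    · rintro ⟨h1, h2, h3⟩
      rw [henc]
      ext <;> simp [h1, h2, h3]
  have hmeas : ∀ v : S13.V r s t, MeasurableSet (enc ⁻¹' {v}) := by
    intro v
    have e : enc ⁻¹' {v} = A ⁻¹' {S13.vmap v.1}
        ∩ (B ⁻¹' {S13.vmap v.2.1} ∩ C ⁻¹' {S13.vmap v.2.2}) := by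
      ext ω
      simp only [Set.mem_preimage, Set.mem_singleton_iff, Set.mem_inter_iff]
      exact hencv ω v
    rw [e]
    exact (hA (measurableSet_singleton _)).inter
      ((hB (measurableSet_singleton _)).inter (hC (measurableSet_singleton _)))
  have hp : ∀ v, 0 ≤ pp v := fun v => ENNReal.toReal_nonneg
  have h1 : ∑ v, pp v = 1 := by
    have e := S13.meas_pre ℙ enc hmeas (fun _ => True)
    simp only [if_true] at e
    have e2 : enc ⁻¹' {v | True} = Set.univ := by
      ext ω; simp
    rw [e2, measure_univ, ENNReal.toReal_one] at e
    exact e.symm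
    -- integrals of monomial features
  have hintegral : ∀ (f : Ω → ℝ) (F : S13.V r s t → ℝ), (∀ ω, f ω = F (enc ω)) →
      ∫ ω, f ω ∂ℙ = ∑ v, pp v * F v := by
    intro f F hf
    have hfe : f = fun ω => F (enc ω) := funext hf
    rw [hfe]
    exact S13.integral_enc ℙ enc hmeas F
  have intB : ∀ Μ : Fin s → Bool,
      ∫ ω, mono s B Μ ω ∂ℙ = ∑ b, S13.chi Μ b * S13.q pp b := by
    intro Μ
    rw [hintegral _ (fun v : S13.V r s t => (fun _ => (1:ℝ)) v.1 * S13.chi Μ v.2.1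
        * (fun _ => (1:ℝ)) v.2.2)
      (fun ω => by rw [S13.mono_eq_chi B hvalB Μ ω]; show _ = 1 * _ * 1; ring)]
    rw [S13.sum_v_master pp (fun _ => (1:ℝ)) (S13.chi Μ) (fun _ => (1:ℝ))]
    refine Finset.sum_congr rfl fun b _ => ?_
    rw [S13.q_eq]
    congr 1
    exact Finset.sum_congr rfl fun a _ => Finset.sum_congr rfl fun c _ => by ring
  have intBB : ∀ Μ Μ' : Fin s → Bool,
      ∫ ω, mono s B Μ ω * mono s B Μ' ω ∂ℙ
        = ∑ b, S13.chi Μ b * S13.chi Μ' b * S13.q pp b := by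
    intro Μ Μ'
    rw [hintegral _ (fun v : S13.V r s t => (fun _ => (1:ℝ)) v.1
        * (S13.chi Μ v.2.1 * S13.chi Μ' v.2.1) * (fun _ => (1:ℝ)) v.2.2)
      (fun ω => by
        rw [S13.mono_eq_chi B hvalB Μ ω, S13.mono_eq_chi B hvalB Μ' ω]
        show _ = 1 * _ * 1
        ring)]
    rw [S13.sum_v_master pp (fun _ => (1:ℝ)) (fun b => S13.chi Μ b * S13.chi Μ' b)
      (fun _ => (1:ℝ))]
    refine Finset.sum_congr rfl fun b _ => ?_
    rw [S13.q_eq, show S13.chi Μ b * S13.chi Μ' b * (∑ a, ∑ c, pp (a, b, c))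
      = (S13.chi Μ b * S13.chi Μ' b) * (∑ a, ∑ c, pp (a, b, c)) from by ring]
    congr 1
    exact Finset.sum_congr rfl fun a _ => Finset.sum_congr rfl fun c _ => by ring
  have intL : ∀ (Λ : Fin r → Bool) (Μ : Fin s → Bool),
      ∫ ω, mono r A Λ ω * mono s B Μ ω ∂ℙ = ∑ b, S13.chi Μ b * S13.numA pp Λ b := by
    intro Λ Μ
    rw [hintegral _ (fun v : S13.V r s t => S13.chi Λ v.1 * S13.chi Μ v.2.1
        * (fun _ => (1:ℝ)) v.2.2)
      (fun ω => by
        rw [S13.mono_eq_chi A hvalA Λ ω, S13.mono_eq_chi B hvalB Μ ω]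
        show _ = _ * _ * 1
        ring)]
    rw [S13.sum_v_master pp (S13.chi Λ) (S13.chi Μ) (fun _ => (1:ℝ))]
    refine Finset.sum_congr rfl fun b _ => ?_
    unfold S13.numA S13.T
    congr 1
    refine Finset.sum_congr rfl fun a _ => Finset.sum_congr rfl fun c _ => ?_
    rw [S13.chi_bot]
  have intR : ∀ (Μ : Fin s → Bool) (N : Fin t → Bool),
      ∫ ω, mono s B Μ ω * mono t C N ω ∂ℙ = ∑ b, S13.chi Μ b * S13.numC pp N b := by
    intro Μ N
    rw [hintegral _ (fun v : S13.V r s t => (fun _ => (1:ℝ)) v.1 * S13.chi Μ v.2.1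
        * S13.chi N v.2.2)
      (fun ω => by
        rw [S13.mono_eq_chi B hvalB Μ ω, S13.mono_eq_chi C hvalC N ω]
        show _ = 1 * _ * _
        ring)]
    rw [S13.sum_v_master pp (fun _ => (1:ℝ)) (S13.chi Μ) (S13.chi N)]
    refine Finset.sum_congr rfl fun b _ => ?_
    unfold S13.numC S13.T
    congr 1
    refine Finset.sum_congr rfl fun a _ => Finset.sum_congr rfl fun c _ => ?_
    rw [S13.chi_bot]
  have intBL : ∀ (Μ' : Fin s → Bool) (Λ : Fin r → Bool) (Μ : Fin s → Bool),
      ∫ ω, mono s B Μ' ω * (mono r A Λ ω * mono s B Μ ω) ∂ℙ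
        = ∑ b, S13.chi Μ' b * S13.chi Μ b * S13.numA pp Λ b := by
    intro Μ' Λ Μ
    rw [hintegral _ (fun v : S13.V r s t => S13.chi Λ v.1
        * (S13.chi Μ' v.2.1 * S13.chi Μ v.2.1) * (fun _ => (1:ℝ)) v.2.2)
      (fun ω => by
        rw [S13.mono_eq_chi B hvalB Μ' ω, S13.mono_eq_chi A hvalA Λ ω,
          S13.mono_eq_chi B hvalB Μ ω]
        show _ = _ * _ * 1
        ring)]
    rw [S13.sum_v_master pp (S13.chi Λ) (fun b => S13.chi Μ' b * S13.chi Μ b)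
      (fun _ => (1:ℝ))]
    refine Finset.sum_congr rfl fun b _ => ?_
    unfold S13.numA S13.T
    rw [show S13.chi Μ' b * S13.chi Μ b * (∑ a, ∑ c, pp (a, b, c)
        * (S13.chi Λ a * S13.chi (fun _ => false) c))
      = (S13.chi Μ' b * S13.chi Μ b) * (∑ a, ∑ c, pp (a, b, c)
        * (S13.chi Λ a * S13.chi (fun _ => false) c)) from by ring]
    congr 1
    refine Finset.sum_congr rfl fun a _ => Finset.sum_congr rfl fun c _ => ?_
    rw [S13.chi_bot]
  have intBR : ∀ (Μ' : Fin s → Bool) (Μ : Fin s → Bool) (N : Fin t → Bool),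
      ∫ ω, mono s B Μ' ω * (mono s B Μ ω * mono t C N ω) ∂ℙ
        = ∑ b, S13.chi Μ' b * S13.chi Μ b * S13.numC pp N b := by
    intro Μ' Μ N
    rw [hintegral _ (fun v : S13.V r s t => (fun _ => (1:ℝ)) v.1
        * (S13.chi Μ' v.2.1 * S13.chi Μ v.2.1) * S13.chi N v.2.2)
      (fun ω => by
        rw [S13.mono_eq_chi B hvalB Μ' ω, S13.mono_eq_chi B hvalB Μ ω,
          S13.mono_eq_chi C hvalC N ω]
        show _ = 1 * _ * _
        ring)]
    rw [S13.sum_v_master pp (fun _ => (1:ℝ)) (fun b => S13.chi Μ' b * S13.chi Μ b)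
      (S13.chi N)]
    refine Finset.sum_congr rfl fun b _ => ?_
    unfold S13.numC S13.T
    rw [show S13.chi Μ' b * S13.chi Μ b * (∑ a, ∑ c, pp (a, b, c)
        * (S13.chi (fun _ => false) a * S13.chi N c))
      = (S13.chi Μ' b * S13.chi Μ b) * (∑ a, ∑ c, pp (a, b, c)
        * (S13.chi (fun _ => false) a * S13.chi N c)) from by ring]
    congr 1
    refine Finset.sum_congr rfl fun a _ => Finset.sum_congr rfl fun c _ => ?_
    rw [S13.chi_bot]
  have intLR : ∀ (Λ : Fin r → Bool) (Μ1 Μ2 : Fin s → Bool) (N : Fin t → Bool),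
      ∫ ω, (mono r A Λ ω * mono s B Μ1 ω) * (mono s B Μ2 ω * mono t C N ω) ∂ℙ
        = ∑ b, S13.chi Μ1 b * S13.chi Μ2 b * S13.T pp Λ N b := by
    intro Λ Μ1 Μ2 N
    rw [hintegral _ (fun v : S13.V r s t => S13.chi Λ v.1
        * (S13.chi Μ1 v.2.1 * S13.chi Μ2 v.2.1) * S13.chi N v.2.2)
      (fun ω => by
        rw [S13.mono_eq_chi A hvalA Λ ω, S13.mono_eq_chi B hvalB Μ1 ω,
          S13.mono_eq_chi B hvalB Μ2 ω, S13.mono_eq_chi C hvalC N ω]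
        ring)]
    rw [S13.sum_v_master pp (S13.chi Λ) (fun b => S13.chi Μ1 b * S13.chi Μ2 b) (S13.chi N)]
    refine Finset.sum_congr rfl fun b _ => ?_
    unfold S13.T
    ring
  have covdef : ∀ f g : Ω → ℝ, cov ℙ f g
      = (∫ ω, f ω * g ω ∂ℙ) - (∫ ω, f ω ∂ℙ) * (∫ ω, g ω ∂ℙ) := fun f g => rfl
  -- matrix entries in core form
  have hSBc : ∀ i j, SB i j = (∑ b, S13.chi i.1 b * S13.chi j.1 b * S13.q pp b)
      - (∑ b, S13.chi i.1 b * S13.q pp b) * (∑ b, S13.chi j.1 b * S13.q pp b) := by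
    intro i j
    rw [hSB]
    simp only [Matrix.of_apply]
    rw [hfB i, hfB j, covdef]
    rw [intBB, intB, intB]
  have hSBLc : ∀ i j, SBL i j = (∑ b, S13.chi i.1 b * S13.chi j.1.2 b * S13.numA pp j.1.1 b)
      - (∑ b, S13.chi i.1 b * S13.q pp b) * (∑ b, S13.chi j.1.2 b * S13.numA pp j.1.1 b) := by
    intro i j
    rw [hSBL2]
    simp only [Matrix.of_apply]
    rw [hfB i, hfL j, covdef]
    rw [intBL, intB, intL]
  have hSBRc : ∀ i j, SBR i j = (∑ b, S13.chi i.1 b * S13.chi j.1.1 b * S13.numC pp j.1.2 b)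
      - (∑ b, S13.chi i.1 b * S13.q pp b) * (∑ b, S13.chi j.1.1 b * S13.numC pp j.1.2 b) := by
    intro i j
    rw [hSBR]
    simp only [Matrix.of_apply]
    rw [hfB i, hfR j, covdef]
    rw [intBR, intB, intR]
  have hSLRc : ∀ i j, SLR i j
      = (∑ b, S13.chi i.1.2 b * S13.chi j.1.1 b * S13.T pp i.1.1 j.1.2 b)
      - (∑ b, S13.chi i.1.2 b * S13.numA pp i.1.1 b)
        * (∑ b, S13.chi j.1.1 b * S13.numC pp j.1.2 b) := by
    intro i j
    rw [hSLR]
    simp only [Matrix.of_apply]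
    rw [hfL i, hfR j, covdef]
    rw [intLR, intL, intR]
  -- measure conversions for conditional independence
  have measB : ∀ εb : Fin s → Bool,
      (ℙ {ω | B ω = S13.vmap εb}).toReal = S13.q pp εb := by
    intro εb
    have hset : {ω | B ω = S13.vmap εb} = enc ⁻¹' {v | v.2.1 = εb} := by
      ext ω
      simp only [Set.mem_setOf_eq, Set.mem_preimage]
      exact S13.eq_vmap_iff (B ω) (hvalB ω) εb
    rw [hset, S13.meas_pre ℙ enc hmeas, S13.q_eq]
    simp only [Fintype.sum_prod_type]
    refine Finset.sum_congr rfl fun a _ => ?_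
    have e : ∀ b' : Fin s → Bool, (∑ c, if b' = εb then pp (a, b', c) else 0)
        = if b' = εb then ∑ c, pp (a, b', c) else 0 := by
      intro b'
      by_cases hb : b' = εb
      · rw [if_pos hb]
        exact Finset.sum_congr rfl fun c _ => if_pos hb
      · rw [if_neg hb]
        exact Finset.sum_eq_zero fun c _ => if_neg hb
    rw [Finset.sum_congr rfl fun b' _ => e b', Finset.sum_ite_eq' Finset.univ εb
      (fun b' => ∑ c, pp (a, b', c)), if_pos (Finset.mem_univ εb)]
  have measABC : ∀ (εa : Fin r → Bool) (εb : Fin s → Bool) (εc : Fin t → Bool),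
      (ℙ {ω | A ω = S13.vmap εa ∧ C ω = S13.vmap εc ∧ B ω = S13.vmap εb}).toReal
        = pp (εa, εb, εc) := by
    intro εa εb εc
    have hset : {ω | A ω = S13.vmap εa ∧ C ω = S13.vmap εc ∧ B ω = S13.vmap εb}
        = enc ⁻¹' {v | v = (εa, εb, εc)} := by
      ext ω
      simp only [Set.mem_setOf_eq, Set.mem_preimage]
      rw [hencv ω (εa, εb, εc)]
      tauto
    rw [hset, S13.meas_pre ℙ enc hmeas]
    rw [Finset.sum_ite_eq' Finset.univ (εa, εb, εc) pp, if_pos (Finset.mem_univ _)]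
  have measAB : ∀ (εa : Fin r → Bool) (εb : Fin s → Bool),
      (ℙ {ω | A ω = S13.vmap εa ∧ B ω = S13.vmap εb}).toReal = S13.pAB pp εa εb := by
    intro εa εb
    have hset : {ω | A ω = S13.vmap εa ∧ B ω = S13.vmap εb}
        = enc ⁻¹' {v | v.1 = εa ∧ v.2.1 = εb} := by
      ext ω
      simp only [Set.mem_setOf_eq, Set.mem_preimage]
      rw [S13.eq_vmap_iff (A ω) (hvalA ω) εa, S13.eq_vmap_iff (B ω) (hvalB ω) εb]
    rw [hset, S13.meas_pre ℙ enc hmeas]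
    unfold S13.pAB
    simp only [Fintype.sum_prod_type]
    rw [Finset.sum_eq_single εa]
    · have e : ∀ b' : Fin s → Bool, (∑ c, if εa = εa ∧ b' = εb then pp (εa, b', c) else 0)
          = if b' = εb then ∑ c, pp (εa, b', c) else 0 := by
        intro b'
        by_cases hb : b' = εb
        · rw [if_pos hb]
          exact Finset.sum_congr rfl fun c _ => if_pos ⟨rfl, hb⟩
        · rw [if_neg hb]
          exact Finset.sum_eq_zero fun c _ => if_neg (fun h => hb h.2)
      rw [Finset.sum_congr rfl fun b' _ => e b', Finset.sum_ite_eq' Finset.univ εb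
        (fun b' => ∑ c, pp (εa, b', c)), if_pos (Finset.mem_univ εb)]
    · intro a _ ha
      refine Finset.sum_eq_zero fun b' _ => Finset.sum_eq_zero fun c _ => ?_
      exact if_neg (fun h => ha h.1)
    · intro h
      exact absurd (Finset.mem_univ εa) h
  have measCB : ∀ (εc : Fin t → Bool) (εb : Fin s → Bool),
      (ℙ {ω | C ω = S13.vmap εc ∧ B ω = S13.vmap εb}).toReal = S13.pCB pp εc εb := by
    intro εc εb
    have hset : {ω | C ω = S13.vmap εc ∧ B ω = S13.vmap εb}
        = enc ⁻¹' {v | v.2.2 = εc ∧ v.2.1 = εb} := by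
      ext ω
      simp only [Set.mem_setOf_eq, Set.mem_preimage]
      rw [S13.eq_vmap_iff (C ω) (hvalC ω) εc, S13.eq_vmap_iff (B ω) (hvalB ω) εb]
    rw [hset, S13.meas_pre ℙ enc hmeas]
    unfold S13.pCB
    simp only [Fintype.sum_prod_type]
    refine Finset.sum_congr rfl fun a _ => ?_
    have e1 : ∀ b' : Fin s → Bool, (∑ c', if c' = εc ∧ b' = εb then pp (a, b', c') else 0)
        = if b' = εb then pp (a, b', εc) else 0 := by
      intro b'
      by_cases hb : b' = εb
      · rw [if_pos hb]
        have e2 : ∀ c' : Fin t → Bool, (if c' = εc ∧ b' = εb then pp (a, b', c') else 0)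
            = if c' = εc then pp (a, b', c') else 0 := by
          intro c'
          by_cases hc : c' = εc
          · rw [if_pos ⟨hc, hb⟩, if_pos hc]
          · rw [if_neg (fun h => hc h.1), if_neg hc]
        rw [Finset.sum_congr rfl fun c' _ => e2 c', Finset.sum_ite_eq' Finset.univ εc
          (fun c' => pp (a, b', c')), if_pos (Finset.mem_univ εc)]
      · rw [if_neg hb]
        exact Finset.sum_eq_zero fun c' _ => if_neg (fun h => hb h.2)
    rw [Finset.sum_congr rfl fun b' _ => e1 b', Finset.sum_ite_eq' Finset.univ εb
      (fun b' => pp (a, b', εc)), if_pos (Finset.mem_univ εb)]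
  -- conditional independence translation
  have hCIiff : CondIndepDiscrete ℙ A B C ↔ S13.combCI pp := by
    constructor
    · intro hCID εa εb εc hq
      have hqpos : 0 < (ℙ {ω | B ω = S13.vmap εb}).toReal := by
        rw [measB]
        exact hq
      have h0 := hCID (S13.vmap εa) (S13.vmap εb) (S13.vmap εc) hqpos
      rw [measB, measABC, measAB, measCB] at h0
      exact h0
    · intro h a b c hpos
      have hBne : {ω | B ω = b}.Nonempty := by
        rcases Set.eq_empty_or_nonempty {ω | B ω = b} with he | hne
        · exfalso
          rw [he, measure_empty] at hpos
          simp at hpos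
        · exact hne
      obtain ⟨ω0, hω0⟩ := hBne
      have hb : b = S13.vmap (S13.encv (B ω0)) := by
        rw [S13.vmap_encv (B ω0) (hvalB ω0)]
        exact hω0.symm
      by_cases hAne : ∃ ωa, A ωa = a
      swap
      · have h2 : {ω | A ω = a ∧ C ω = c ∧ B ω = b} = ∅ := by
          ext ω
          simp only [Set.mem_setOf_eq, Set.mem_empty_iff_false, iff_false, not_and]
          intro ha
          exact absurd ⟨ω, ha⟩ hAne
        have h3 : {ω | A ω = a ∧ B ω = b} = ∅ := by
          ext ω
          simp only [Set.mem_setOf_eq, Set.mem_empty_iff_false, iff_false, not_and]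
          intro ha
          exact absurd ⟨ω, ha⟩ hAne
        rw [h2, h3, measure_empty]
        simp
      by_cases hCne : ∃ ωc, C ωc = c
      swap
      · have h2 : {ω | A ω = a ∧ C ω = c ∧ B ω = b} = ∅ := by
          ext ω
          simp only [Set.mem_setOf_eq, Set.mem_empty_iff_false, iff_false, not_and]
          intro _ hc _
          exact absurd ⟨ω, hc⟩ hCne
        have h3 : {ω | C ω = c ∧ B ω = b} = ∅ := by
          ext ω
          simp only [Set.mem_setOf_eq, Set.mem_empty_iff_false, iff_false, not_and]
          intro hc
          exact absurd ⟨ω, hc⟩ hCne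
        rw [h2, h3, measure_empty]
        simp
      obtain ⟨ωa, hωa⟩ := hAne
      obtain ⟨ωc, hωc⟩ := hCne
      have ha : a = S13.vmap (S13.encv (A ωa)) := by
        rw [S13.vmap_encv (A ωa) (hvalA ωa)]
        exact hωa.symm
      have hc : c = S13.vmap (S13.encv (C ωc)) := by
        rw [S13.vmap_encv (C ωc) (hvalC ωc)]
        exact hωc.symm
      rw [hb, measB] at hpos
      rw [ha, hb, hc, measB, measABC, measAB, measCB]
      exact h _ _ _ hpos
  rw [hCIiff]
  exact S13.core pp hp h1 SB hSBc SBL hSBLc SBR hSBRc SLR hSLRc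
end

section
/- With the same setup (binary random vectors A, B, C; index sets 𝓑, 𝓛, 𝓡 of interaction monomials; Σ the covariance matrix of the monomials ordered as (𝓑, 𝓛, 𝓡)), define the generalized Schur complement S := Σ[𝓛∪𝓡, 𝓛∪𝓡] − Σ[𝓛∪𝓡, 𝓑] Σ_𝓑^+ Σ[𝓑, 𝓛∪𝓡], where Σ_𝓑^+ is the Moore–Penrose pseudoinverse of Σ_𝓑. Then A ⟂ C | B if and only if S is block diagonal with respect to (𝓛, 𝓡), i.e., the off-diagonal block S[𝓛, 𝓡] is the zero matrix. -/
open MeasureTheory Matrix BigOperators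

/-- `P` is the Moore–Penrose pseudoinverse of `M` (the four Penrose conditions;
the Moore–Penrose inverse is the unique such `P`). -/
def IsMoorePenroseInv {n m : Type*} [Fintype n] [Fintype m]
    (M : Matrix n m ℝ) (P : Matrix m n ℝ) : Prop :=
  M * P * M = M ∧ P * M * P = P ∧ (M * P)ᵀ = M * P ∧ (P * M)ᵀ = P * M

namespace S14

def sg (b : Bool) : ℝ := if b then 1 else -1

noncomputable def chi {n : ℕ} (Λ y : Fin n → Bool) : ℝ := ∏ j, if Λ j then sg (y j) else 1

lemma chi_const {n : ℕ} (y : Fin n → Bool) : chi (fun _ => false) y = 1 := by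
  simp [chi]

lemma sum_prod_bool {n : ℕ} (u v : Fin n → ℝ) :
    ∑ Λ : Fin n → Bool, ∏ j, (if Λ j then u j else v j) = ∏ j, (u j + v j) := by
  classical
  have h := Finset.prod_univ_sum (fun _ : Fin n => (Finset.univ : Finset Bool))
      (fun j c => if c then u j else v j)
  rw [Fintype.piFinset_univ] at h
  beta_reduce at h
  calc ∑ Λ : Fin n → Bool, ∏ j, (if Λ j then u j else v j)
      = ∏ j, ∑ c : Bool, (if c then u j else v j) := h.symm
    _ = ∏ j, (u j + v j) := by simp [Fintype.sum_bool]

lemma chi_orth {n : ℕ} (b y : Fin n → Bool) :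
    ∑ Λ : Fin n → Bool, chi Λ b * chi Λ y = if b = y then (2:ℝ)^n else 0 := by
  have h1 : ∀ Λ : Fin n → Bool, chi Λ b * chi Λ y
      = ∏ j, (if Λ j then sg (b j) * sg (y j) else (1:ℝ)) := by
    intro Λ
    rw [chi, chi, ← Finset.prod_mul_distrib]
    refine Finset.prod_congr rfl fun j _ => ?_
    by_cases h : Λ j <;> simp [h]
  rw [Finset.sum_congr rfl fun Λ _ => h1 Λ]
  rw [sum_prod_bool (fun j => sg (b j) * sg (y j)) (fun _ => (1:ℝ))]
  have h2 : ∀ j, (sg (b j) * sg (y j) + 1) = if b j = y j then 2 else 0 := by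
    intro j
    cases hb : b j <;> cases hy : y j <;> norm_num [sg]
  simp only [h2]
  by_cases h : b = y
  · subst h; simp
  · rw [if_neg h]
    obtain ⟨j, hj⟩ : ∃ j, b j ≠ y j := by
      by_contra hc; push_neg at hc; exact h (funext hc)
    exact Finset.prod_eq_zero (Finset.mem_univ j) (by simp [hj])

lemma fourier_zero {n : ℕ} (F : (Fin n → Bool) → ℝ)
    (h : ∀ Λ, ∑ y, chi Λ y * F y = 0) : ∀ y, F y = 0 := by
  intro b
  have h1 : ∑ y, (if b = y then (2:ℝ)^n else 0) * F y = (2:ℝ)^n * F b := by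
    simp only [ite_mul, zero_mul, Finset.sum_ite_eq, Finset.mem_univ, if_true]
  have h2 : ∑ y, (if b = y then (2:ℝ)^n else 0) * F y
      = ∑ Λ : Fin n → Bool, chi Λ b * ∑ y, chi Λ y * F y := by
    simp only [← chi_orth, Finset.sum_mul, Finset.mul_sum]
    rw [Finset.sum_comm]
    refine Finset.sum_congr rfl fun Λ _ => Finset.sum_congr rfl fun y _ => by ring
  have h3 : (2:ℝ)^n * F b = 0 := by
    rw [← h1, h2]; simp [h]
  have hne : ((2:ℝ)^n) ≠ 0 := by positivity
  exact (mul_eq_zero.mp h3).resolve_left hne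

lemma fourier_expand {n : ℕ} (h : (Fin n → Bool) → ℝ) (y : Fin n → Bool) :
    h y = ∑ Λ : Fin n → Bool, ((∑ b, chi Λ b * h b) / 2^n) * chi Λ y := by
  have h2 : ∑ Λ : Fin n → Bool, (∑ b, chi Λ b * h b) * chi Λ y
      = ∑ b, (if b = y then (2:ℝ)^n else 0) * h b := by
    simp only [Finset.sum_mul]
    rw [Finset.sum_comm]
    refine Finset.sum_congr rfl fun b _ => ?_
    rw [← chi_orth, Finset.sum_mul]
    exact Finset.sum_congr rfl fun Λ _ => by ring
  have hne : ((2:ℝ)^n) ≠ 0 := by positivity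
  have h3 : ∑ Λ : Fin n → Bool, ((∑ b, chi Λ b * h b) / 2^n) * chi Λ y
      = (∑ b, (if b = y then (2:ℝ)^n else 0) * h b) / 2^n := by
    rw [← h2, Finset.sum_div]
    exact Finset.sum_congr rfl fun Λ _ => by ring
  rw [h3]
  simp only [ite_mul, zero_mul, Finset.sum_ite_eq, Finset.sum_ite_eq', Finset.mem_univ, if_true]
  field_simp


abbrev XT (r : ℕ) := Fin r → Bool
abbrev WT (r s t : ℕ) := XT r × XT s × XT t
variable {r s t : ℕ}
noncomputable def qq (p : WT r s t → ℝ) (y : XT s) : ℝ := ∑ x : XT r, ∑ z : XT t, p (x, y, z)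
noncomputable def pAB (p : WT r s t → ℝ) (x : XT r) (y : XT s) : ℝ := ∑ z : XT t, p (x, y, z)
noncomputable def pBC (p : WT r s t → ℝ) (y : XT s) (z : XT t) : ℝ := ∑ x : XT r, p (x, y, z)
noncomputable def Ex (p : WT r s t → ℝ) (f : WT r s t → ℝ) : ℝ := ∑ w : WT r s t, p w * f w
noncomputable def covE (p : WT r s t → ℝ) (f g : WT r s t → ℝ) : ℝ :=
  Ex p (fun w => f w * g w) - Ex p f * Ex p g
noncomputable def CE (p : WT r s t → ℝ) (ψ : WT r s t → ℝ) (y : XT s) : ℝ :=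
  (∑ x : XT r, ∑ z : XT t, p (x, y, z) * ψ (x, y, z)) / qq p y
def CIp (p : WT r s t → ℝ) : Prop := ∀ (x : XT r) (y : XT s) (z : XT t),
  0 < qq p y → p (x, y, z) * qq p y = pAB p x y * pBC p y z
noncomputable def FB (r t : ℕ) {s : ℕ} (i : IdxB s) : WT r s t → ℝ := fun w => chi i.1 w.2.1
noncomputable def FL (t : ℕ) {r s : ℕ} (i : IdxL r s) : WT r s t → ℝ :=
  fun w => chi i.1.1 w.1 * chi i.1.2 w.2.1
noncomputable def FR (r : ℕ) {s t : ℕ} (j : IdxR s t) : WT r s t → ℝ :=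
  fun w => chi j.1.1 w.2.1 * chi j.1.2 w.2.2
noncomputable def gBf (p : WT r s t → ℝ) (i : IdxB s) : WT r s t → ℝ :=
  fun w => FB r t i w - Ex p (FB r t i)
noncomputable def gLf (p : WT r s t → ℝ) (i : IdxL r s) : WT r s t → ℝ :=
  fun w => FL t i w - Ex p (FL t i)
noncomputable def gRf (p : WT r s t → ℝ) (j : IdxR s t) : WT r s t → ℝ :=
  fun w => FR r j w - Ex p (FR r j)
noncomputable def sqp (p : WT r s t → ℝ) (w : WT r s t) : ℝ := Real.sqrt (p w)
noncomputable def Bmat (p : WT r s t → ℝ) : Matrix (WT r s t) (IdxB s) ℝ :=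
  Matrix.of fun w k => sqp p w * gBf p k w
noncomputable def Lmat (p : WT r s t → ℝ) : Matrix (WT r s t) (IdxL r s) ℝ :=
  Matrix.of fun w i => sqp p w * gLf p i w
noncomputable def Rmat (p : WT r s t → ℝ) : Matrix (WT r s t) (IdxR s t) ℝ :=
  Matrix.of fun w j => sqp p w * gRf p j w
noncomputable def Dval (p : WT r s t → ℝ) (i : IdxL r s) (j : IdxR s t) : ℝ :=
  ∑ w : WT r s t, p w * (gLf p i w * (gRf p j w - CE p (gRf p j) w.2.1))

variable {p : WT r s t → ℝ}

lemma sum_W (f : WT r s t → ℝ) :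
    ∑ w : WT r s t, f w = ∑ y : XT s, ∑ x : XT r, ∑ z : XT t, f (x, y, z) := by
  calc ∑ w : WT r s t, f w
      = ∑ x : XT r, ∑ q : XT s × XT t, f (x, q) := Fintype.sum_prod_type _
    _ = ∑ q : XT s × XT t, ∑ x : XT r, f (x, q) := Finset.sum_comm
    _ = ∑ y : XT s, ∑ z : XT t, ∑ x : XT r, f (x, y, z) := Fintype.sum_prod_type _
    _ = ∑ y : XT s, ∑ x : XT r, ∑ z : XT t, f (x, y, z) :=
        Finset.sum_congr rfl fun y _ => Finset.sum_comm

lemma p_zero_of_q (hp0 : ∀ w, 0 ≤ p w) {y : XT s} (hq : qq p y = 0)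
    (x : XT r) (z : XT t) : p (x, y, z) = 0 := by
  have h1 : ∀ x : XT r, ∑ z : XT t, p (x, y, z) = 0 := by
    intro x'
    have := (Finset.sum_eq_zero_iff_of_nonneg
      (fun i _ => Finset.sum_nonneg fun z _ => hp0 (i, y, z))).mp hq
    exact this x' (Finset.mem_univ _)
  exact (Finset.sum_eq_zero_iff_of_nonneg (fun z _ => hp0 (x, y, z))).mp
    (h1 x) z (Finset.mem_univ _)

lemma q_nonneg (hp0 : ∀ w, 0 ≤ p w) (y : XT s) : 0 ≤ qq p y :=
  Finset.sum_nonneg fun x _ => Finset.sum_nonneg fun z _ => hp0 (x, y, z)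

/-- Key conditional-expectation orthogonality identity:
`∑ p · h(y) · (ψ - CE ψ) = 0`. -/
lemma CE_orth (hp0 : ∀ w, 0 ≤ p w) (h : XT s → ℝ) (ψ : WT r s t → ℝ) :
    ∑ w : WT r s t, p w * (h w.2.1 * (ψ w - CE p ψ w.2.1)) = 0 := by
  rw [sum_W]
  refine Finset.sum_eq_zero fun y _ => ?_
  by_cases hq : qq p y = 0
  · refine Finset.sum_eq_zero fun x _ => Finset.sum_eq_zero fun z _ => ?_
    rw [p_zero_of_q hp0 hq x z]; ring
  · have key : ∑ x : XT r, ∑ z : XT t, p (x, y, z) * (ψ (x, y, z) - CE p ψ y) = 0 := by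
      have expand : ∀ x z, p (x, y, z) * (ψ (x, y, z) - CE p ψ y)
          = p (x, y, z) * ψ (x, y, z) - p (x, y, z) * CE p ψ y := fun x z => by ring
      simp only [expand, Finset.sum_sub_distrib, ← Finset.sum_mul]
      rw [show (∑ x : XT r, ∑ z : XT t, p (x, y, z)) = qq p y from rfl]
      rw [CE, ← mul_div_assoc, mul_div_cancel_left₀ _ hq, sub_self]
    calc ∑ x : XT r, ∑ z : XT t, p (x, y, z) * (h y * (ψ (x, y, z) - CE p ψ y))
        = h y * ∑ x : XT r, ∑ z : XT t, p (x, y, z) * (ψ (x, y, z) - CE p ψ y) := by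
          rw [Finset.mul_sum]
          refine Finset.sum_congr rfl fun x _ => ?_
          rw [Finset.mul_sum]
          exact Finset.sum_congr rfl fun z _ => by ring
      _ = 0 := by rw [key, mul_zero]

lemma CE_const {y : XT s} (hq : qq p y ≠ 0) (c : ℝ) :
    CE p (fun _ => c) y = c := by
  rw [CE]
  rw [show (∑ x : XT r, ∑ z : XT t, p (x, y, z) * c)
      = (∑ x : XT r, ∑ z : XT t, p (x, y, z)) * c by
    rw [Finset.sum_mul]; exact Finset.sum_congr rfl fun x _ => by rw [Finset.sum_mul]]
  rw [show (∑ x : XT r, ∑ z : XT t, p (x, y, z)) = qq p y from rfl]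
  field_simp

lemma covE_eq (hp1 : ∑ w : WT r s t, p w = 1) (f g : WT r s t → ℝ) :
    covE p f g = ∑ w : WT r s t, p w * ((f w - Ex p f) * (g w - Ex p g)) := by
  have expand : ∀ w, p w * ((f w - Ex p f) * (g w - Ex p g))
      = p w * (f w * g w) - (p w * f w) * Ex p g - Ex p f * (p w * g w)
        + (Ex p f * Ex p g) * p w := fun w => by ring
  simp only [expand, Finset.sum_sub_distrib, Finset.sum_add_distrib,
    ← Finset.sum_mul, ← Finset.mul_sum]
  rw [hp1, covE, Ex, Ex, Ex]
  ring


section MPAlg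

variable {n m W : Type*} [Fintype n] [Fintype m] [Fintype W]

lemma mp_unique (M : Matrix n m ℝ) (P1 P2 : Matrix m n ℝ)
    (h1 : IsMoorePenroseInv M P1) (h2 : IsMoorePenroseInv M P2) : P1 = P2 := by
  obtain ⟨a1, b1, c1, d1⟩ := h1
  obtain ⟨a2, b2, c2, d2⟩ := h2
  have hMP : M * P1 = M * P2 := by
    calc M * P1 = (M * P2 * M) * P1 := by rw [a2]
      _ = (M * P2) * (M * P1) := by simp only [Matrix.mul_assoc]
      _ = (M * P2)ᵀ * (M * P1)ᵀ := by rw [c1, c2]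
      _ = P2ᵀ * (M * P1 * M)ᵀ := by
          simp only [Matrix.transpose_mul, Matrix.mul_assoc]
      _ = P2ᵀ * Mᵀ := by rw [a1]
      _ = M * P2 := by rw [← Matrix.transpose_mul, c2]
  have hPM : P1 * M = P2 * M := by
    calc P1 * M = P1 * (M * P2 * M) := by rw [a2]
      _ = (P1 * M) * (P2 * M) := by simp only [Matrix.mul_assoc]
      _ = (P1 * M)ᵀ * (P2 * M)ᵀ := by rw [d1, d2]
      _ = (M * P1 * M)ᵀ * P2ᵀ := by
          simp only [Matrix.transpose_mul, Matrix.mul_assoc]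
      _ = Mᵀ * P2ᵀ := by rw [a1]
      _ = P2 * M := by rw [← Matrix.transpose_mul, d2]
  calc P1 = P1 * M * P1 := b1.symm
    _ = P1 * (M * P1) := by simp only [Matrix.mul_assoc]
    _ = P1 * (M * P2) := by rw [hMP]
    _ = (P1 * M) * P2 := by simp only [Matrix.mul_assoc]
    _ = (P2 * M) * P2 := by rw [hPM]
    _ = P2 := b2

lemma mp_symm (G P : Matrix n n ℝ) (hG : Gᵀ = G)
    (h : IsMoorePenroseInv G P) : Pᵀ = P := by
  obtain ⟨a, b, c, d⟩ := h
  have h2 : IsMoorePenroseInv G Pᵀ := by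
    refine ⟨?_, ?_, ?_, ?_⟩
    · calc G * Pᵀ * G = (Gᵀ * P * Gᵀ)ᵀ := by
            simp only [Matrix.transpose_mul, Matrix.transpose_transpose,
              Matrix.mul_assoc]
        _ = (G * P * G)ᵀ := by rw [hG]
        _ = Gᵀ := by rw [a]
        _ = G := hG
    · calc Pᵀ * G * Pᵀ = (P * Gᵀ * P)ᵀ := by
            simp only [Matrix.transpose_mul, Matrix.transpose_transpose,
              Matrix.mul_assoc]
        _ = (P * G * P)ᵀ := by rw [hG]
        _ = Pᵀ := by rw [b]
    · calc (G * Pᵀ)ᵀ = P * Gᵀ := by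
            simp only [Matrix.transpose_mul, Matrix.transpose_transpose]
        _ = P * G := by rw [hG]
        _ = (P * G)ᵀ := d.symm
        _ = Gᵀ * Pᵀ := by rw [Matrix.transpose_mul]
        _ = G * Pᵀ := by rw [hG]
    · calc (Pᵀ * G)ᵀ = Gᵀ * P := by
            simp only [Matrix.transpose_mul, Matrix.transpose_transpose]
        _ = G * P := by rw [hG]
        _ = (G * P)ᵀ := c.symm
        _ = Pᵀ * Gᵀ := by rw [Matrix.transpose_mul]
        _ = Pᵀ * G := by rw [hG]
  exact mp_unique G Pᵀ P h2 ⟨a, b, c, d⟩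

lemma tmul_self_zero {M : Matrix W n ℝ} (h : Mᵀ * M = 0) : M = 0 := by
  rw [← Matrix.conjTranspose_mul_self_eq_zero (A := M)]
  exact h

/-- If `P` is a symmetric Moore-Penrose inverse of `G = Bᵀ * B`,
then `B * P * Bᵀ * B = B`. -/
lemma proj_fix (Bm : Matrix W n ℝ) (P : Matrix n n ℝ)
    (hPsym : Pᵀ = P) (hGPG : (Bmᵀ * Bm) * P * (Bmᵀ * Bm) = Bmᵀ * Bm) :
    Bm * P * Bmᵀ * Bm = Bm := by
  have hGPG' : Bmᵀ * (Bm * (P * (Bmᵀ * Bm))) = Bmᵀ * Bm := by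
    simpa only [Matrix.mul_assoc] using hGPG
  have key : (Bm * P * (Bmᵀ * Bm) - Bm)ᵀ * (Bm * P * (Bmᵀ * Bm) - Bm) = 0 := by
    simp only [Matrix.transpose_sub, Matrix.sub_mul, Matrix.mul_sub,
      Matrix.transpose_mul, Matrix.transpose_transpose, hPsym,
      Matrix.mul_assoc, hGPG']
    abel
  have h0 : Bm * P * (Bmᵀ * Bm) - Bm = 0 := tmul_self_zero key
  have h1 : Bm * P * (Bmᵀ * Bm) = Bm := by
    rwa [sub_eq_zero] at h0
  calc Bm * P * Bmᵀ * Bm = Bm * P * (Bmᵀ * Bm) := by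
        simp only [Matrix.mul_assoc]
    _ = Bm := h1

end MPAlg


lemma gram_entry (hp0 : ∀ w, 0 ≤ p w) (hp1 : ∑ w : WT r s t, p w = 1)
    (f g : WT r s t → ℝ) :
    ∑ w : WT r s t, (sqp p w * (f w - Ex p f)) * (sqp p w * (g w - Ex p g))
      = covE p f g := by
  rw [covE_eq hp1]
  refine Finset.sum_congr rfl fun w _ => ?_
  have h : sqp p w * sqp p w = p w := Real.mul_self_sqrt (hp0 w)
  calc (sqp p w * (f w - Ex p f)) * (sqp p w * (g w - Ex p g))
      = (sqp p w * sqp p w) * ((f w - Ex p f) * (g w - Ex p g)) := by ring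
    _ = p w * ((f w - Ex p f) * (g w - Ex p g)) := by rw [h]

lemma q_eq_sum_pBC (y : XT s) : qq p y = ∑ z : XT t, pBC p y z := by
  rw [qq]
  exact Finset.sum_comm

lemma sum_p_psi (y : XT s) (ψ : XT s → XT t → ℝ) :
    ∑ x : XT r, ∑ z : XT t, p (x, y, z) * ψ y z
      = ∑ z : XT t, pBC p y z * ψ y z := by
  rw [Finset.sum_comm]
  refine Finset.sum_congr rfl fun z _ => ?_
  rw [pBC, Finset.sum_mul]

/-- Under conditional independence, `E[φ(X,Y)·(ψ(Y,Z) − E[ψ|Y])] = 0`. -/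
lemma ci_vanish (hp0 : ∀ w, 0 ≤ p w) (hci : CIp p)
    (φ : XT r → XT s → ℝ) (ψ : XT s → XT t → ℝ) :
    ∑ w : WT r s t, p w * (φ w.1 w.2.1 *
      (ψ w.2.1 w.2.2 - CE p (fun w => ψ w.2.1 w.2.2) w.2.1)) = 0 := by
  set ψ' : WT r s t → ℝ := fun w => ψ w.2.1 w.2.2 with hψ'
  rw [sum_W]
  refine Finset.sum_eq_zero fun y _ => ?_
  by_cases hq : qq p y = 0
  · refine Finset.sum_eq_zero fun x _ => Finset.sum_eq_zero fun z _ => ?_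
    rw [p_zero_of_q hp0 hq x z]; ring
  · have hqpos : 0 < qq p y := lt_of_le_of_ne
      (Finset.sum_nonneg fun x _ => Finset.sum_nonneg fun z _ => hp0 (x, y, z))
      (Ne.symm hq)
    have hCE : qq p y * CE p ψ' y = ∑ z : XT t, pBC p y z * ψ y z := by
      rw [CE, ← mul_div_assoc, mul_div_cancel_left₀ _ hq]
      exact sum_p_psi y ψ
    have hz : ∑ z : XT t, pBC p y z * (ψ y z - CE p ψ' y) = 0 := by
      have expand : ∀ z, pBC p y z * (ψ y z - CE p ψ' y)
          = pBC p y z * ψ y z - pBC p y z * CE p ψ' y := fun z => by ring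
      simp only [expand, Finset.sum_sub_distrib, ← Finset.sum_mul]
      rw [← q_eq_sum_pBC, hCE, sub_self]
    have key : qq p y * (∑ x : XT r, ∑ z : XT t,
        p (x, y, z) * (φ x y * (ψ y z - CE p ψ' y))) = 0 := by
      rw [Finset.mul_sum]
      refine Finset.sum_eq_zero fun x _ => ?_
      rw [Finset.mul_sum]
      have step : ∀ z, qq p y * (p (x, y, z) * (φ x y * (ψ y z - CE p ψ' y)))
          = (pAB p x y * φ x y) * (pBC p y z * (ψ y z - CE p ψ' y)) := by
        intro z
        have hc := hci x y z hqpos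
        calc qq p y * (p (x, y, z) * (φ x y * (ψ y z - CE p ψ' y)))
            = (p (x, y, z) * qq p y) * (φ x y * (ψ y z - CE p ψ' y)) := by ring
          _ = (pAB p x y * pBC p y z) * (φ x y * (ψ y z - CE p ψ' y)) := by rw [hc]
          _ = (pAB p x y * φ x y) * (pBC p y z * (ψ y z - CE p ψ' y)) := by ring
      rw [Finset.sum_congr rfl fun z _ => step z, ← Finset.mul_sum, hz, mul_zero]
    rcases mul_eq_zero.mp key with h | h
    · exact absurd h hq
    · exact h

lemma ci_to_D (hp0 : ∀ w, 0 ≤ p w) (hci : CIp p) (i : IdxL r s) (j : IdxR s t) :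
    Dval p i j = 0 := by
  have h := ci_vanish hp0 hci
    (fun x y => chi i.1.1 x * chi i.1.2 y - Ex p (FL t i))
    (fun y z => chi j.1.1 y * chi j.1.2 z - Ex p (FR r j))
  exact h


lemma q_eq_sum_pAB (y : XT s) : qq p y = ∑ x : XT r, pAB p x y := rfl

lemma sum_p_phi (y : XT s) (φ : XT r → ℝ) :
    ∑ x : XT r, ∑ z : XT t, p (x, y, z) * φ x = ∑ x : XT r, pAB p x y * φ x := by
  refine Finset.sum_congr rfl fun x _ => ?_
  rw [pAB, Finset.sum_mul]

lemma q_pos_of_p (hp0 : ∀ w, 0 ≤ p w) {x : XT r} {y : XT s} {z : XT t}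
    (h : 0 < p (x, y, z)) : 0 < qq p y := by
  have h1 : p (x, y, z) ≤ ∑ z' : XT t, p (x, y, z') :=
    Finset.single_le_sum (fun z' _ => hp0 (x, y, z')) (Finset.mem_univ z)
  have h2 : (∑ z' : XT t, p (x, y, z')) ≤ qq p y :=
    Finset.single_le_sum
      (f := fun x' => ∑ z' : XT t, p (x', y, z'))
      (fun x' _ => Finset.sum_nonneg fun z' _ => hp0 (x', y, z'))
      (Finset.mem_univ x)
  linarith

lemma CE_sub_const {y : XT s} (hq : qq p y ≠ 0) (ψ : WT r s t → ℝ) (c : ℝ) :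
    CE p (fun w => ψ w - c) y = CE p ψ y - c := by
  rw [CE, CE]
  have expand : ∀ x z, p (x, y, z) * (ψ (x, y, z) - c)
      = p (x, y, z) * ψ (x, y, z) - p (x, y, z) * c := fun x z => by ring
  simp only [expand, Finset.sum_sub_distrib, ← Finset.sum_mul]
  rw [show (∑ x : XT r, ∑ z : XT t, p (x, y, z)) = qq p y from rfl]
  field_simp

/-- From the vanishing of `Dval`, uncentered version. -/
lemma E1 (hp0 : ∀ w, 0 ≤ p w) (hD : ∀ i j, Dval p i j = 0)
    (i : IdxL r s) (j : IdxR s t) :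
    ∑ w : WT r s t, p w * (FL t i w * (FR r j w - CE p (FR r j) w.2.1)) = 0 := by
  have h1 := hD i j
  rw [Dval] at h1
  have horth := CE_orth hp0 (fun _ => Ex p (FL t i)) (gRf p j)
  have hsplit : ∀ w : WT r s t,
      p w * (gLf p i w * (gRf p j w - CE p (gRf p j) w.2.1))
      = p w * (FL t i w * (gRf p j w - CE p (gRf p j) w.2.1))
        - p w * (Ex p (FL t i) * (gRf p j w - CE p (gRf p j) w.2.1)) := by
    intro w; rw [gLf]; ring
  rw [Finset.sum_congr rfl fun w _ => hsplit w, Finset.sum_sub_distrib, horth,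
    sub_zero] at h1
  rw [← h1]
  refine Finset.sum_congr rfl fun w _ => ?_
  by_cases hw : p w = 0
  · rw [hw]; ring
  · have hpw : 0 < p w := lt_of_le_of_ne (hp0 w) (Ne.symm hw)
    obtain ⟨x, y, z⟩ := w
    have hqy : qq p y ≠ 0 := ne_of_gt (q_pos_of_p hp0 hpw)
    have : gRf p j (x, y, z) - CE p (gRf p j) y
        = FR r j (x, y, z) - CE p (FR r j) y := by
      rw [show gRf p j = fun w => FR r j w - Ex p (FR r j) from rfl]
      rw [CE_sub_const hqy (FR r j) (Ex p (FR r j))]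
      ring
    rw [this]

/-- The product-moment identity at every `y` with `qq > 0`. -/
lemma E2 (hp0 : ∀ w, 0 ≤ p w) (hD : ∀ i j, Dval p i j = 0)
    {y0 : XT s} (hq : 0 < qq p y0) (a : XT r) (c : XT t) :
    qq p y0 * (∑ x : XT r, ∑ z : XT t, p (x, y0, z) * (chi a x * chi c z))
      = (∑ x : XT r, pAB p x y0 * chi a x) * (∑ z : XT t, pBC p y0 z * chi c z) := by
  by_cases ha : a = fun _ => false
  · subst ha
    simp only [chi_const, one_mul, mul_one]
    rw [sum_p_psi y0 (fun _ z => chi c z), ← q_eq_sum_pAB]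
  by_cases hc : c = fun _ => false
  · subst hc
    simp only [chi_const, one_mul, mul_one]
    rw [sum_p_phi y0 (fun x => chi a x), ← q_eq_sum_pBC]
    ring
  -- main case: a, c nonconstant
  · set j0 : IdxR s t := ⟨((fun _ => false), c), hc⟩ with hj0
    have hFRj0 : ∀ w : WT r s t, FR r j0 w = chi c w.2.2 := by
      intro w; rw [FR]; simp [hj0, chi_const]
    set CEc : XT s → ℝ := CE p (FR r j0) with hCEc
    have hF : ∀ y : XT s, (∑ x : XT r, ∑ z : XT t,
        p (x, y, z) * (chi a x * (chi c z - CEc y))) = 0 := by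
      apply fourier_zero
      intro b1
      have h1 := E1 hp0 hD ⟨(a, b1), ha⟩ j0
      rw [sum_W] at h1
      rw [← h1]
      refine Finset.sum_congr rfl fun y _ => ?_
      rw [Finset.mul_sum]
      refine Finset.sum_congr rfl fun x _ => ?_
      rw [Finset.mul_sum]
      refine Finset.sum_congr rfl fun z _ => ?_
      rw [hFRj0 (x, y, z)]
      rw [show FL t (⟨(a, b1), ha⟩ : IdxL r s) (x, y, z) = chi a x * chi b1 y from rfl]
      ring
    have hqne : qq p y0 ≠ 0 := ne_of_gt hq
    have hCEval : qq p y0 * CEc y0 = ∑ z : XT t, pBC p y0 z * chi c z := by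
      rw [hCEc, CE, ← mul_div_assoc, mul_div_cancel_left₀ _ hqne]
      rw [show (∑ x : XT r, ∑ z : XT t, p (x, y0, z) * FR r j0 (x, y0, z))
          = ∑ x : XT r, ∑ z : XT t, p (x, y0, z) * chi c z by
        refine Finset.sum_congr rfl fun x _ => Finset.sum_congr rfl fun z _ => ?_
        rw [hFRj0 (x, y0, z)]]
      exact sum_p_psi y0 (fun _ z => chi c z)
    have hF0 := hF y0
    have hexp : ∀ x z, p (x, y0, z) * (chi a x * (chi c z - CEc y0))
        = p (x, y0, z) * (chi a x * chi c z) - p (x, y0, z) * chi a x * CEc y0 :=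
      fun x z => by ring
    rw [Finset.sum_congr rfl fun x _ => Finset.sum_congr rfl fun z _ => hexp x z] at hF0
    simp only [Finset.sum_sub_distrib, ← Finset.sum_mul] at hF0
    rw [sub_eq_zero] at hF0
    rw [show (∑ i : XT r, (∑ i_1 : XT t, p (i, y0, i_1)) * chi a i)
        = ∑ x : XT r, ∑ z : XT t, p (x, y0, z) * chi a x from
      Finset.sum_congr rfl fun x _ => Finset.sum_mul _ _ _] at hF0
    calc qq p y0 * (∑ x : XT r, ∑ z : XT t, p (x, y0, z) * (chi a x * chi c z))
        = qq p y0 * ((∑ x : XT r, ∑ z : XT t, p (x, y0, z) * chi a x) * CEc y0) := by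
          rw [hF0]
      _ = (∑ x : XT r, ∑ z : XT t, p (x, y0, z) * chi a x) * (qq p y0 * CEc y0) := by
          ring
      _ = (∑ x : XT r, pAB p x y0 * chi a x) * (∑ z : XT t, pBC p y0 z * chi c z) := by
          rw [hCEval, sum_p_phi y0 (fun x => chi a x)]

lemma D_to_ci (hp0 : ∀ w, 0 ≤ p w) (hD : ∀ i j, Dval p i j = 0) : CIp p := by
  intro x0 y0 z0 hq
  set G : XT r → XT t → ℝ :=
    fun x z => qq p y0 * p (x, y0, z) - pAB p x y0 * pBC p y0 z with hG
  have hT : ∀ (a : XT r) (c : XT t),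
      ∑ x : XT r, ∑ z : XT t, chi a x * chi c z * G x z = 0 := by
    intro a c
    have h := E2 hp0 hD hq a c
    rw [Finset.sum_mul_sum] at h
    rw [Finset.mul_sum] at h
    have : ∀ x, qq p y0 * (∑ z : XT t, p (x, y0, z) * (chi a x * chi c z))
        = ∑ z : XT t, qq p y0 * (p (x, y0, z) * (chi a x * chi c z)) :=
      fun x => Finset.mul_sum _ _ _
    rw [Finset.sum_congr rfl fun x _ => this x] at h
    have hGsum : ∀ x z, chi a x * chi c z * G x z
        = qq p y0 * (p (x, y0, z) * (chi a x * chi c z))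
          - (pAB p x y0 * chi a x) * (pBC p y0 z * chi c z) := by
      intro x z; rw [hG]; ring
    rw [Finset.sum_congr rfl fun x _ => Finset.sum_congr rfl fun z _ => hGsum x z]
    simp only [Finset.sum_sub_distrib]
    rw [h]
    simp
  have hz : ∀ (a : XT r) (z : XT t), ∑ x : XT r, chi a x * G x z = 0 := by
    intro a
    apply fourier_zero
    intro c
    have h := hT a c
    rw [Finset.sum_comm] at h
    rw [← h]
    refine Finset.sum_congr rfl fun z _ => ?_
    rw [Finset.mul_sum]
    exact Finset.sum_congr rfl fun x _ => by ring
  have hx : ∀ x : XT r, G x z0 = 0 :=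
    fourier_zero (fun x => G x z0) (fun a => hz a z0)
  have h0 : qq p y0 * p (x0, y0, z0) - pAB p x0 y0 * pBC p y0 z0 = 0 := hx x0
  linarith


lemma Ex_const (hp1 : ∑ w : WT r s t, p w = 1) (c : ℝ) : Ex p (fun _ => c) = c := by
  rw [Ex, ← Finset.sum_mul, hp1, one_mul]

lemma Ex_center (hp1 : ∑ w : WT r s t, p w = 1) (f : WT r s t → ℝ) :
    ∑ w : WT r s t, p w * (f w - Ex p f) = 0 := by
  have expand : ∀ w : WT r s t, p w * (f w - Ex p f)
      = p w * f w - Ex p f * p w := fun w => by ring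
  rw [Finset.sum_congr rfl fun w _ => expand w, Finset.sum_sub_distrib,
    ← Finset.mul_sum, hp1, mul_one, Ex, sub_self]

lemma sq_mul_self (hp0 : ∀ w, 0 ≤ p w) (w : WT r s t) : sqp p w * sqp p w = p w :=
  Real.mul_self_sqrt (hp0 w)

lemma dot_self_zero {f : WT r s t → ℝ} (h : f ⬝ᵥ f = 0) : f = 0 := by
  funext w
  have h2 := (Finset.sum_eq_zero_iff_of_nonneg
    (fun w _ => mul_self_nonneg (f w))).mp h w (Finset.mem_univ w)
  exact mul_self_eq_zero.mp h2

noncomputable def uvF (p : WT r s t → ℝ) (j : IdxR s t) : WT r s t → ℝ :=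
  fun w => sqp p w * CE p (gRf p j) w.2.1
noncomputable def rvF (p : WT r s t → ℝ) (j : IdxR s t) : WT r s t → ℝ :=
  fun w => Rmat p w j
noncomputable def BcolF (p : WT r s t → ℝ) (k : IdxB s) : WT r s t → ℝ :=
  fun w => Bmat p w k
noncomputable def mvalF (p : WT r s t → ℝ) (Λ : XT s) : ℝ :=
  Ex p (fun w : WT r s t => chi Λ w.2.1)

lemma mvalF_const (hp1 : ∑ w : WT r s t, p w = 1) :
    mvalF p ((fun _ => false) : XT s) = 1 := by
  have h : (fun w : WT r s t => chi ((fun _ => false) : XT s) w.2.1)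
      = fun _ => (1:ℝ) := funext fun w => chi_const w.2.1
  show Ex p (fun w : WT r s t => chi ((fun _ => false) : XT s) w.2.1) = 1
  rw [h]
  exact Ex_const hp1 1

lemma mulVec_dot (M : Matrix (WT r s t) (WT r s t) ℝ) (x y : WT r s t → ℝ) :
    (M *ᵥ x) ⬝ᵥ y = x ⬝ᵥ (Mᵀ *ᵥ y) := by
  simp only [dotProduct, Matrix.mulVec, Matrix.transpose_apply,
    Finset.sum_mul, Finset.mul_sum]
  rw [Finset.sum_comm]
  exact Finset.sum_congr rfl fun w _ => Finset.sum_congr rfl fun w' _ => by ring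

lemma dot_ru_B (hp0 : ∀ w, 0 ≤ p w) (j : IdxR s t) (k : IdxB s) :
    (rvF p j - uvF p j) ⬝ᵥ BcolF p k = 0 := by
  rw [sub_dotProduct]
  have h1 : rvF p j ⬝ᵥ BcolF p k - uvF p j ⬝ᵥ BcolF p k
      = ∑ w : WT r s t, p w * ((gBf p k w) * (gRf p j w - CE p (gRf p j) w.2.1)) := by
    rw [dotProduct, dotProduct, ← Finset.sum_sub_distrib]
    refine Finset.sum_congr rfl fun w _ => ?_
    have hs := sq_mul_self hp0 w
    simp only [rvF, uvF, BcolF, Bmat, Rmat, Matrix.of_apply]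
    linear_combination (gBf p k w * (gRf p j w - CE p (gRf p j) w.2.1)) * hs
  rw [h1]
  have h2 := CE_orth hp0 (fun y => chi k.1 y - Ex p (FB r t k)) (gRf p j)
  rw [← h2]
  exact Finset.sum_congr rfl fun w _ => by rw [gBf]; rfl

lemma dot_sq_B (hp0 : ∀ w, 0 ≤ p w) (hp1 : ∑ w : WT r s t, p w = 1) (k : IdxB s) :
    sqp p ⬝ᵥ BcolF p k = 0 := by
  rw [dotProduct]
  have h1 : ∀ w : WT r s t, sqp p w * BcolF p k w
      = p w * (FB r t k w - Ex p (FB r t k)) := by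
    intro w
    have hs := sq_mul_self hp0 w
    simp only [BcolF, Bmat, Matrix.of_apply]
    rw [show gBf p k w = FB r t k w - Ex p (FB r t k) from rfl]
    linear_combination (FB r t k w - Ex p (FB r t k)) * hs
  rw [Finset.sum_congr rfl fun w _ => h1 w]
  exact Ex_center hp1 (FB r t k)

lemma dot_sq_u (hp0 : ∀ w, 0 ≤ p w) (hp1 : ∑ w : WT r s t, p w = 1) (j : IdxR s t) :
    sqp p ⬝ᵥ uvF p j = 0 := by
  have h1 : sqp p ⬝ᵥ uvF p j = ∑ w : WT r s t, p w * CE p (gRf p j) w.2.1 := by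
    rw [dotProduct]
    refine Finset.sum_congr rfl fun w _ => ?_
    have hs := sq_mul_self hp0 w
    simp only [uvF]
    linear_combination (CE p (gRf p j) w.2.1) * hs
  have h2 := CE_orth hp0 (fun _ => (1:ℝ)) (gRf p j)
  have h3 : ∑ w : WT r s t, p w * CE p (gRf p j) w.2.1
      = ∑ w : WT r s t, p w * gRf p j w := by
    have h4 : ∑ w : WT r s t, (p w * gRf p j w - p w * CE p (gRf p j) w.2.1) = 0 := by
      rw [← h2]
      exact Finset.sum_congr rfl fun w _ => by ring
    rw [Finset.sum_sub_distrib] at h4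
    linarith
  rw [h1, h3]
  exact Ex_center hp1 (FR r j)

lemma dot_sq_sq (hp0 : ∀ w, 0 ≤ p w) (hp1 : ∑ w : WT r s t, p w = 1) :
    sqp p ⬝ᵥ sqp p = 1 := by
  rw [dotProduct, Finset.sum_congr rfl fun w _ => sq_mul_self hp0 w, hp1]

lemma hperK (f : WT r s t → ℝ) (hf : ∀ k, f ⬝ᵥ BcolF p k = 0) :
    ∀ v ∈ Submodule.span ℝ (Set.range (BcolF p)), f ⬝ᵥ v = 0 := by
  intro v hv
  induction hv using Submodule.span_induction with
  | mem x hx => obtain ⟨k, rfl⟩ := hx; exact hf k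
  | zero => exact dotProduct_zero _
  | add x y _ _ hx hy => rw [dotProduct_add, hx, hy, add_zero]
  | smul a x _ hx => rw [dotProduct_smul, hx, smul_zero]

lemma u_mem_span (hp0 : ∀ w, 0 ≤ p w) (hp1 : ∑ w : WT r s t, p w = 1) (j : IdxR s t) :
    uvF p j ∈ Submodule.span ℝ (Set.range (BcolF p)) := by
  classical
  have hdecomp : uvF p j = (∑ Λ : XT s, ((∑ b, chi Λ b * CE p (gRf p j) b) / 2^s) •
        (fun w : WT r s t => sqp p w * (chi Λ w.2.1 - mvalF p Λ)))
      + (∑ Λ : XT s, ((∑ b, chi Λ b * CE p (gRf p j) b) / 2^s) * mvalF p Λ) • sqp p := by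
    funext w
    have hfe := fourier_expand (CE p (gRf p j)) w.2.1
    rw [Pi.add_apply, Finset.sum_apply, Pi.smul_apply, smul_eq_mul, uvF, hfe,
      Finset.mul_sum, Finset.sum_mul, ← Finset.sum_add_distrib]
    refine Finset.sum_congr rfl fun Λ _ => ?_
    rw [Pi.smul_apply, smul_eq_mul]
    ring
  rw [hdecomp]
  have hv : (∑ Λ : XT s, ((∑ b, chi Λ b * CE p (gRf p j) b) / 2^s) •
      (fun w : WT r s t => sqp p w * (chi Λ w.2.1 - mvalF p Λ)))
      ∈ Submodule.span ℝ (Set.range (BcolF p)) := by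
    refine Submodule.sum_mem _ fun Λ _ => Submodule.smul_mem _ _ ?_
    by_cases hΛ : Λ = fun _ => false
    · have hz : (fun w : WT r s t => sqp p w * (chi Λ w.2.1 - mvalF p Λ))
          = (0 : WT r s t → ℝ) := by
        funext w
        rw [hΛ, chi_const]
        rw [mvalF_const hp1]
        simp
      rw [hz]
      exact Submodule.zero_mem _
    · have hb : (fun w : WT r s t => sqp p w * (chi Λ w.2.1 - mvalF p Λ))
          = BcolF p ⟨Λ, hΛ⟩ := rfl
      rw [hb]
      exact Submodule.subset_span ⟨⟨Λ, hΛ⟩, rfl⟩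
  have hcoef0 : (∑ Λ : XT s, ((∑ b, chi Λ b * CE p (gRf p j) b) / 2^s) * mvalF p Λ) = 0 := by
    have h5 : sqp p ⬝ᵥ uvF p j
        = sqp p ⬝ᵥ (∑ Λ : XT s, ((∑ b, chi Λ b * CE p (gRf p j) b) / 2^s) •
            (fun w : WT r s t => sqp p w * (chi Λ w.2.1 - mvalF p Λ)))
          + (∑ Λ : XT s, ((∑ b, chi Λ b * CE p (gRf p j) b) / 2^s) * mvalF p Λ)
            * (sqp p ⬝ᵥ sqp p) := by
      rw [← smul_eq_mul, ← dotProduct_smul, ← dotProduct_add, ← hdecomp]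
    rw [dot_sq_u hp0 hp1 j, hperK _ (dot_sq_B hp0 hp1) _ hv, dot_sq_sq hp0 hp1,
      mul_one, zero_add] at h5
    exact h5.symm
  rw [hcoef0, zero_smul, add_zero]
  exact hv

/-- The key projection identity. -/
lemma schur_entry (hp0 : ∀ w, 0 ≤ p w) (hp1 : ∑ w : WT r s t, p w = 1)
    (SBplus : Matrix (IdxB s) (IdxB s) ℝ)
    (hMP : IsMoorePenroseInv ((Bmat p)ᵀ * Bmat p) SBplus) (i : IdxL r s) (j : IdxR s t) :
    ((Lmat p)ᵀ * Rmat p - ((Lmat p)ᵀ * Bmat p) * SBplus * ((Bmat p)ᵀ * Rmat p)) i j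
      = Dval p i j := by
  classical
  have hGsym : ((Bmat p)ᵀ * Bmat p)ᵀ = (Bmat p)ᵀ * Bmat p := by
    rw [Matrix.transpose_mul, Matrix.transpose_transpose]
  have hPsym : SBplusᵀ = SBplus := mp_symm _ _ hGsym hMP
  have hfix : Bmat p * SBplus * (Bmat p)ᵀ * Bmat p = Bmat p :=
    proj_fix (Bmat p) SBplus hPsym hMP.1
  set Pm : Matrix (WT r s t) (WT r s t) ℝ := Bmat p * SBplus * (Bmat p)ᵀ with hPm
  have hPmsym : Pmᵀ = Pm := by
    rw [hPm, Matrix.transpose_mul, Matrix.transpose_mul, Matrix.transpose_transpose,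
      hPsym, Matrix.mul_assoc]
  have hPmBcol : ∀ k, Pm *ᵥ BcolF p k = BcolF p k := by
    intro k
    funext w
    have h1 : (Pm *ᵥ BcolF p k) w = (Pm * Bmat p) w k := by
      rw [Matrix.mulVec, Matrix.mul_apply, dotProduct]
      rfl
    rw [h1, show Pm * Bmat p = Bmat p from hfix]
    rfl
  have hfixU : ∀ v ∈ Submodule.span ℝ (Set.range (BcolF p)), Pm *ᵥ v = v := by
    intro v hv
    induction hv using Submodule.span_induction with
    | mem x hx => obtain ⟨k, rfl⟩ := hx; exact hPmBcol k
    | zero => exact Matrix.mulVec_zero _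
    | add x y _ _ hx hy => rw [Matrix.mulVec_add, hx, hy]
    | smul a x _ hx => rw [Matrix.mulVec_smul, hx]
  have hmemBmV : ∀ v : IdxB s → ℝ, Bmat p *ᵥ v ∈ Submodule.span ℝ (Set.range (BcolF p)) := by
    intro v
    have h1 : Bmat p *ᵥ v = ∑ k : IdxB s, v k • BcolF p k := by
      funext w
      rw [Matrix.mulVec, dotProduct, Finset.sum_apply]
      refine Finset.sum_congr rfl fun k _ => ?_
      rw [Pi.smul_apply, smul_eq_mul, BcolF]
      ring
    rw [h1]
    exact Submodule.sum_mem _ fun k _ =>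
      Submodule.smul_mem _ _ (Submodule.subset_span ⟨k, rfl⟩)
  have hPmmem : ∀ v : WT r s t → ℝ, Pm *ᵥ v ∈ Submodule.span ℝ (Set.range (BcolF p)) := by
    intro v
    rw [hPm, ← Matrix.mulVec_mulVec, ← Matrix.mulVec_mulVec]
    exact hmemBmV _
  have humem := u_mem_span hp0 hp1 j
  have hKP : Pm *ᵥ rvF p j = uvF p j := by
    have hmem1 : Pm *ᵥ rvF p j ∈ Submodule.span ℝ (Set.range (BcolF p)) := hPmmem _
    have hd : Pm *ᵥ rvF p j - uvF p j = Pm *ᵥ (rvF p j - uvF p j) := by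
      rw [Matrix.mulVec_sub, hfixU _ humem]
    have hdU : Pm *ᵥ rvF p j - uvF p j ∈ Submodule.span ℝ (Set.range (BcolF p)) :=
      Submodule.sub_mem _ hmem1 humem
    have hzero : (Pm *ᵥ rvF p j - uvF p j) ⬝ᵥ (Pm *ᵥ rvF p j - uvF p j) = 0 := by
      calc (Pm *ᵥ rvF p j - uvF p j) ⬝ᵥ (Pm *ᵥ rvF p j - uvF p j)
          = (Pm *ᵥ (rvF p j - uvF p j)) ⬝ᵥ (Pm *ᵥ rvF p j - uvF p j) := by
            rw [← hd]
        _ = (rvF p j - uvF p j) ⬝ᵥ (Pmᵀ *ᵥ (Pm *ᵥ rvF p j - uvF p j)) :=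
            mulVec_dot _ _ _
        _ = (rvF p j - uvF p j) ⬝ᵥ (Pm *ᵥ rvF p j - uvF p j) := by
            rw [hPmsym, hfixU _ hdU]
        _ = 0 := hperK _ (dot_ru_B hp0 j) _ hdU
    have hfin := dot_self_zero hzero
    rwa [sub_eq_zero] at hfin
  have hassoc : ((Lmat p)ᵀ * Bmat p) * SBplus * ((Bmat p)ᵀ * Rmat p)
      = (Lmat p)ᵀ * (Pm * Rmat p) := by
    rw [hPm]; simp only [Matrix.mul_assoc]
  rw [Matrix.sub_apply, hassoc]
  have h1 : ((Lmat p)ᵀ * Rmat p) i j = (fun w => Lmat p w i) ⬝ᵥ rvF p j := by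
    rw [Matrix.mul_apply, dotProduct]
    exact Finset.sum_congr rfl fun w _ => by rw [Matrix.transpose_apply]; rfl
  have h2 : ((Lmat p)ᵀ * (Pm * Rmat p)) i j = (fun w => Lmat p w i) ⬝ᵥ (Pm *ᵥ rvF p j) := by
    rw [Matrix.mul_apply, dotProduct]
    refine Finset.sum_congr rfl fun w _ => ?_
    rw [Matrix.transpose_apply, Matrix.mul_apply, Matrix.mulVec, dotProduct]
    rfl
  rw [h1, h2, hKP, ← dotProduct_sub, Dval, dotProduct]
  refine Finset.sum_congr rfl fun w _ => ?_
  have hs := sq_mul_self hp0 w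
  rw [Pi.sub_apply]
  simp only [uvF, rvF, Lmat, Rmat, Matrix.of_apply]
  linear_combination (gLf p i w * (gRf p j w - CE p (gRf p j) w.2.1)) * hs


lemma gramBB (hp0 : ∀ w, 0 ≤ p w) (hp1 : ∑ w : WT r s t, p w = 1) :
    (Matrix.of fun i j => covE p (FB r t i) (FB r t j)) = (Bmat p)ᵀ * Bmat p := by
  ext i j
  rw [Matrix.of_apply, Matrix.mul_apply, ← gram_entry hp0 hp1 (FB r t i) (FB r t j)]
  exact Finset.sum_congr rfl fun w _ => by rw [Matrix.transpose_apply]; rfl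

lemma gramLB (hp0 : ∀ w, 0 ≤ p w) (hp1 : ∑ w : WT r s t, p w = 1) :
    (Matrix.of fun i j => covE p (FL t i) (FB r t j)) = (Lmat p)ᵀ * Bmat p := by
  ext i j
  rw [Matrix.of_apply, Matrix.mul_apply, ← gram_entry hp0 hp1 (FL t i) (FB r t j)]
  exact Finset.sum_congr rfl fun w _ => by rw [Matrix.transpose_apply]; rfl

lemma gramBR (hp0 : ∀ w, 0 ≤ p w) (hp1 : ∑ w : WT r s t, p w = 1) :
    (Matrix.of fun i j => covE p (FB r t i) (FR r j)) = (Bmat p)ᵀ * Rmat p := by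
  ext i j
  rw [Matrix.of_apply, Matrix.mul_apply, ← gram_entry hp0 hp1 (FB r t i) (FR r j)]
  exact Finset.sum_congr rfl fun w _ => by rw [Matrix.transpose_apply]; rfl

lemma gramLR (hp0 : ∀ w, 0 ≤ p w) (hp1 : ∑ w : WT r s t, p w = 1) :
    (Matrix.of fun i j => covE p (FL t i) (FR r j)) = (Lmat p)ᵀ * Rmat p := by
  ext i j
  rw [Matrix.of_apply, Matrix.mul_apply, ← gram_entry hp0 hp1 (FL t i) (FR r j)]
  exact Finset.sum_congr rfl fun w _ => by rw [Matrix.transpose_apply]; rfl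

theorem core (p : WT r s t → ℝ) (hp0 : ∀ w, 0 ≤ p w) (hp1 : ∑ w : WT r s t, p w = 1)
    (SBplus : Matrix (IdxB s) (IdxB s) ℝ)
    (hMP : IsMoorePenroseInv (Matrix.of fun i j => covE p (FB r t i) (FB r t j)) SBplus) :
    CIp p ↔ (Matrix.of fun (i : IdxL r s) (j : IdxR s t) => covE p (FL t i) (FR r j))
      - (Matrix.of fun i j => covE p (FL t i) (FB r t j)) * SBplus
        * (Matrix.of fun i j => covE p (FB r t i) (FR r j)) = 0 := by
  rw [gramBB hp0 hp1] at hMP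
  rw [gramLR hp0 hp1, gramLB hp0 hp1, gramBR hp0 hp1]
  constructor
  · intro hci
    ext i j
    rw [Matrix.zero_apply, schur_entry hp0 hp1 SBplus hMP i j]
    exact ci_to_D hp0 hci i j
  · intro h0
    apply D_to_ci hp0
    intro i j
    rw [← schur_entry hp0 hp1 SBplus hMP i j, h0, Matrix.zero_apply]


noncomputable def emb {n : ℕ} (y : XT n) : Fin n → ℝ := fun j => sg (y j)

noncomputable def sgn {n : ℕ} (v : Fin n → ℝ) : XT n := fun j => if v j = 1 then true else false

lemma vec_eq_emb {n : ℕ} (v : Fin n → ℝ) (hv : ∀ j, v j = 1 ∨ v j = -1) (y : XT n) :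
    v = emb y ↔ sgn v = y := by
  constructor
  · rintro rfl
    funext j
    cases hy : y j
    · rw [sgn, show emb y j = sg (y j) from rfl, hy]
      norm_num [sg]
    · rw [sgn, show emb y j = sg (y j) from rfl, hy]
      norm_num [sg]
  · rintro rfl
    funext j
    rcases hv j with h | h
    · rw [show emb (sgn v) j = sg (sgn v j) from rfl, sgn, if_pos h, h]; rfl
    · rw [show emb (sgn v) j = sg (sgn v j) from rfl, sgn,
        if_neg (by rw [h]; norm_num), h]; rfl

lemma mono_eq_chi {Ω : Type*} {n : ℕ} (X : Ω → Fin n → ℝ)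
    (hval : ∀ ω j, X ω j = 1 ∨ X ω j = -1) (Λ : Fin n → Bool) (ω : Ω) :
    mono n X Λ ω = chi Λ (sgn (X ω)) := by
  rw [mono, chi]
  refine Finset.prod_congr rfl fun j _ => ?_
  by_cases hΛ : Λ j
  · rw [if_pos hΛ, if_pos hΛ]
    rcases hval ω j with h | h
    · rw [h, sgn, show sg (if X ω j = 1 then true else false) = sg true from by rw [if_pos h]]
      rfl
    · rw [h, sgn, show sg (if X ω j = 1 then true else false) = sg false from by
        rw [if_neg (by rw [h]; norm_num)]]
      rfl
  · rw [if_neg hΛ, if_neg hΛ]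

lemma meas_sgn {Ω : Type*} [MeasurableSpace Ω] {n : ℕ} {X : Ω → Fin n → ℝ}
    (hX : Measurable X) : Measurable (fun ω => sgn (X ω)) := by
  apply measurable_pi_lambda
  intro j
  have hXj : Measurable fun ω => X ω j := (measurable_pi_apply j).comp hX
  have h1 : MeasurableSet {ω | X ω j = 1} := hXj (measurableSet_singleton 1)
  apply measurable_to_countable
  intro ω0
  by_cases h : X ω0 j = 1
  · have he : (fun ω => sgn (X ω) j) ⁻¹' {sgn (X ω0) j} = {ω | X ω j = 1} := by
      ext ω; simp [sgn, h]
    rw [he]; exact h1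
  · have he : (fun ω => sgn (X ω) j) ⁻¹' {sgn (X ω0) j} = {ω | X ω j = 1}ᶜ := by
      ext ω; simp [sgn, h]
    rw [he]; exact h1.compl

lemma toReal_measure_eq {ι : Type*} [Fintype ι] {μ : Measure (WT r s t)}
    [IsFiniteMeasure μ] (f : ι → WT r s t) (hf : Function.Injective f)
    (T : Set (WT r s t)) (hT : ∀ w, w ∈ T ↔ ∃ i, f i = w) :
    (μ T).toReal = ∑ i : ι, (μ {f i}).toReal := by
  have hT2 : T = ⋃ i ∈ (Finset.univ : Finset ι), ({f i} : Set (WT r s t)) := by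
    ext w
    simp only [Set.mem_iUnion, Finset.mem_univ, Set.mem_singleton_iff, exists_prop,
      true_and, hT w]
    exact ⟨fun ⟨i, hi⟩ => ⟨i, hi.symm⟩, fun ⟨i, hi⟩ => ⟨i, hi.symm⟩⟩
  rw [hT2, measure_biUnion_finset ?_ (fun i _ => (Set.to_countable _).measurableSet),
    ENNReal.toReal_sum (fun i _ => measure_ne_top μ _)]
  intro i _ j _ hij
  exact Set.disjoint_singleton.mpr fun h => hij (hf h)


end S14

open S14

/-- BEGIN, Schur-complement form: `A ⟂ C | B` iff the `(𝓛, 𝓡)` block of the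
generalized Schur complement `S = Σ[𝓛∪𝓡,𝓛∪𝓡] − Σ[𝓛∪𝓡,𝓑] Σ_𝓑⁺ Σ[𝓑,𝓛∪𝓡]`
vanishes, i.e. `Σ[𝓛,𝓡] − Σ[𝓛,𝓑] Σ_𝓑⁺ Σ[𝓑,𝓡] = 0`. -/
theorem stmt14 {Ω : Type*} [MeasurableSpace Ω] (ℙ : Measure Ω)
    [IsProbabilityMeasure ℙ] (r s t : ℕ)
    (A : Ω → Fin r → ℝ) (B : Ω → Fin s → ℝ) (C : Ω → Fin t → ℝ)
    (hA : Measurable A) (hB : Measurable B) (hC : Measurable C)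
    (hvalA : ∀ ω j, A ω j = 1 ∨ A ω j = -1)
    (hvalB : ∀ ω j, B ω j = 1 ∨ B ω j = -1)
    (hvalC : ∀ ω j, C ω j = 1 ∨ C ω j = -1)
    (fB : IdxB s → Ω → ℝ) (hfB : ∀ i, fB i = mono s B i.1)
    (fL : IdxL r s → Ω → ℝ)
    (hfL : ∀ i, fL i = fun ω => mono r A i.1.1 ω * mono s B i.1.2 ω)
    (fR : IdxR s t → Ω → ℝ)
    (hfR : ∀ i, fR i = fun ω => mono s B i.1.1 ω * mono t C i.1.2 ω)
    (SB : Matrix (IdxB s) (IdxB s) ℝ) (hSB : SB = Matrix.of fun i j => cov ℙ (fB i) (fB j))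
    (SLB : Matrix (IdxL r s) (IdxB s) ℝ) (hSLB : SLB = Matrix.of fun i j => cov ℙ (fL i) (fB j))
    (SBR : Matrix (IdxB s) (IdxR s t) ℝ) (hSBR : SBR = Matrix.of fun i j => cov ℙ (fB i) (fR j))
    (SLR : Matrix (IdxL r s) (IdxR s t) ℝ) (hSLR : SLR = Matrix.of fun i j => cov ℙ (fL i) (fR j))
    -- `SBplus` is the Moore–Penrose inverse `Σ_𝓑⁺`
    (SBplus : Matrix (IdxB s) (IdxB s) ℝ) (hSBplus : IsMoorePenroseInv SB SBplus) :
    CondIndepDiscrete ℙ A B C ↔ SLR - SLB * SBplus * SBR = 0 := by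
  classical
  set Smap : Ω → WT r s t := fun ω => (sgn (A ω), sgn (B ω), sgn (C ω)) with hSmap
  have hSmeas : Measurable Smap :=
    (meas_sgn hA).prodMk ((meas_sgn hB).prodMk (meas_sgn hC))
  set μ' : Measure (WT r s t) := ℙ.map Smap with hμ'
  haveI : IsProbabilityMeasure μ' := Measure.isProbabilityMeasure_map hSmeas.aemeasurable
  set p : WT r s t → ℝ := fun w => (μ' {w}).toReal with hp
  have hmap : ∀ S : Set (WT r s t), μ' S = ℙ (Smap ⁻¹' S) :=
    fun S => Measure.map_apply hSmeas (Set.to_countable S).measurableSet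
  have hp0 : ∀ w, 0 ≤ p w := fun w => ENNReal.toReal_nonneg
  have hp1 : ∑ w : WT r s t, p w = 1 := by
    have h := toReal_measure_eq (μ := μ') (fun w : WT r s t => w)
      Function.injective_id Set.univ (fun w => ⟨fun _ => ⟨w, rfl⟩, fun _ => trivial⟩)
    rw [measure_univ, ENNReal.toReal_one] at h
    exact h.symm
  -- integral bridge
  have int_eq : ∀ F : WT r s t → ℝ, ∫ ω, F (Smap ω) ∂ℙ = ∑ w : WT r s t, p w * F w := by
    intro F
    rw [← integral_map hSmeas.aemeasurable (measurable_of_countable F).aestronglyMeasurable]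
    rw [integral_fintype Integrable.of_finite]
    exact Finset.sum_congr rfl fun w _ => by rw [smul_eq_mul]; rfl
  have cov_eq : ∀ F G : WT r s t → ℝ,
      cov ℙ (fun ω => F (Smap ω)) (fun ω => G (Smap ω)) = covE p F G := by
    intro F G
    rw [cov, covE, Ex, Ex, Ex, ← int_eq F, ← int_eq G, ← int_eq (fun w => F w * G w)]
  -- function bridges
  have hfB' : ∀ i, fB i = fun ω => FB r t i (Smap ω) := by
    intro i
    rw [hfB i]
    funext ω
    rw [mono_eq_chi B hvalB]
    rfl
  have hfL' : ∀ i, fL i = fun ω => FL t i (Smap ω) := by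
    intro i
    rw [hfL i]
    funext ω
    rw [mono_eq_chi A hvalA, mono_eq_chi B hvalB]
    rfl
  have hfR' : ∀ j, fR j = fun ω => FR r j (Smap ω) := by
    intro j
    rw [hfR j]
    funext ω
    rw [mono_eq_chi B hvalB, mono_eq_chi C hvalC]
    rfl
  -- matrix bridges
  have hSB' : SB = Matrix.of fun i j => covE p (FB r t i) (FB r t j) := by
    rw [hSB]; ext i j
    simp only [Matrix.of_apply]
    rw [hfB' i, hfB' j, cov_eq]
  have hSLB' : SLB = Matrix.of fun i j => covE p (FL t i) (FB r t j) := by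
    rw [hSLB]; ext i j
    simp only [Matrix.of_apply]
    rw [hfL' i, hfB' j, cov_eq]
  have hSBR' : SBR = Matrix.of fun i j => covE p (FB r t i) (FR r j) := by
    rw [hSBR]; ext i j
    simp only [Matrix.of_apply]
    rw [hfB' i, hfR' j, cov_eq]
  have hSLR' : SLR = Matrix.of fun i j => covE p (FL t i) (FR r j) := by
    rw [hSLR]; ext i j
    simp only [Matrix.of_apply]
    rw [hfL' i, hfR' j, cov_eq]
  rw [hSB'] at hSBplus
  rw [hSLB', hSBR', hSLR']
  rw [← core p hp0 hp1 SBplus hSBplus]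
  -- measure-value bridges
  have hq_val : ∀ y : XT s, (ℙ {ω | B ω = emb y}).toReal = qq p y := by
    intro y
    have hset : {ω | B ω = emb y} = Smap ⁻¹' {w : WT r s t | w.2.1 = y} := by
      ext ω
      exact vec_eq_emb (B ω) (hvalB ω) y
    rw [hset, ← hmap]
    have h := toReal_measure_eq (μ := μ') (fun xz : XT r × XT t => ((xz.1, y, xz.2) : WT r s t))
      (fun i j hij => Prod.ext (congrArg (fun w : WT r s t => w.1) hij)
        (congrArg (fun w : WT r s t => w.2.2) hij))
      {w : WT r s t | w.2.1 = y}
      (fun w => ⟨fun hw => ⟨(w.1, w.2.2), by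
          simp only [Set.mem_setOf_eq] at hw
          rw [← hw]⟩,
        by rintro ⟨i, rfl⟩; rfl⟩)
    rw [h, qq, Fintype.sum_prod_type]
  have hp3_val : ∀ (x : XT r) (y : XT s) (z : XT t),
      (ℙ {ω | A ω = emb x ∧ C ω = emb z ∧ B ω = emb y}).toReal = p (x, y, z) := by
    intro x y z
    have hset : {ω | A ω = emb x ∧ C ω = emb z ∧ B ω = emb y}
        = Smap ⁻¹' {((x, y, z) : WT r s t)} := by
      ext ω
      simp only [Set.mem_setOf_eq, Set.mem_preimage, Set.mem_singleton_iff, Prod.mk.injEq,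
        hSmap]
      rw [vec_eq_emb (A ω) (hvalA ω) x, vec_eq_emb (C ω) (hvalC ω) z,
        vec_eq_emb (B ω) (hvalB ω) y]
      tauto
    rw [hset, ← hmap]
  have hpab_val : ∀ (x : XT r) (y : XT s),
      (ℙ {ω | A ω = emb x ∧ B ω = emb y}).toReal = pAB p x y := by
    intro x y
    have hset : {ω | A ω = emb x ∧ B ω = emb y}
        = Smap ⁻¹' {w : WT r s t | w.1 = x ∧ w.2.1 = y} := by
      ext ω
      simp only [Set.mem_setOf_eq, Set.mem_preimage, hSmap]
      rw [vec_eq_emb (A ω) (hvalA ω) x, vec_eq_emb (B ω) (hvalB ω) y]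
    rw [hset, ← hmap]
    have h := toReal_measure_eq (μ := μ') (fun z : XT t => ((x, y, z) : WT r s t))
      (fun i j hij => congrArg (fun w : WT r s t => w.2.2) hij)
      {w : WT r s t | w.1 = x ∧ w.2.1 = y}
      (fun w => by
        constructor
        · rintro ⟨h1, h2⟩
          exact ⟨w.2.2, by rw [← h1, ← h2]⟩
        · rintro ⟨i, rfl⟩; exact ⟨rfl, rfl⟩)
    rw [h, pAB]
  have hpbc_val : ∀ (y : XT s) (z : XT t),
      (ℙ {ω | C ω = emb z ∧ B ω = emb y}).toReal = pBC p y z := by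
    intro y z
    have hset : {ω | C ω = emb z ∧ B ω = emb y}
        = Smap ⁻¹' {w : WT r s t | w.2.2 = z ∧ w.2.1 = y} := by
      ext ω
      simp only [Set.mem_setOf_eq, Set.mem_preimage, hSmap]
      rw [vec_eq_emb (C ω) (hvalC ω) z, vec_eq_emb (B ω) (hvalB ω) y]
    rw [hset, ← hmap]
    have h := toReal_measure_eq (μ := μ') (fun x : XT r => ((x, y, z) : WT r s t))
      (fun i j hij => congrArg (fun w : WT r s t => w.1) hij)
      {w : WT r s t | w.2.2 = z ∧ w.2.1 = y}
      (fun w => by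
        constructor
        · rintro ⟨h1, h2⟩
          exact ⟨w.1, by rw [← h1, ← h2]⟩
        · rintro ⟨i, rfl⟩; exact ⟨rfl, rfl⟩)
    rw [h, pBC]
  -- final equivalence : CondIndepDiscrete ↔ CIp
  constructor
  · intro hCI x y z hq
    have hqB : 0 < (ℙ {ω | B ω = emb y}).toReal := by rw [hq_val y]; exact hq
    have hE := hCI (emb x) (emb y) (emb z) hqB
    rw [hq_val y, hp3_val x y z, hpab_val x y, hpbc_val y z] at hE
    have hqne : qq p y ≠ 0 := ne_of_gt hq
    rw [div_mul_div_comm, div_eq_div_iff hqne (mul_ne_zero hqne hqne)] at hE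
    have h2 : p (x, y, z) * qq p y * qq p y = pAB p x y * pBC p y z * qq p y := by
      linear_combination hE
    exact mul_right_cancel₀ hqne h2
  · intro hCIp a b c hq
    have hbval : ∀ j, b j = 1 ∨ b j = -1 := by
      by_contra hcon
      push_neg at hcon
      obtain ⟨j, hj1, hj2⟩ := hcon
      have hemp : {ω | B ω = b} = ∅ := by
        ext ω
        simp only [Set.mem_setOf_eq, Set.mem_empty_iff_false, iff_false]
        intro hBb
        rcases hvalB ω j with h | h
        · exact hj1 (by rw [← hBb]; exact h)
        · exact hj2 (by rw [← hBb]; exact h)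
      rw [hemp, measure_empty] at hq
      simp at hq
    have hby : b = emb (sgn b) := (vec_eq_emb b hbval (sgn b)).mpr rfl
    by_cases haval : ∀ j, a j = 1 ∨ a j = -1
    · by_cases hcval : ∀ j, c j = 1 ∨ c j = -1
      · -- main case
        have hay : a = emb (sgn a) := (vec_eq_emb a haval (sgn a)).mpr rfl
        have hcy : c = emb (sgn c) := (vec_eq_emb c hcval (sgn c)).mpr rfl
        have hqpos : 0 < qq p (sgn b) := by
          rw [← hq_val (sgn b), ← hby]
          exact hq
        have hE := hCIp (sgn a) (sgn b) (sgn c) hqpos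
        rw [hay, hby, hcy, hq_val (sgn b), hp3_val (sgn a) (sgn b) (sgn c),
          hpab_val (sgn a) (sgn b), hpbc_val (sgn b) (sgn c)]
        have hqne : qq p (sgn b) ≠ 0 := ne_of_gt hqpos
        rw [div_mul_div_comm, div_eq_div_iff hqne (mul_ne_zero hqne hqne)]
        linear_combination qq p (sgn b) * hE
      · -- c takes a bad value
        obtain ⟨j, hj⟩ : ∃ j, ¬(c j = 1 ∨ c j = -1) := not_forall.mp hcval
        have hemp1 : {ω | A ω = a ∧ C ω = c ∧ B ω = b} = ∅ := by
          ext ω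
          simp only [Set.mem_setOf_eq, Set.mem_empty_iff_false, iff_false]
          rintro ⟨_, hC, _⟩
          exact hj (by rw [← hC]; exact hvalC ω j)
        have hemp2 : {ω | C ω = c ∧ B ω = b} = ∅ := by
          ext ω
          simp only [Set.mem_setOf_eq, Set.mem_empty_iff_false, iff_false]
          rintro ⟨hC, _⟩
          exact hj (by rw [← hC]; exact hvalC ω j)
        rw [hemp1, hemp2, measure_empty]
        simp
    · -- a takes a bad value
      obtain ⟨j, hj⟩ : ∃ j, ¬(a j = 1 ∨ a j = -1) := not_forall.mp haval
      have hemp1 : {ω | A ω = a ∧ C ω = c ∧ B ω = b} = ∅ := by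
        ext ω
        simp only [Set.mem_setOf_eq, Set.mem_empty_iff_false, iff_false]
        rintro ⟨hA', _, _⟩
        exact hj (by rw [← hA']; exact hvalA ω j)
      have hemp2 : {ω | A ω = a ∧ B ω = b} = ∅ := by
        ext ω
        simp only [Set.mem_setOf_eq, Set.mem_empty_iff_false, iff_false]
        rintro ⟨hA', _⟩
        exact hj (by rw [← hA']; exact hvalA ω j)
      rw [hemp1, hemp2, measure_empty]
      simp
end

section
/- Let A, B, C ∈ {-1,1} be three ±1-valued random variables. Then A ⟂ C | B if and only if Cov((A, AB)^T, (C, BC)^T) = Cov((A, AB)^T, B) · Var(B)^+ · Cov(B, (C, BC)^T), where Var(B)^+ = 1/Var(B) if Var(B) > 0 and 0 otherwise. That is, the 2×2 cross-covariance block of the left-wing interactions (A, AB) and right-wing interactions (C, BC) factors through B exactly when conditional independence holds. -/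
open MeasureTheory Matrix

section Helpers
variable {Ω : Type*} [MeasurableSpace Ω] {ℙ : Measure Ω} [IsProbabilityMeasure ℙ]

lemma pm_integrable {f : Ω → ℝ} (hf : Measurable f) (hval : ∀ ω, f ω = 1 ∨ f ω = -1) :
    Integrable f ℙ := by
  refine (integrable_const (1:ℝ)).mono' hf.aestronglyMeasurable ?_
  filter_upwards with ω
  rcases hval ω with h | h <;> simp [h]

lemma integral_poly8 (A B C : Ω → ℝ)
    (iA : Integrable A ℙ) (iB : Integrable B ℙ) (iC : Integrable C ℙ)
    (iAB : Integrable (fun ω => A ω * B ω) ℙ)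
    (iAC : Integrable (fun ω => A ω * C ω) ℙ)
    (iBC : Integrable (fun ω => B ω * C ω) ℙ)
    (iABC : Integrable (fun ω => A ω * B ω * C ω) ℙ)
    (c0 c1 c2 c3 c4 c5 c6 c7 : ℝ) :
    ∫ ω, (c0 + c1 * A ω + c2 * B ω + c3 * C ω + c4 * (A ω * B ω)
        + c5 * (A ω * C ω) + c6 * (B ω * C ω) + c7 * (A ω * B ω * C ω)) ∂ℙ
      = c0 + c1 * (∫ ω, A ω ∂ℙ) + c2 * (∫ ω, B ω ∂ℙ) + c3 * (∫ ω, C ω ∂ℙ)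
        + c4 * (∫ ω, A ω * B ω ∂ℙ) + c5 * (∫ ω, A ω * C ω ∂ℙ)
        + c6 * (∫ ω, B ω * C ω ∂ℙ) + c7 * (∫ ω, A ω * B ω * C ω ∂ℙ) := by
  have I0 : Integrable (fun _ : Ω => c0) ℙ := integrable_const c0
  have I1 : Integrable (fun ω => c0 + c1 * A ω) ℙ := I0.add (iA.const_mul c1)
  have I2 : Integrable (fun ω => c0 + c1 * A ω + c2 * B ω) ℙ := I1.add (iB.const_mul c2)
  have I3 : Integrable (fun ω => c0 + c1 * A ω + c2 * B ω + c3 * C ω) ℙ := I2.add (iC.const_mul c3)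
  have I4 : Integrable (fun ω => c0 + c1 * A ω + c2 * B ω + c3 * C ω + c4 * (A ω * B ω)) ℙ :=
    I3.add (iAB.const_mul c4)
  have I5 : Integrable (fun ω => c0 + c1 * A ω + c2 * B ω + c3 * C ω + c4 * (A ω * B ω)
      + c5 * (A ω * C ω)) ℙ := I4.add (iAC.const_mul c5)
  have I6 : Integrable (fun ω => c0 + c1 * A ω + c2 * B ω + c3 * C ω + c4 * (A ω * B ω)
      + c5 * (A ω * C ω) + c6 * (B ω * C ω)) ℙ := I5.add (iBC.const_mul c6)
  rw [integral_add I6 (iABC.const_mul c7), integral_add I5 (iBC.const_mul c6),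
    integral_add I4 (iAC.const_mul c5), integral_add I3 (iAB.const_mul c4),
    integral_add I2 (iC.const_mul c3), integral_add I1 (iB.const_mul c2),
    integral_add I0 (iA.const_mul c1), integral_const_mul, integral_const_mul,
    integral_const_mul, integral_const_mul, integral_const_mul, integral_const_mul,
    integral_const_mul, integral_const]
  simp

lemma pm_bound (B f : Ω → ℝ) (hB : Measurable B) (hf : Measurable f)
    (hvB : ∀ ω, B ω = 1 ∨ B ω = -1) (hvf : ∀ ω, f ω = 1 ∨ f ω = -1)
    (s : ℝ) (hs : s = 1 ∨ s = -1) :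
    |(∫ ω, f ω * B ω ∂ℙ) - s * ∫ ω, f ω ∂ℙ| ≤ 1 - s * ∫ ω, B ω ∂ℙ := by
  have hfB : ∀ ω, f ω * B ω = 1 ∨ f ω * B ω = -1 := fun ω => by
    rcases hvf ω with h1|h1 <;> rcases hvB ω with h2|h2 <;> simp [h1, h2]
  have ifB : Integrable (fun ω => f ω * B ω) ℙ := pm_integrable (hf.mul hB) hfB
  have iff' : Integrable f ℙ := pm_integrable hf hvf
  have iB : Integrable B ℙ := pm_integrable hB hvB
  have h1 : (∫ ω, f ω * B ω ∂ℙ) - s * ∫ ω, f ω ∂ℙ = ∫ ω, (f ω * B ω - s * f ω) ∂ℙ := by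
    rw [integral_sub ifB (iff'.const_mul s), integral_const_mul]
  have h2 : (1:ℝ) - s * ∫ ω, B ω ∂ℙ = ∫ ω, (1 - s * B ω) ∂ℙ := by
    rw [integral_sub (integrable_const 1) (iB.const_mul s), integral_const_mul, integral_const]
    simp
  rw [h1, h2]
  calc |∫ ω, (f ω * B ω - s * f ω) ∂ℙ| ≤ ∫ ω, |f ω * B ω - s * f ω| ∂ℙ := by
        simpa using norm_integral_le_integral_norm (μ := ℙ) (fun ω => f ω * B ω - s * f ω)
    _ = ∫ ω, (1 - s * B ω) ∂ℙ := by
        refine integral_congr_ae (ae_of_all _ fun ω => ?_)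
        rcases hvf ω with hf1|hf1 <;> rcases hvB ω with hB1|hB1 <;> rcases hs with rfl|rfl <;>
          norm_num [hf1, hB1]

end Helpers

lemma pm_if (a : ℝ) (ha : a = 1 ∨ a = -1) (x : ℝ) (hx : x = 1 ∨ x = -1) :
    (if x = a then (1:ℝ) else 0) = (1 + a*x)/2 := by
  rcases ha with rfl|rfl <;> rcases hx with rfl|rfl <;> norm_num

set_option maxHeartbeats 1000000 in
/-- For ±1-valued random variables `A, B, C`: `A ⟂ C | B` iff the 2×2
cross-covariance of the left wing `(A, AB)` and the right wing `(C, BC)`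
factors through `B`:
`Cov((A,AB), (C,BC)) = Cov((A,AB), B) Var(B)⁺ Cov(B, (C,BC))`. -/
theorem stmt15 {Ω : Type*} [MeasurableSpace Ω] (ℙ : Measure Ω)
    [IsProbabilityMeasure ℙ] (A B C : Ω → ℝ)
    (hA : Measurable A) (hB : Measurable B) (hC : Measurable C)
    (hvalA : ∀ ω, A ω = 1 ∨ A ω = -1)
    (hvalB : ∀ ω, B ω = 1 ∨ B ω = -1)
    (hvalC : ∀ ω, C ω = 1 ∨ C ω = -1)
    (L : Fin 2 → Ω → ℝ) (hL : L = ![A, fun ω => A ω * B ω])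
    (R : Fin 2 → Ω → ℝ) (hR : R = ![C, fun ω => B ω * C ω])
    (varBplus : ℝ)
    (hvar : varBplus = if cov ℙ B B > 0 then (cov ℙ B B)⁻¹ else 0) :
    CondIndepDiscrete ℙ A B C ↔
      ∀ i j : Fin 2,
        cov ℙ (L i) (R j) = cov ℙ (L i) B * varBplus * cov ℙ B (R j) := by
  classical
  subst hL; subst hR
  have hvAB : ∀ ω, A ω * B ω = 1 ∨ A ω * B ω = -1 := fun ω => by
    rcases hvalA ω with h1|h1 <;> rcases hvalB ω with h2|h2 <;> simp [h1, h2]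
  have hvAC : ∀ ω, A ω * C ω = 1 ∨ A ω * C ω = -1 := fun ω => by
    rcases hvalA ω with h1|h1 <;> rcases hvalC ω with h2|h2 <;> simp [h1, h2]
  have hvBC : ∀ ω, B ω * C ω = 1 ∨ B ω * C ω = -1 := fun ω => by
    rcases hvalB ω with h1|h1 <;> rcases hvalC ω with h2|h2 <;> simp [h1, h2]
  have hvABC : ∀ ω, A ω * B ω * C ω = 1 ∨ A ω * B ω * C ω = -1 := fun ω => by
    rcases hvAB ω with h1|h1 <;> rcases hvalC ω with h2|h2 <;> simp [h1, h2]
  have iA : Integrable A ℙ := pm_integrable hA hvalA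
  have iB : Integrable B ℙ := pm_integrable hB hvalB
  have iC : Integrable C ℙ := pm_integrable hC hvalC
  have iAB : Integrable (fun ω => A ω * B ω) ℙ := pm_integrable (hA.mul hB) hvAB
  have iAC : Integrable (fun ω => A ω * C ω) ℙ := pm_integrable (hA.mul hC) hvAC
  have iBC : Integrable (fun ω => B ω * C ω) ℙ := pm_integrable (hB.mul hC) hvBC
  have iABC : Integrable (fun ω => A ω * B ω * C ω) ℙ := pm_integrable ((hA.mul hB).mul hC) hvABC
  set mA := ∫ ω, A ω ∂ℙ with hmA
  set mB := ∫ ω, B ω ∂ℙ with hmB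
  set mC := ∫ ω, C ω ∂ℙ with hmC
  set mAB := ∫ ω, A ω * B ω ∂ℙ with hmAB
  set mAC := ∫ ω, A ω * C ω ∂ℙ with hmAC
  set mBC := ∫ ω, B ω * C ω ∂ℙ with hmBC
  set mABC := ∫ ω, A ω * B ω * C ω ∂ℙ with hmABC
  have hBB : ∫ ω, B ω * B ω ∂ℙ = 1 := by
    rw [show (fun ω => B ω * B ω) = fun _ => (1:ℝ) from funext fun ω => by
      rcases hvalB ω with h|h <;> rw [h] <;> norm_num]
    simp
  -- bounds on mB
  have hbB1 := pm_bound (ℙ := ℙ) B B hB hB hvalB hvalB 1 (Or.inl rfl)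
  have hbB2 := pm_bound (ℙ := ℙ) B B hB hB hvalB hvalB (-1) (Or.inr rfl)
  rw [hBB, ← hmB] at hbB1 hbB2
  have hmBle : mB ≤ 1 := by have h := (abs_le.mp hbB1).1; linarith
  have hmBge : -1 ≤ mB := by have h := (abs_le.mp hbB2).1; linarith
  -- degenerate-case bounds
  have bndA : ∀ s : ℝ, s = 1 ∨ s = -1 → |mAB - s*mA| ≤ 1 - s*mB := by
    intro s hs
    have h := pm_bound (ℙ := ℙ) B A hB hA hvalB hvalA s hs
    rw [← hmAB, ← hmA, ← hmB] at h; exact h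
  have bndC : ∀ s : ℝ, s = 1 ∨ s = -1 → |mBC - s*mC| ≤ 1 - s*mB := by
    intro s hs
    have h := pm_bound (ℙ := ℙ) B C hB hC hvalB hvalC s hs
    have hcb : ∫ ω, C ω * B ω ∂ℙ = mBC := by
      rw [hmBC]; exact integral_congr_ae (ae_of_all _ fun ω => mul_comm _ _)
    rw [hcb, ← hmC, ← hmB] at h; exact h
  have bndAC : ∀ s : ℝ, s = 1 ∨ s = -1 → |mABC - s*mAC| ≤ 1 - s*mB := by
    intro s hs
    have h := pm_bound (ℙ := ℙ) B (fun ω => A ω * C ω) hB (hA.mul hC) hvalB hvAC s hs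
    beta_reduce at h
    have hacb : ∫ ω, A ω * C ω * B ω ∂ℙ = mABC := by
      rw [hmABC]; exact integral_congr_ae (ae_of_all _ fun ω => by ring)
    rw [hacb, ← hmAC, ← hmB] at h; exact h
  -- measure formulas
  have hSetB : ∀ b : ℝ, b = 1 ∨ b = -1 → (ℙ {ω | B ω = b}).toReal = (1 + b*mB)/2 := by
    intro b hb
    have hms : MeasurableSet {ω | B ω = b} := hB (measurableSet_singleton b)
    have hpt : ∀ x, Set.indicator {ω | B ω = b} (1 : Ω → ℝ) x
        = 1/2 + 0 * A x + (b/2) * B x + 0 * C x + 0 * (A x * B x) + 0 * (A x * C x)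
          + 0 * (B x * C x) + 0 * (A x * B x * C x) := by
      intro x
      rw [Set.indicator_apply]
      have : (if x ∈ {ω | B ω = b} then (1:Ω→ℝ) x else 0)
          = (if B x = b then (1:ℝ) else 0) := by
        by_cases h : B x = b <;> simp [Set.mem_setOf_eq, h]
      rw [this, pm_if b hb (B x) (hvalB x)]
      ring
    calc (ℙ {ω | B ω = b}).toReal
        = ∫ x, Set.indicator {ω | B ω = b} 1 x ∂ℙ := (integral_indicator_one hms).symm
      _ = ∫ x, (1/2 + 0 * A x + (b/2) * B x + 0 * C x + 0 * (A x * B x) + 0 * (A x * C x)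
          + 0 * (B x * C x) + 0 * (A x * B x * C x)) ∂ℙ := integral_congr_ae (ae_of_all _ hpt)
      _ = (1 + b*mB)/2 := by
          rw [integral_poly8 A B C iA iB iC iAB iAC iBC iABC,
            ← hmA, ← hmB, ← hmC, ← hmAB, ← hmAC, ← hmBC, ← hmABC]
          ring
  have hSetAB : ∀ a b : ℝ, a = 1 ∨ a = -1 → b = 1 ∨ b = -1 →
      (ℙ {ω | A ω = a ∧ B ω = b}).toReal = (1 + a*mA + b*mB + a*b*mAB)/4 := by
    intro a b ha hb
    have hms : MeasurableSet {ω | A ω = a ∧ B ω = b} :=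
      (hA (measurableSet_singleton a)).inter (hB (measurableSet_singleton b))
    have hpt : ∀ x, Set.indicator {ω | A ω = a ∧ B ω = b} (1 : Ω → ℝ) x
        = 1/4 + (a/4) * A x + (b/4) * B x + 0 * C x + (a*b/4) * (A x * B x) + 0 * (A x * C x)
          + 0 * (B x * C x) + 0 * (A x * B x * C x) := by
      intro x
      rw [Set.indicator_apply]
      have : (if x ∈ {ω | A ω = a ∧ B ω = b} then (1:Ω→ℝ) x else 0)
          = (if A x = a then (1:ℝ) else 0) * (if B x = b then (1:ℝ) else 0) := by
        by_cases h1 : A x = a <;> by_cases h2 : B x = b <;> simp [Set.mem_setOf_eq, h1, h2]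
      rw [this, pm_if a ha (A x) (hvalA x), pm_if b hb (B x) (hvalB x)]
      ring
    calc (ℙ {ω | A ω = a ∧ B ω = b}).toReal
        = ∫ x, Set.indicator {ω | A ω = a ∧ B ω = b} 1 x ∂ℙ := (integral_indicator_one hms).symm
      _ = ∫ x, (1/4 + (a/4) * A x + (b/4) * B x + 0 * C x + (a*b/4) * (A x * B x)
          + 0 * (A x * C x) + 0 * (B x * C x) + 0 * (A x * B x * C x)) ∂ℙ :=
            integral_congr_ae (ae_of_all _ hpt)
      _ = (1 + a*mA + b*mB + a*b*mAB)/4 := by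
          rw [integral_poly8 A B C iA iB iC iAB iAC iBC iABC,
            ← hmA, ← hmB, ← hmC, ← hmAB, ← hmAC, ← hmBC, ← hmABC]
          ring
  have hSetCB : ∀ c b : ℝ, c = 1 ∨ c = -1 → b = 1 ∨ b = -1 →
      (ℙ {ω | C ω = c ∧ B ω = b}).toReal = (1 + c*mC + b*mB + c*b*mBC)/4 := by
    intro c b hc hb
    have hms : MeasurableSet {ω | C ω = c ∧ B ω = b} :=
      (hC (measurableSet_singleton c)).inter (hB (measurableSet_singleton b))
    have hpt : ∀ x, Set.indicator {ω | C ω = c ∧ B ω = b} (1 : Ω → ℝ) x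
        = 1/4 + 0 * A x + (b/4) * B x + (c/4) * C x + 0 * (A x * B x) + 0 * (A x * C x)
          + (c*b/4) * (B x * C x) + 0 * (A x * B x * C x) := by
      intro x
      rw [Set.indicator_apply]
      have : (if x ∈ {ω | C ω = c ∧ B ω = b} then (1:Ω→ℝ) x else 0)
          = (if C x = c then (1:ℝ) else 0) * (if B x = b then (1:ℝ) else 0) := by
        by_cases h1 : C x = c <;> by_cases h2 : B x = b <;> simp [Set.mem_setOf_eq, h1, h2]
      rw [this, pm_if c hc (C x) (hvalC x), pm_if b hb (B x) (hvalB x)]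
      ring
    calc (ℙ {ω | C ω = c ∧ B ω = b}).toReal
        = ∫ x, Set.indicator {ω | C ω = c ∧ B ω = b} 1 x ∂ℙ := (integral_indicator_one hms).symm
      _ = ∫ x, (1/4 + 0 * A x + (b/4) * B x + (c/4) * C x + 0 * (A x * B x) + 0 * (A x * C x)
          + (c*b/4) * (B x * C x) + 0 * (A x * B x * C x)) ∂ℙ :=
            integral_congr_ae (ae_of_all _ hpt)
      _ = (1 + c*mC + b*mB + c*b*mBC)/4 := by
          rw [integral_poly8 A B C iA iB iC iAB iAC iBC iABC,
            ← hmA, ← hmB, ← hmC, ← hmAB, ← hmAC, ← hmBC, ← hmABC]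
          ring
  have hSetACB : ∀ a c b : ℝ, a = 1 ∨ a = -1 → c = 1 ∨ c = -1 → b = 1 ∨ b = -1 →
      (ℙ {ω | A ω = a ∧ C ω = c ∧ B ω = b}).toReal
        = (1 + a*mA + b*mB + c*mC + a*b*mAB + a*c*mAC + b*c*mBC + a*b*c*mABC)/8 := by
    intro a c b ha hc hb
    have hms : MeasurableSet {ω | A ω = a ∧ C ω = c ∧ B ω = b} :=
      (hA (measurableSet_singleton a)).inter
        ((hC (measurableSet_singleton c)).inter (hB (measurableSet_singleton b)))
    have hpt : ∀ x, Set.indicator {ω | A ω = a ∧ C ω = c ∧ B ω = b} (1 : Ω → ℝ) x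
        = 1/8 + (a/8) * A x + (b/8) * B x + (c/8) * C x + (a*b/8) * (A x * B x)
          + (a*c/8) * (A x * C x) + (b*c/8) * (B x * C x) + (a*b*c/8) * (A x * B x * C x) := by
      intro x
      rw [Set.indicator_apply]
      have : (if x ∈ {ω | A ω = a ∧ C ω = c ∧ B ω = b} then (1:Ω→ℝ) x else 0)
          = (if A x = a then (1:ℝ) else 0) * (if C x = c then (1:ℝ) else 0)
            * (if B x = b then (1:ℝ) else 0) := by
        by_cases h1 : A x = a <;> by_cases h2 : C x = c <;> by_cases h3 : B x = b <;>
          simp [Set.mem_setOf_eq, h1, h2, h3]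
      rw [this, pm_if a ha (A x) (hvalA x), pm_if c hc (C x) (hvalC x), pm_if b hb (B x) (hvalB x)]
      ring
    calc (ℙ {ω | A ω = a ∧ C ω = c ∧ B ω = b}).toReal
        = ∫ x, Set.indicator {ω | A ω = a ∧ C ω = c ∧ B ω = b} 1 x ∂ℙ :=
            (integral_indicator_one hms).symm
      _ = ∫ x, (1/8 + (a/8) * A x + (b/8) * B x + (c/8) * C x + (a*b/8) * (A x * B x)
          + (a*c/8) * (A x * C x) + (b*c/8) * (B x * C x)
          + (a*b*c/8) * (A x * B x * C x)) ∂ℙ := integral_congr_ae (ae_of_all _ hpt)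
      _ = (1 + a*mA + b*mB + c*mC + a*b*mAB + a*c*mAC + b*c*mBC + a*b*c*mABC)/8 := by
          rw [integral_poly8 A B C iA iB iC iAB iAC iBC iABC,
            ← hmA, ← hmB, ← hmC, ← hmAB, ← hmAC, ← hmBC, ← hmABC]
          ring
  -- covariance values
  have covAC : cov ℙ A C = mAC - mA*mC := by
    unfold cov; rw [← hmAC, ← hmA, ← hmC]
  have covABC' : cov ℙ A (fun ω => B ω * C ω) = mABC - mA*mBC := by
    unfold cov
    show (∫ ω, A ω * (B ω * C ω) ∂ℙ) - (∫ ω, A ω ∂ℙ) * (∫ ω, B ω * C ω ∂ℙ) = _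
    have h1 : ∫ ω, A ω * (B ω * C ω) ∂ℙ = mABC := by
      rw [hmABC]; exact integral_congr_ae (ae_of_all _ fun ω => by ring)
    rw [h1, ← hmA, ← hmBC]
  have covAB_C : cov ℙ (fun ω => A ω * B ω) C = mABC - mAB*mC := by
    unfold cov
    show (∫ ω, A ω * B ω * C ω ∂ℙ) - (∫ ω, A ω * B ω ∂ℙ) * (∫ ω, C ω ∂ℙ) = _
    rw [← hmABC, ← hmAB, ← hmC]
  have covABBC : cov ℙ (fun ω => A ω * B ω) (fun ω => B ω * C ω) = mAC - mAB*mBC := by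
    unfold cov
    show (∫ ω, A ω * B ω * (B ω * C ω) ∂ℙ) - (∫ ω, A ω * B ω ∂ℙ) * (∫ ω, B ω * C ω ∂ℙ) = _
    have h1 : ∫ ω, A ω * B ω * (B ω * C ω) ∂ℙ = mAC := by
      rw [hmAC]
      refine integral_congr_ae (ae_of_all _ fun ω => ?_)
      show A ω * B ω * (B ω * C ω) = A ω * C ω
      rcases hvalB ω with h|h <;> rw [h] <;> ring
    rw [h1, ← hmAB, ← hmBC]
  have covA_B : cov ℙ A B = mAB - mA*mB := by
    unfold cov; rw [← hmAB, ← hmA, ← hmB]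
  have covAB_B : cov ℙ (fun ω => A ω * B ω) B = mA - mAB*mB := by
    unfold cov
    show (∫ ω, A ω * B ω * B ω ∂ℙ) - (∫ ω, A ω * B ω ∂ℙ) * (∫ ω, B ω ∂ℙ) = _
    have h1 : ∫ ω, A ω * B ω * B ω ∂ℙ = mA := by
      rw [hmA]
      refine integral_congr_ae (ae_of_all _ fun ω => ?_)
      show A ω * B ω * B ω = A ω
      rcases hvalB ω with h|h <;> rw [h] <;> ring
    rw [h1, ← hmAB, ← hmB]
  have covB_C : cov ℙ B C = mBC - mB*mC := by
    unfold cov; rw [← hmBC, ← hmB, ← hmC]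
  have covB_BC : cov ℙ B (fun ω => B ω * C ω) = mC - mB*mBC := by
    unfold cov
    show (∫ ω, B ω * (B ω * C ω) ∂ℙ) - (∫ ω, B ω ∂ℙ) * (∫ ω, B ω * C ω ∂ℙ) = _
    have h1 : ∫ ω, B ω * (B ω * C ω) ∂ℙ = mC := by
      rw [hmC]
      refine integral_congr_ae (ae_of_all _ fun ω => ?_)
      show B ω * (B ω * C ω) = C ω
      rcases hvalB ω with h|h <;> rw [h] <;> ring
    rw [h1, ← hmB, ← hmBC]
  have covBB : cov ℙ B B = 1 - mB*mB := by
    unfold cov; rw [hBB, ← hmB]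
  have hvar' : varBplus = if 1 - mB*mB > 0 then (1 - mB*mB)⁻¹ else 0 := by
    rw [hvar, covBB]
  have hfin2 : ∀ (k : Fin 2), k = 0 ∨ k = 1 := by decide
  constructor
  · -- CI → covariance equations
    intro hCI
    have hKey : ∀ b : ℝ, (b = 1 ∨ b = -1) → 0 < (1 + b*mB)/2 →
        (1 + b*mB)*(mAC + b*mABC) = (mA + b*mAB)*(mC + b*mBC) := by
      intro b hb hq
      have hq' : 0 < (ℙ {ω | B ω = b}).toReal := by rw [hSetB b hb]; exact hq
      have h := hCI 1 b 1 hq'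
      rw [hSetACB 1 1 b (Or.inl rfl) (Or.inl rfl) hb, hSetAB 1 b (Or.inl rfl) hb,
        hSetCB 1 b (Or.inl rfl) hb, hSetB b hb] at h
      have hQ : ((1 + b*mB)/2) ≠ 0 := ne_of_gt hq
      rw [div_mul_div_comm, div_eq_div_iff hQ (mul_ne_zero hQ hQ)] at h
      rcases hb with rfl|rfl
      · have h3 : ((1 + 1*mB)/2) * ((1 + 1*mB)*(mAC + 1*mABC) - (mA + 1*mAB)*(mC + 1*mBC)) = 0 := by
          linear_combination 16 * h
        have h5 := (mul_eq_zero.mp h3).resolve_left hQ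
        linarith
      · have h3 : ((1 + (-1)*mB)/2) * ((1 + (-1)*mB)*(mAC + (-1)*mABC)
            - (mA + (-1)*mAB)*(mC + (-1)*mBC)) = 0 := by
          linear_combination 16 * h
        have h5 := (mul_eq_zero.mp h3).resolve_left hQ
        linarith
    obtain ⟨hE1, hE2, hE3, hE4⟩ :
        (mAC - mA*mC = (mAB - mA*mB) * varBplus * (mBC - mB*mC)) ∧
        (mABC - mA*mBC = (mAB - mA*mB) * varBplus * (mC - mB*mBC)) ∧
        (mABC - mAB*mC = (mA - mAB*mB) * varBplus * (mBC - mB*mC)) ∧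
        (mAC - mAB*mBC = (mA - mAB*mB) * varBplus * (mC - mB*mBC)) := by
      by_cases hpos : (0:ℝ) < 1 - mB*mB
      · have hv : varBplus * (1 - mB*mB) = 1 := by
          rw [hvar', if_pos hpos]; exact inv_mul_cancel₀ (ne_of_gt hpos)
        have hbpos : 0 < (1 + 1*mB)/2 := by nlinarith
        have hbneg : 0 < (1 + (-1)*mB)/2 := by nlinarith
        have hP := hKey 1 (Or.inl rfl) hbpos
        have hM := hKey (-1) (Or.inr rfl) hbneg
        refine ⟨?_, ?_, ?_, ?_⟩
        · linear_combination (varBplus*(1-mB)/2)*hP + (varBplus*(1+mB)/2)*hM - (mAC - mA*mC)*hv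
        · linear_combination (varBplus*(1-mB)/2)*hP - (varBplus*(1+mB)/2)*hM - (mABC - mA*mBC)*hv
        · linear_combination (varBplus*(1-mB)/2)*hP - (varBplus*(1+mB)/2)*hM - (mABC - mAB*mC)*hv
        · linear_combination (varBplus*(1-mB)/2)*hP + (varBplus*(1+mB)/2)*hM - (mAC - mAB*mBC)*hv
      · push_neg at hpos
        have hBsq : mB*mB = 1 := le_antisymm (by nlinarith) (by linarith)
        have hv0 : varBplus = 0 := by rw [hvar', if_neg (not_lt.mpr hpos)]
        rcases mul_self_eq_one_iff.mp hBsq with hB1 | hB1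
        · have e1 : mAB = mA := by
            have h := bndA 1 (Or.inl rfl)
            rw [hB1] at h
            have h2 : |mAB - 1*mA| ≤ 0 := by linarith
            have h3 : mAB - 1*mA = 0 := abs_eq_zero.mp (le_antisymm h2 (abs_nonneg _))
            linarith
          have e2 : mBC = mC := by
            have h := bndC 1 (Or.inl rfl)
            rw [hB1] at h
            have h2 : |mBC - 1*mC| ≤ 0 := by linarith
            have h3 : mBC - 1*mC = 0 := abs_eq_zero.mp (le_antisymm h2 (abs_nonneg _))
            linarith
          have e3 : mABC = mAC := by
            have h := bndAC 1 (Or.inl rfl)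
            rw [hB1] at h
            have h2 : |mABC - 1*mAC| ≤ 0 := by linarith
            have h3 : mABC - 1*mAC = 0 := abs_eq_zero.mp (le_antisymm h2 (abs_nonneg _))
            linarith
          have hq1 : 0 < (1 + 1*mB)/2 := by rw [hB1]; norm_num
          have hP := hKey 1 (Or.inl rfl) hq1
          rw [hB1, e1, e2, e3] at hP
          have hAC : mAC = mA*mC := by linear_combination hP/4
          rw [hv0]
          refine ⟨?_, ?_, ?_, ?_⟩
          · linear_combination hAC
          · linear_combination hAC + e3 - mA*e2
          · linear_combination hAC + e3 - mC*e1
          · linear_combination hAC - mAB*e2 - mC*e1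
        · have e1 : mAB = -mA := by
            have h := bndA (-1) (Or.inr rfl)
            rw [hB1] at h
            have h2 : |mAB - (-1)*mA| ≤ 0 := by linarith
            have h3 : mAB - (-1)*mA = 0 := abs_eq_zero.mp (le_antisymm h2 (abs_nonneg _))
            linarith
          have e2 : mBC = -mC := by
            have h := bndC (-1) (Or.inr rfl)
            rw [hB1] at h
            have h2 : |mBC - (-1)*mC| ≤ 0 := by linarith
            have h3 : mBC - (-1)*mC = 0 := abs_eq_zero.mp (le_antisymm h2 (abs_nonneg _))
            linarith
          have e3 : mABC = -mAC := by
            have h := bndAC (-1) (Or.inr rfl)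
            rw [hB1] at h
            have h2 : |mABC - (-1)*mAC| ≤ 0 := by linarith
            have h3 : mABC - (-1)*mAC = 0 := abs_eq_zero.mp (le_antisymm h2 (abs_nonneg _))
            linarith
          have hq1 : 0 < (1 + (-1)*mB)/2 := by rw [hB1]; norm_num
          have hM := hKey (-1) (Or.inr rfl) hq1
          rw [hB1, e1, e2, e3] at hM
          have hAC : mAC = mA*mC := by linear_combination hM/4
          rw [hv0]
          refine ⟨?_, ?_, ?_, ?_⟩
          · linear_combination hAC
          · linear_combination e3 - hAC - mA*e2
          · linear_combination e3 - hAC - mC*e1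
          · linear_combination hAC - mAB*e2 + mC*e1
    intro i j
    rcases hfin2 i with rfl|rfl <;> rcases hfin2 j with rfl|rfl
    · simp only [Matrix.cons_val_zero]
      rw [covAC, covA_B, covB_C]; exact hE1
    · simp only [Matrix.cons_val_zero, Matrix.cons_val_one, Matrix.head_cons]
      rw [covABC', covA_B, covB_BC]; exact hE2
    · simp only [Matrix.cons_val_zero, Matrix.cons_val_one, Matrix.head_cons]
      rw [covAB_C, covAB_B, covB_C]; exact hE3
    · simp only [Matrix.cons_val_zero, Matrix.cons_val_one, Matrix.head_cons]
      rw [covABBC, covAB_B, covB_BC]; exact hE4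
  · -- covariance equations → CI
    intro hMat
    have h00 := hMat 0 0
    have h01 := hMat 0 1
    have h10 := hMat 1 0
    have h11 := hMat 1 1
    simp only [Matrix.cons_val_zero, Matrix.cons_val_one, Matrix.head_cons] at h00 h01 h10 h11
    rw [covAC, covA_B, covB_C] at h00
    rw [covABC', covA_B, covB_BC] at h01
    rw [covAB_C, covAB_B, covB_C] at h10
    rw [covABBC, covAB_B, covB_BC] at h11
    have hKey : ∀ b : ℝ, (b = 1 ∨ b = -1) → 0 < (1 + b*mB)/2 →
        (1 + b*mB)*(mAC + b*mABC) = (mA + b*mAB)*(mC + b*mBC) := by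
      by_cases hpos : (0:ℝ) < 1 - mB*mB
      · have hv : varBplus * (1 - mB*mB) = 1 := by
          rw [hvar', if_pos hpos]; exact inv_mul_cancel₀ (ne_of_gt hpos)
        have hP : (1 + mB)*(mAC + mABC) = (mA + mAB)*(mC + mBC) := by
          have hne : (1:ℝ) - mB ≠ 0 := by nlinarith
          have key : (1 - mB)*((1 + mB)*(mAC + mABC) - (mA + mAB)*(mC + mBC)) = 0 := by
            linear_combination (1 - mB*mB)*h00 + (1 - mB*mB)*h01 +
              ((mAB - mA*mB)*(mBC - mB*mC) + (mAB - mA*mB)*(mC - mB*mBC))*hv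
          have h5 := (mul_eq_zero.mp key).resolve_left hne
          linarith
        have hM : (1 - mB)*(mAC - mABC) = (mA - mAB)*(mC - mBC) := by
          have hne : (1:ℝ) + mB ≠ 0 := by nlinarith
          have key : (1 + mB)*((1 - mB)*(mAC - mABC) - (mA - mAB)*(mC - mBC)) = 0 := by
            linear_combination (1 - mB*mB)*h00 - (1 - mB*mB)*h01 +
              ((mAB - mA*mB)*(mBC - mB*mC) - (mAB - mA*mB)*(mC - mB*mBC))*hv
          have h5 := (mul_eq_zero.mp key).resolve_left hne
          linarith
        intro b hb _
        rcases hb with rfl|rfl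
        · linear_combination hP
        · linear_combination hM
      · push_neg at hpos
        have hBsq : mB*mB = 1 := le_antisymm (by nlinarith) (by linarith)
        have hv0 : varBplus = 0 := by rw [hvar', if_neg (not_lt.mpr hpos)]
        rw [hv0] at h00
        have hAC : mAC = mA*mC := by linear_combination h00
        rcases mul_self_eq_one_iff.mp hBsq with hB1 | hB1
        · have e1 : mAB = mA := by
            have h := bndA 1 (Or.inl rfl)
            rw [hB1] at h
            have h2 : |mAB - 1*mA| ≤ 0 := by linarith
            have h3 : mAB - 1*mA = 0 := abs_eq_zero.mp (le_antisymm h2 (abs_nonneg _))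
            linarith
          have e2 : mBC = mC := by
            have h := bndC 1 (Or.inl rfl)
            rw [hB1] at h
            have h2 : |mBC - 1*mC| ≤ 0 := by linarith
            have h3 : mBC - 1*mC = 0 := abs_eq_zero.mp (le_antisymm h2 (abs_nonneg _))
            linarith
          have e3 : mABC = mAC := by
            have h := bndAC 1 (Or.inl rfl)
            rw [hB1] at h
            have h2 : |mABC - 1*mAC| ≤ 0 := by linarith
            have h3 : mABC - 1*mAC = 0 := abs_eq_zero.mp (le_antisymm h2 (abs_nonneg _))
            linarith
          intro b hb hq
          rcases hb with rfl|rfl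
          · rw [hB1, e1, e2, e3]
            linear_combination 4*hAC
          · exfalso; rw [hB1] at hq; norm_num at hq
        · have e1 : mAB = -mA := by
            have h := bndA (-1) (Or.inr rfl)
            rw [hB1] at h
            have h2 : |mAB - (-1)*mA| ≤ 0 := by linarith
            have h3 : mAB - (-1)*mA = 0 := abs_eq_zero.mp (le_antisymm h2 (abs_nonneg _))
            linarith
          have e2 : mBC = -mC := by
            have h := bndC (-1) (Or.inr rfl)
            rw [hB1] at h
            have h2 : |mBC - (-1)*mC| ≤ 0 := by linarith
            have h3 : mBC - (-1)*mC = 0 := abs_eq_zero.mp (le_antisymm h2 (abs_nonneg _))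
            linarith
          have e3 : mABC = -mAC := by
            have h := bndAC (-1) (Or.inr rfl)
            rw [hB1] at h
            have h2 : |mABC - (-1)*mAC| ≤ 0 := by linarith
            have h3 : mABC - (-1)*mAC = 0 := abs_eq_zero.mp (le_antisymm h2 (abs_nonneg _))
            linarith
          intro b hb hq
          rcases hb with rfl|rfl
          · exfalso; rw [hB1] at hq; norm_num at hq
          · rw [hB1, e1, e2, e3]
            linear_combination 4*hAC
    intro a b c hq
    have hbor : b = 1 ∨ b = -1 := by
      by_contra hbc
      push_neg at hbc
      have hempty : {ω | B ω = b} = ∅ := by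
        ext ω
        simp only [Set.mem_setOf_eq, Set.mem_empty_iff_false, iff_false]
        intro hh
        rcases hvalB ω with h|h <;> rw [hh] at h
        · exact hbc.1 h
        · exact hbc.2 h
      rw [hempty] at hq
      simp at hq
    have hqb : 0 < (1 + b*mB)/2 := by rw [hSetB b hbor] at hq; exact hq
    have hQne : ((1 + b*mB)/2) ≠ 0 := ne_of_gt hqb
    rw [hSetB b hbor]
    by_cases ha : a = 1 ∨ a = -1
    · by_cases hc : c = 1 ∨ c = -1
      · rw [hSetACB a c b ha hc hbor, hSetAB a b ha hbor, hSetCB c b hc hbor]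
        have hk := hKey b hbor hqb
        rw [div_mul_div_comm, div_eq_div_iff hQne (mul_ne_zero hQne hQne)]
        rcases ha with rfl|rfl <;> rcases hc with rfl|rfl <;> rcases hbor with rfl|rfl
        · linear_combination ((1+mB)/32)*hk
        · linear_combination ((1-mB)/32)*hk
        · linear_combination (-(1+mB)/32)*hk
        · linear_combination (-(1-mB)/32)*hk
        · linear_combination (-(1+mB)/32)*hk
        · linear_combination (-(1-mB)/32)*hk
        · linear_combination ((1+mB)/32)*hk
        · linear_combination ((1-mB)/32)*hk
      · push_neg at hc
        have he1 : {ω | A ω = a ∧ C ω = c ∧ B ω = b} = ∅ := by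
          ext ω
          simp only [Set.mem_setOf_eq, Set.mem_empty_iff_false, iff_false]
          rintro ⟨-, hh, -⟩
          rcases hvalC ω with h|h <;> rw [hh] at h
          · exact hc.1 h
          · exact hc.2 h
        have he2 : {ω | C ω = c ∧ B ω = b} = ∅ := by
          ext ω
          simp only [Set.mem_setOf_eq, Set.mem_empty_iff_false, iff_false]
          rintro ⟨hh, -⟩
          rcases hvalC ω with h|h <;> rw [hh] at h
          · exact hc.1 h
          · exact hc.2 h
        rw [he1, he2]
        simp
    · push_neg at ha
      have he1 : {ω | A ω = a ∧ C ω = c ∧ B ω = b} = ∅ := by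
        ext ω
        simp only [Set.mem_setOf_eq, Set.mem_empty_iff_false, iff_false]
        rintro ⟨hh, -, -⟩
        rcases hvalA ω with h|h <;> rw [hh] at h
        · exact ha.1 h
        · exact ha.2 h
      have he2 : {ω | A ω = a ∧ B ω = b} = ∅ := by
        ext ω
        simp only [Set.mem_setOf_eq, Set.mem_empty_iff_false, iff_false]
        rintro ⟨hh, -⟩
        rcases hvalA ω with h|h <;> rw [hh] at h
        · exact ha.1 h
        · exact ha.2 h
      rw [he1, he2]
      simp
end
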